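/- arXiv:math/0405574 — 6 statements merged into one kernel-verified Lean document; each statement's English description precedes it below -/
import Mathlib

section
/- For each i = 1,…,k let F_i : ℤ → ℂ be given by F_i(n) = Σ_{m=1}^{d(i)} Σ_{h=0}^{e^{(i)}_m−1} λ^{(i)}_{m,h} n^h (r^{(i)}_m)^n, where for each i the roots r^{(i)}_1,…,r^{(i)}_{d(i)} are pairwise distinct nonzero complex numbers and λ^{(i)}_{m,e^{(i)}_m−1} ≠ 0 for all m; set D(i) = Σ_m e^{(i)}_m and Δ(i) = max_m (e^{(i)}_m − 1). Let a_i, b_i, c_i be integers with a_i ≥ 0 and a_i + b_i ≥ 0 for every i, and let f(n) = Σ_{j=0}^{n−1} Π_{i=1}^{k} F_i(a_i n + b_i j + c_i). Define β = 0 if for every choice of indices (m_1,…,m_k) with 1 ≤ m_i ≤ d(i) one has Π_{i=1}^{k} (r^{(i)}_{m_i})^{b_i} ≠ 1, and β = 1 + Σ{Δ(i) : a_i = 0} otherwise. Then there exist complex numbers α_{i_1,…,i_k} and polynomials ψ_{i_1,…,i_k} ∈ ℂ[X] of degree at most β, indexed by tuples with 0 ≤ i_ν ≤ D(ν)−1 for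 each ν, such that for all n ≥ 0: f(n) = Σ_{i_1,…,i_k} α_{i_1,…,i_k} Π_{ν=1}^{k} F_ν((a_ν+b_ν)n + i_ν) + Σ_{i_1,…,i_k} ψ_{i_1,…,i_k}(n) Π_{ν=1}^{k} F_ν(a_ν n + i_ν). -/
open Polynomial Finset

noncomputable def qmap (r s : ℂ) (p : Polynomial ℂ) : Polynomial ℂ :=
  r • p.comp (X + 1) - s • p

lemma comp_coeff_top (p : Polynomial ℂ) (d : ℕ) (hd : p.natDegree ≤ d) :
    (p.comp (X + 1)).coeff d = p.coeff d := by
  rw [comp_eq_sum_left, p.sum_over_range (by simp), finset_sum_coeff]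
  have h1 : ∀ i ∈ range (p.natDegree + 1), (C (p.coeff i) * (X + 1) ^ i).coeff d
      = if i = d then p.coeff d else 0 := by
    intro i hi
    rw [coeff_C_mul, coeff_X_add_one_pow]
    simp only [mem_range] at hi
    rcases eq_or_ne i d with h | h
    · simp [h]
    · have : i < d := lt_of_le_of_ne (le_trans (by omega) hd) h
      simp [h, Nat.choose_eq_zero_of_lt this]
  rw [Finset.sum_congr rfl h1, Finset.sum_ite_eq' (range (p.natDegree + 1)) d]
  rcases eq_or_lt_of_le hd with h | h
  · simp [h]
  · simp [Nat.lt_irrefl, mem_range, Nat.lt_succ_iff, not_le.mpr h,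
      coeff_eq_zero_of_natDegree_lt h]

lemma comp_coeff_top2 (p : Polynomial ℂ) (d : ℕ) (hd : p.natDegree ≤ d + 1) :
    (p.comp (X + 1)).coeff d = p.coeff d + (d + 1) * p.coeff (d + 1) := by
  rw [comp_eq_sum_left, p.sum_over_range (by simp), finset_sum_coeff]
  have hsub : range (p.natDegree + 1) ⊆ range (d + 2) := by
    intro i hi; simp only [mem_range] at *; omega
  rw [Finset.sum_subset hsub (by
    intro i _ hi
    simp only [mem_range, Nat.lt_succ_iff, not_le] at hi
    rw [coeff_eq_zero_of_natDegree_lt hi]; simp)]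
  rw [Finset.sum_range_succ, Finset.sum_range_succ]
  have h1 : ∀ i ∈ range d, (C (p.coeff i) * (X + 1) ^ i).coeff d = 0 := by
    intro i hi
    simp only [mem_range] at hi
    rw [coeff_C_mul, coeff_X_add_one_pow, Nat.choose_eq_zero_of_lt hi]; simp
  rw [Finset.sum_eq_zero h1]
  rw [coeff_C_mul, coeff_X_add_one_pow, coeff_C_mul, coeff_X_add_one_pow,
    Nat.choose_self, Nat.choose_succ_self_right]
  push_cast; ring

lemma qmap_natDegree_le (r s : ℂ) (p : Polynomial ℂ) :
    (qmap r s p).natDegree ≤ p.natDegree := by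
  unfold qmap
  refine le_trans (natDegree_sub_le _ _) ?_
  refine max_le (le_trans (natDegree_smul_le _ _) ?_) (le_trans (natDegree_smul_le _ _) le_rfl)
  refine le_trans (natDegree_comp_le) ?_
  have h1 : ((X : Polynomial ℂ) + 1).natDegree = 1 := by
    simpa using natDegree_X_add_C (1 : ℂ)
  simp [h1]

lemma qmap_coeff_top (r s : ℂ) (p : Polynomial ℂ) (d : ℕ) (hd : p.natDegree ≤ d) :
    (qmap r s p).coeff d = (r - s) * p.coeff d := by
  unfold qmap
  rw [coeff_sub, coeff_smul, coeff_smul, comp_coeff_top p d hd]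
  simp only [smul_eq_mul]; ring

lemma qmap_coeff_top2 (r : ℂ) (p : Polynomial ℂ) (d : ℕ) (hd : p.natDegree ≤ d + 1) :
    (qmap r r p).coeff d = r * (d + 1) * p.coeff (d + 1) := by
  unfold qmap
  rw [coeff_sub, coeff_smul, coeff_smul, comp_coeff_top2 p d hd]
  simp only [smul_eq_mul]; ring

lemma qmap_natDegree_lt (r : ℂ) (p : Polynomial ℂ) (hp : 0 < p.natDegree) :
    (qmap r r p).natDegree < p.natDegree := by
  rcases eq_or_ne (qmap r r p) 0 with h | h
  · simpa [h] using hp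
  rcases lt_or_eq_of_le (qmap_natDegree_le r r p) with h2 | h2
  · exact h2
  · exfalso
    apply h
    have := qmap_coeff_top r r p p.natDegree le_rfl
    rw [sub_self, zero_mul] at this
    rw [← h2] at this
    exact leadingCoeff_eq_zero.mp this

lemma qmap_zero (r s : ℂ) : qmap r s 0 = 0 := by simp [qmap]

lemma qmap_C (r c : ℂ) : qmap r r (C c) = 0 := by simp [qmap]

lemma qmap_iter_kill (r : ℂ) : ∀ (e : ℕ) (p : Polynomial ℂ), p.natDegree < e →
    (qmap r r)^[e] p = 0 := by
  intro e
  induction e with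
  | zero => intro p hp; omega
  | succ e ih =>
    intro p hp
    rw [Function.iterate_succ_apply]
    rcases Nat.eq_zero_or_pos p.natDegree with h0 | h0
    · rw [eq_C_of_natDegree_eq_zero h0, qmap_C]
      rw [Function.iterate_fixed (qmap_zero r r)]
    · exact ih _ (by have := qmap_natDegree_lt r p h0; omega)

lemma qmap_iter_coeff (r s : ℂ) (d : ℕ) : ∀ (e : ℕ) (p : Polynomial ℂ), p.natDegree ≤ d →
    ((qmap r s)^[e] p).natDegree ≤ d ∧ ((qmap r s)^[e] p).coeff d = (r - s) ^ e * p.coeff d := by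
  intro e
  induction e with
  | zero => intro p hp; simpa using hp
  | succ e ih =>
    intro p hp
    rw [Function.iterate_succ_apply]
    obtain ⟨h1, h2⟩ := ih (qmap r s p) (le_trans (qmap_natDegree_le r s p) hp)
    refine ⟨h1, ?_⟩
    rw [h2, qmap_coeff_top r s p d hp, pow_succ]; ring

noncomputable def opP (q : Polynomial ℂ) (f : ℤ → ℂ) : ℤ → ℂ :=
  fun n => q.sum fun i c => c * f (n + i)

lemma opP_monomial (i : ℕ) (c : ℂ) (f : ℤ → ℂ) :
    opP (monomial i c) f = fun n => c * f (n + i) := by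
  funext n
  unfold opP
  rw [Polynomial.sum_monomial_index]
  simp

lemma opP_add_left (q q' : Polynomial ℂ) (f : ℤ → ℂ) :
    opP (q + q') f = opP q f + opP q' f := by
  funext n
  simp only [opP, Pi.add_apply]
  rw [Polynomial.sum_add_index] <;> simp [add_mul]

lemma opP_zero_left (f : ℤ → ℂ) : opP 0 f = 0 := by
  funext n; simp [opP]

lemma opP_zero_right (q : Polynomial ℂ) : opP q 0 = 0 := by
  funext n; simp [opP, Polynomial.sum]

lemma opP_add_right (q : Polynomial ℂ) (f g : ℤ → ℂ) :
    opP q (f + g) = opP q f + opP q g := by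
  funext n
  simp only [opP, Pi.add_apply, Polynomial.sum, mul_add]
  rw [Finset.sum_add_distrib]

lemma opP_smul_right (q : Polynomial ℂ) (c : ℂ) (f : ℤ → ℂ) :
    opP q (c • f) = c • opP q f := by
  funext n
  simp only [opP, Pi.smul_apply, Polynomial.sum, smul_eq_mul, Finset.mul_sum]
  apply Finset.sum_congr rfl
  intros; ring

lemma opP_mul (p q : Polynomial ℂ) (f : ℤ → ℂ) :
    opP (p * q) f = opP p (opP q f) := by
  induction p using Polynomial.induction_on' with
  | add p p' hp hp' =>
    rw [add_mul, opP_add_left, opP_add_left, hp, hp']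
  | monomial i ci =>
    induction q using Polynomial.induction_on' with
    | add q q' hq hq' =>
      rw [mul_add, opP_add_left, hq, hq', opP_add_left, opP_add_right]
    | monomial j cj =>
      rw [monomial_mul_monomial, opP_monomial, opP_monomial, opP_monomial]
      funext n
      have : (n + (i + j : ℕ) : ℤ) = n + i + j := by push_cast; ring
      rw [this]
      ring

lemma opP_C (c : ℂ) (f : ℤ → ℂ) : opP (C c) f = c • f := by
  rw [← monomial_zero_left, opP_monomial]
  funext n; simp

lemma opP_one (f : ℤ → ℂ) : opP 1 f = f := by
  rw [← C_1, opP_C, one_smul]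

lemma opP_X (f : ℤ → ℂ) : opP X f = fun n => f (n + 1) := by
  rw [← monomial_one_one_eq_X, opP_monomial]
  funext n; simp

lemma opP_X_sub_C (s : ℂ) (f : ℤ → ℂ) :
    opP (X - C s) f = fun n => f (n + 1) - s * f n := by
  have : (X - C s : Polynomial ℂ) = X + (-C s) := by ring
  rw [this, opP_add_left, opP_X, ← C_neg, opP_C]
  funext n; simp; ring

-- step lemma on ℤ
lemma opP_step (r s : ℂ) (hr : r ≠ 0) (p : Polynomial ℂ) :
    opP (X - C s) (fun n : ℤ => p.eval (n : ℂ) * r ^ n) =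
      fun n : ℤ => (qmap r s p).eval (n : ℂ) * r ^ n := by
  rw [opP_X_sub_C]
  funext n
  have h1 : r ^ (n + 1 : ℤ) = r * r ^ n := by
    rw [zpow_add₀ hr, zpow_one]; ring
  rw [h1]
  have h2 : ((n + 1 : ℤ) : ℂ) = (n : ℂ) + 1 := by push_cast; ring
  rw [h2]
  simp only [qmap, eval_sub, eval_smul, eval_comp, eval_add, eval_X, eval_one,
    smul_eq_mul]
  ring

lemma opP_pow_step (r s : ℂ) (hr : r ≠ 0) (p : Polynomial ℂ) (e : ℕ) :
    opP ((X - C s) ^ e) (fun n : ℤ => p.eval (n : ℂ) * r ^ n) =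
      fun n : ℤ => ((qmap r s)^[e] p).eval (n : ℂ) * r ^ n := by
  induction e generalizing p with
  | zero => simp [opP_one]
  | succ e ih =>
    rw [pow_succ, opP_mul, opP_step r s hr p, Function.iterate_succ_apply]
    exact ih (qmap r s p)

lemma opP_pow_kill (r : ℂ) (hr : r ≠ 0) (p : Polynomial ℂ) (e : ℕ) (hp : p.natDegree < e) :
    opP ((X - C r) ^ e) (fun n : ℤ => p.eval (n : ℂ) * r ^ n) = 0 := by
  rw [opP_pow_step r r hr p e, qmap_iter_kill r e p hp]
  funext n; simp

-- ℕ-side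
noncomputable def TN (s : ℂ) (f : ℕ → ℂ) : ℕ → ℂ := fun n => f (n + 1) - s * f n

lemma TN_add (s : ℂ) (f g : ℕ → ℂ) : TN s (f + g) = TN s f + TN s g := by
  funext n; simp [TN]; ring

lemma TN_zero (s : ℂ) : TN s 0 = 0 := by funext n; simp [TN]

lemma TN_step (r s : ℂ) (p : Polynomial ℂ) :
    TN s (fun n : ℕ => p.eval (n : ℂ) * r ^ n) =
      fun n : ℕ => (qmap r s p).eval (n : ℂ) * r ^ n := by
  funext n
  have h2 : ((n + 1 : ℕ) : ℂ) = (n : ℂ) + 1 := by push_cast; ring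
  simp only [TN, pow_succ, h2, qmap, eval_sub, eval_smul, eval_comp, eval_add,
    eval_X, eval_one, smul_eq_mul]
  ring

lemma TN_iter_step (r s : ℂ) (p : Polynomial ℂ) (e : ℕ) :
    (TN s)^[e] (fun n : ℕ => p.eval (n : ℂ) * r ^ n) =
      fun n : ℕ => ((qmap r s)^[e] p).eval (n : ℂ) * r ^ n := by
  induction e generalizing p with
  | zero => simp
  | succ e ih =>
    rw [Function.iterate_succ_apply, Function.iterate_succ_apply, TN_step]
    exact ih (qmap r s p)

lemma TN_iter_add (s : ℂ) (f g : ℕ → ℂ) (e : ℕ) :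
    (TN s)^[e] (f + g) = (TN s)^[e] f + (TN s)^[e] g := by
  induction e generalizing f g with
  | zero => simp
  | succ e ih =>
    rw [Function.iterate_succ_apply, Function.iterate_succ_apply,
      Function.iterate_succ_apply, TN_add]
    exact ih _ _

lemma poly_zero_of_nat_eval (p : Polynomial ℂ) (h : ∀ n : ℕ, p.eval (n : ℂ) = 0) :
    p = 0 := by
  apply Polynomial.eq_zero_of_infinite_isRoot
  apply Set.Infinite.mono (s := Set.range (Nat.cast : ℕ → ℂ))
  · rintro x ⟨n, rfl⟩; exact h n
  · exact Set.infinite_range_of_injective Nat.cast_injective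

/-- independence of two exponentials with polynomial coefficients, on ℕ. -/
lemma indep2 (x y : ℂ) (hx : x ≠ 0) (hy : y ≠ 0) (hxy : x ≠ y) (P Q : Polynomial ℂ)
    (H : ∀ n : ℕ, P.eval (n : ℂ) * x ^ n + Q.eval (n : ℂ) * y ^ n = 0) :
    P = 0 ∧ Q = 0 := by
  have hP : P = 0 := by
    set e := Q.natDegree + 1 with he
    have h0 : (fun n : ℕ => P.eval (n : ℂ) * x ^ n) + (fun n : ℕ => Q.eval (n : ℂ) * y ^ n) = 0 := by
      funext n; exact H n
    have h1 := congrArg ((TN y)^[e]) h0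
    rw [TN_iter_add, TN_iter_step, TN_iter_step, qmap_iter_kill y e Q (by omega)] at h1
    have h2 : ∀ n : ℕ, (((qmap x y)^[e]) P).eval (n : ℂ) * x ^ n = 0 := by
      intro n
      have := congrFun h1 n
      simpa [Function.iterate_fixed (TN_zero y), TN_zero] using this
    have h3 : ((qmap x y)^[e]) P = 0 := by
      apply poly_zero_of_nat_eval
      intro n
      have := h2 n
      exact (mul_eq_zero.mp this).resolve_right (pow_ne_zero n hx)
    obtain ⟨-, h4⟩ := qmap_iter_coeff x y P.natDegree e P le_rfl
    rw [h3] at h4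
    have h5 : P.coeff P.natDegree = 0 := by
      have hxy' : (x - y) ^ e ≠ 0 := pow_ne_zero _ (sub_ne_zero.mpr hxy)
      rw [coeff_zero] at h4
      rcases mul_eq_zero.mp h4.symm with h | h
      · exact absurd h hxy'
      · exact h
    exact leadingCoeff_eq_zero.mp h5
  refine ⟨hP, ?_⟩
  apply poly_zero_of_nat_eval
  intro n
  have := H n
  rw [hP] at this
  simp only [eval_zero, zero_mul, zero_add] at this
  rcases mul_eq_zero.mp this with h | h
  · exact h
  · exact absurd h (pow_ne_zero n hy)

/-- iterate of TN on the zero function -/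
lemma TN_iter_zero (s : ℂ) (e : ℕ) : (TN s)^[e] 0 = 0 :=
  Function.iterate_fixed (TN_zero s) e

/-- geometric-polynomial summation -/
lemma solve_rho (ρ : ℂ) : ∀ (dd : ℕ) (p : Polynomial ℂ), p.natDegree ≤ dd →
    ∃ Q : Polynomial ℂ, Q.natDegree ≤ dd + 1 ∧ C ρ * Q.comp (X + 1) - Q = p := by
  intro dd
  induction dd with
  | zero =>
    intro p hp
    obtain ⟨cp, rfl⟩ : ∃ cp, p = C cp := ⟨_, eq_C_of_natDegree_eq_zero (Nat.le_zero.mp hp)⟩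
    rcases eq_or_ne ρ 1 with h1 | h1
    · refine ⟨C cp * X, ?_, ?_⟩
      · apply le_trans (natDegree_mul_le); simp
      · rw [h1, mul_comp, C_comp, X_comp]
        simp only [C_1, one_mul]
        ring
    · refine ⟨C (cp / (ρ - 1)), by simp, ?_⟩
      rw [C_comp, ← C_mul, ← C_sub]
      congr 1
      field_simp [sub_ne_zero.mpr h1]
  | succ dd ih =>
    intro p hp
    have key : ∃ G : Polynomial ℂ, G.natDegree ≤ dd + 2 ∧
        ∀ m : ℕ, dd < m → (C ρ * G.comp (X + 1) - G).coeff m = p.coeff m := by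
      rcases eq_or_ne ρ 1 with h1 | h1
      · have hne : ((dd : ℂ) + 2) ≠ 0 := by
          have h9 : ((dd : ℂ) + 2) = ((dd + 2 : ℕ) : ℂ) := by push_cast; ring
          rw [h9]
          exact Nat.cast_ne_zero.mpr (by omega)
        refine ⟨C (p.coeff (dd + 1) / ((dd : ℂ) + 2)) * X ^ (dd + 2), ?_, ?_⟩
        · apply le_trans (natDegree_mul_le); simp
        intro m hm
        rw [h1, C_1, one_mul, mul_comp, C_comp, pow_comp, X_comp]
        rw [coeff_sub, coeff_C_mul, coeff_C_mul, coeff_X_add_one_pow, coeff_X_pow]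
        rcases eq_or_lt_of_le (Nat.succ_le_of_lt hm) with h2 | h2
        · rw [← h2]
          rw [if_neg (by omega : ¬ dd + 1 = dd + 2), Nat.choose_succ_self_right]
          rw [mul_zero, sub_zero, div_mul_eq_mul_div, div_eq_iff hne]
          push_cast
          ring
        · have hple : p.coeff m = 0 := coeff_eq_zero_of_natDegree_lt (lt_of_le_of_lt hp h2)
          rcases eq_or_ne m (dd + 2) with h3 | h3
          · subst h3; simp [hple, Nat.choose_self]
          · rw [Nat.choose_eq_zero_of_lt (by omega), if_neg h3]
            simp [hple]
      · have hne : ρ - 1 ≠ 0 := sub_ne_zero.mpr h1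
        refine ⟨C (p.coeff (dd + 1) / (ρ - 1)) * X ^ (dd + 1), ?_, ?_⟩
        · apply le_trans (natDegree_mul_le); simp
        intro m hm
        rw [mul_comp, C_comp, pow_comp, X_comp]
        rw [coeff_sub, ← mul_assoc, ← C_mul, coeff_C_mul, coeff_C_mul,
          coeff_X_add_one_pow, coeff_X_pow]
        rcases eq_or_lt_of_le (Nat.succ_le_of_lt hm) with h2 | h2
        · rw [← h2]
          rw [if_pos rfl, Nat.choose_self]
          push_cast
          field_simp
        · have hple : p.coeff m = 0 := coeff_eq_zero_of_natDegree_lt (lt_of_le_of_lt hp h2)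
          rw [Nat.choose_eq_zero_of_lt h2, if_neg (by omega : ¬ m = dd + 1)]
          simp [hple]
    obtain ⟨G, hGdeg, hLG⟩ := key
    have hdeg : (p - (C ρ * G.comp (X + 1) - G)).natDegree ≤ dd := by
      rw [natDegree_le_iff_coeff_eq_zero]
      intro m hm
      rw [coeff_sub, hLG m hm, sub_self]
    obtain ⟨Q', hQ'deg, hQ'⟩ := ih _ hdeg
    refine ⟨Q' + G, ?_, ?_⟩
    · apply le_trans (natDegree_add_le _ _)
      omega
    · rw [add_comp]
      linear_combination hQ'

lemma geom_poly_sum (ρ : ℂ) (v : ℕ) :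
    ∃ Q : Polynomial ℂ, Q.natDegree ≤ v + 1 ∧
      ∀ n : ℕ, ∑ j ∈ range n, (j : ℂ) ^ v * ρ ^ j = Q.eval (n : ℂ) * ρ ^ n - Q.eval 0 := by
  obtain ⟨Q, hQdeg, hQ⟩ := solve_rho ρ v (X ^ v) (by simp)
  refine ⟨Q, hQdeg, ?_⟩
  intro n
  induction n with
  | zero => simp
  | succ n ih =>
    rw [Finset.sum_range_succ, ih]
    have h2 : ((n + 1 : ℕ) : ℂ) = (n : ℂ) + 1 := by push_cast; ring
    have h3 := congrArg (fun q => Polynomial.eval (n : ℂ) q) hQ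
    simp only [eval_sub, eval_mul, eval_C, eval_comp, eval_add, eval_X, eval_one,
      eval_pow] at h3
    rw [pow_succ, h2]
    rw [← h3]
    ring
lemma boxSpan {d : ℕ} (hd : 1 ≤ d) (r : Fin d → ℂ) (e : Fin d → ℕ) (lam : Fin d → ℕ → ℂ)
    (hr_inj : Function.Injective r) (hr0 : ∀ m, r m ≠ 0)
    (he : ∀ m, 1 ≤ e m) (hlam : ∀ m, lam m (e m - 1) ≠ 0)
    (F : ℤ → ℂ)
    (hF : ∀ n : ℤ, F n = ∑ m, ∑ h ∈ Finset.range (e m), lam m h * (n : ℂ) ^ h * r m ^ n)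
    (D : ℕ) (hD : D = ∑ m, e m) :
    (∀ t : ℤ, (fun n : ℤ => F (n + t)) ∈
      Submodule.span ℂ (Set.range fun i : Fin D => fun n : ℤ => F (n + (i : ℤ)))) ∧
    (∀ m : Fin d, ∀ h : ℕ, h < e m → (fun n : ℤ => (n : ℂ) ^ h * r m ^ n) ∈
      Submodule.span ℂ (Set.range fun i : Fin D => fun n : ℤ => F (n + (i : ℤ)))) := by
  set B := Submodule.span ℂ (Set.range fun i : Fin D => fun n : ℤ => F (n + (i : ℤ))) with hB
  have hD1 : 1 ≤ D := by
    rw [hD]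
    calc 1 ≤ e ⟨0, hd⟩ := he _
    _ ≤ ∑ m, e m := Finset.single_le_sum (f := e) (fun m _ => Nat.zero_le _) (Finset.mem_univ _)
  set pp : Fin d → Polynomial ℂ := fun m => ∑ h ∈ Finset.range (e m), C (lam m h) * X ^ h
    with hpp
  have hpp_deg : ∀ m, (pp m).natDegree ≤ e m - 1 := by
    intro m
    apply Polynomial.natDegree_sum_le_of_forall_le
    intro h hh
    simp only [Finset.mem_range] at hh
    apply le_trans (natDegree_mul_le)
    simp only [natDegree_C, natDegree_X_pow]
    omega
  have hpp_coeff : ∀ m, (pp m).coeff (e m - 1) = lam m (e m - 1) := by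
    intro m
    rw [hpp, finset_sum_coeff]
    rw [Finset.sum_eq_single (e m - 1)]
    · rw [coeff_C_mul, coeff_X_pow, if_pos rfl, mul_one]
    · intro h _ hne
      rw [coeff_C_mul, coeff_X_pow, if_neg (fun hc => hne hc.symm), mul_zero]
    · intro hc
      exact absurd (Finset.mem_range.mpr (by have := he m; omega)) hc
  have hpp_ndeg : ∀ m, (pp m).natDegree = e m - 1 := by
    intro m
    refine le_antisymm (hpp_deg m) (le_natDegree_of_ne_zero ?_)
    rw [hpp_coeff m]; exact hlam m
  have hFdecomp : (fun n : ℤ => F n) = ∑ m, (fun n : ℤ => (pp m).eval (n : ℂ) * r m ^ n) := by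
    funext n
    rw [hF n, Finset.sum_apply]
    apply Finset.sum_congr rfl
    intro m _
    rw [hpp, eval_finset_sum, Finset.sum_mul]
    apply Finset.sum_congr rfl
    intro h _
    simp only [eval_mul, eval_C, eval_pow, eval_X]
  set χ : Polynomial ℂ := ∏ m, (X - C (r m)) ^ e m with hχ
  have hχmonic : χ.Monic := monic_prod_of_monic _ _ (fun m _ => (monic_X_sub_C (r m)).pow (e m))
  have hχdeg : χ.natDegree = D := by
    rw [hχ, natDegree_prod _ _ (fun m _ => pow_ne_zero _ (X_sub_C_ne_zero (r m))), hD]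
    apply Finset.sum_congr rfl
    intro m _
    rw [natDegree_pow, natDegree_X_sub_C, mul_one]
  have hχ0 : χ.coeff 0 ≠ 0 := by
    rw [coeff_zero_eq_eval_zero, hχ, eval_prod]
    apply Finset.prod_ne_zero_iff.mpr
    intro m _
    rw [eval_pow, eval_sub, eval_X, eval_C]
    exact pow_ne_zero _ (by simpa using neg_ne_zero.mpr (hr0 m))
  have hopsum : ∀ (q : Polynomial ℂ) (s : Finset (Fin d)) (G : Fin d → ℤ → ℂ),
      opP q (∑ m ∈ s, G m) = ∑ m ∈ s, opP q (G m) := by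
    intro q s G
    induction s using Finset.cons_induction with
    | empty => simp [opP_zero_right]
    | cons m s hm ih => rw [Finset.sum_cons, Finset.sum_cons, opP_add_right, ih]
  have hkill : ∀ m, opP ((X - C (r m)) ^ e m) (fun n : ℤ => (pp m).eval (n : ℂ) * r m ^ n) = 0 :=
    fun m => opP_pow_kill (r m) (hr0 m) (pp m) (e m) (by have := hpp_deg m; have := he m; omega)
  have hrec0 : opP χ (fun n : ℤ => F n) = 0 := by
    rw [hFdecomp, hopsum]
    apply Finset.sum_eq_zero
    intro m _
    have hsplit : χ = (∏ m' ∈ Finset.univ.erase m, (X - C (r m')) ^ e m') * (X - C (r m)) ^ e m :=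
      (Finset.prod_erase_mul _ _ (Finset.mem_univ m)).symm
    rw [hsplit, opP_mul, hkill m, opP_zero_right]
  have hrec : ∀ n : ℤ, ∑ i ∈ Finset.range (D + 1), χ.coeff i * F (n + i) = 0 := by
    intro n
    have h1 := congrFun hrec0 n
    simp only [opP] at h1
    rw [χ.sum_over_range (by simp), hχdeg] at h1
    simpa using h1
  have hχD : χ.coeff D = 1 := by
    have := hχmonic.coeff_natDegree
    rwa [hχdeg] at this
  -- A1
  have claim : ∀ t : ℤ, ∀ i : ℕ, i < D → (fun n : ℤ => F (n + (t + i))) ∈ B := by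
    intro t
    induction t using Int.induction_on with
    | zero =>
      intro i hi
      have h1 : (fun n : ℤ => F (n + ((0 : ℤ) + i))) =
          fun n : ℤ => F (n + ((⟨i, hi⟩ : Fin D) : ℤ)) := by
        funext n
        show F (n + ((0 : ℤ) + (i : ℕ))) = F (n + ((i : ℕ) : ℤ))
        rw [zero_add]
      rw [h1]
      exact Submodule.subset_span ⟨⟨i, hi⟩, rfl⟩
    | succ t ih =>
      intro i hi
      rcases lt_or_ge (i + 1) D with hi1 | hi1
      · have h1 : (fun n : ℤ => F (n + ((t + 1 : ℤ) + i))) =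
            fun n : ℤ => F (n + ((t : ℤ) + (i + 1 : ℕ))) := by
          funext n; congr 1; push_cast; ring
        rw [h1]; exact ih (i + 1) hi1
      · have hiD : (i : ℤ) = D - 1 := by omega
        have h1 : (fun n : ℤ => F (n + ((t + 1 : ℤ) + i))) =
            ∑ i' ∈ Finset.range D, (-(χ.coeff i')) • fun n : ℤ => F (n + ((t : ℤ) + i')) := by
          funext n
          have h2 := hrec (n + t)
          rw [Finset.sum_range_succ, hχD, one_mul] at h2
          push_cast at h2
          have h3 : n + (t + 1 + i) = n + t + D := by omega
          rw [h3]
          have h4 : F (n + t + D) = -∑ i' ∈ Finset.range D, χ.coeff i' * F (n + t + i') := by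
            linear_combination h2
          rw [h4, Finset.sum_apply, ← Finset.sum_neg_distrib]
          apply Finset.sum_congr rfl
          intro i' _
          simp only [Pi.smul_apply, smul_eq_mul]
          have h5 : n + t + i' = n + (t + i') := by ring
          rw [h5]; ring
        rw [h1]
        apply Submodule.sum_mem
        intro i' hi'
        exact Submodule.smul_mem _ _ (ih i' (Finset.mem_range.mp hi'))
    | pred t ih =>
      intro i hi
      rcases Nat.eq_zero_or_pos i with hi0 | hi0
      · subst hi0
        simp only [Nat.cast_zero, add_zero]
        have h1 : (fun n : ℤ => F (n + (-(t : ℤ) - 1))) =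
            ∑ i' ∈ Finset.range D, (-(χ.coeff 0)⁻¹ * χ.coeff (i' + 1)) •
              fun n : ℤ => F (n + (-(t : ℤ) + i')) := by
          funext n
          rw [Finset.sum_apply]
          simp only [Pi.smul_apply, smul_eq_mul]
          have h2 := hrec (n + (-(t : ℤ) - 1))
          rw [Finset.sum_range_succ'] at h2
          push_cast at h2
          have hindex : ∀ k : ℕ, n + (-(t : ℤ) - 1) + ((k : ℤ) + 1) = n + (-(t : ℤ) + k) := by
            intro k; ring
          simp only [hindex] at h2
          apply mul_left_cancel₀ hχ0
          rw [Finset.mul_sum]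
          have h7 : ∀ i' ∈ Finset.range D,
              χ.coeff 0 * (-(χ.coeff 0)⁻¹ * χ.coeff (i' + 1) * F (n + (-(t : ℤ) + i'))) =
              -(χ.coeff (i' + 1) * F (n + (-(t : ℤ) + i'))) := by
            intro i' _
            field_simp
          rw [Finset.sum_congr rfl h7, Finset.sum_neg_distrib]
          simp only [add_zero] at h2
          linear_combination h2
        rw [h1]
        apply Submodule.sum_mem
        intro i' hi'
        exact Submodule.smul_mem _ _ (ih i' (Finset.mem_range.mp hi'))
      · have h1 : (fun n : ℤ => F (n + ((-(t : ℤ) - 1) + i))) =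
            fun n : ℤ => F (n + (-(t : ℤ) + (i - 1 : ℕ))) := by
          funext n; congr 1
          have : ((i - 1 : ℕ) : ℤ) = (i : ℤ) - 1 := by omega
          rw [this]; ring
        rw [h1]; exact ih (i - 1) (by omega)
  have A1 : ∀ t : ℤ, (fun n : ℤ => F (n + t)) ∈ B := by
    intro t
    have := claim t 0 (by omega)
    simpa using this
  -- CLgen
  have CLgen : ∀ q : Polynomial ℂ, opP q (fun n : ℤ => F n) ∈ B := by
    intro q
    have h1 : opP q (fun n : ℤ => F n) =
        ∑ i ∈ Finset.range (q.natDegree + 1), q.coeff i • fun n : ℤ => F (n + (i : ℕ)) := by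
      funext n
      simp only [opP]
      rw [q.sum_over_range (by simp), Finset.sum_apply]
      simp
    rw [h1]
    exact Submodule.sum_mem _ (fun i _ => Submodule.smul_mem _ _ (A1 i))
  -- CL
  have CL : ∀ (s : ℂ) (f : ℤ → ℂ), f ∈ B → opP (X - C s) f ∈ B := by
    intro s f hf
    induction hf using Submodule.span_induction with
    | mem g hg =>
      obtain ⟨i, rfl⟩ := hg
      show opP (X - C s) (fun n : ℤ => F (n + (i : ℤ))) ∈ B
      rw [opP_X_sub_C]
      have h1 : (fun n : ℤ => F (n + 1 + (i:ℤ)) - s * F (n + (i:ℤ))) =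
          (fun n : ℤ => F (n + ((i:ℤ) + 1))) - s • fun n : ℤ => F (n + (i:ℤ)) := by
        funext n
        simp only [Pi.sub_apply, Pi.smul_apply, smul_eq_mul]
        congr 2
        ring
      rw [h1]
      exact Submodule.sub_mem _ (A1 _) (Submodule.smul_mem _ _ (A1 _))
    | zero => rw [opP_zero_right]; exact Submodule.zero_mem _
    | add g g' _ _ ihg ihg' => rw [opP_add_right]; exact Submodule.add_mem _ ihg ihg'
    | smul c g _ ihg => rw [opP_smul_right]; exact Submodule.smul_mem _ _ ihg
  -- DESC
  have DESC : ∀ dd : ℕ, ∀ rr : ℂ, rr ≠ 0 → ∀ P : Polynomial ℂ, P.natDegree = dd →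
      P.coeff dd ≠ 0 → (fun n : ℤ => P.eval (n : ℂ) * rr ^ n) ∈ B →
      ∀ h : ℕ, h ≤ dd → (fun n : ℤ => (n : ℂ) ^ h * rr ^ n) ∈ B := by
    intro dd
    induction dd with
    | zero =>
      intro rr hrr P hPdeg hPc hPB h hh
      interval_cases h
      obtain ⟨cp, rfl⟩ : ∃ cp, P = C cp := ⟨_, eq_C_of_natDegree_eq_zero hPdeg⟩
      norm_num at hPc
      have h1 : (fun n : ℤ => (n : ℂ) ^ 0 * rr ^ n) = cp⁻¹ • fun n : ℤ => (C cp).eval (n:ℂ) * rr ^ n := by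
        funext n
        simp only [Pi.smul_apply, smul_eq_mul, eval_C, pow_zero, one_mul]
        rw [← mul_assoc, inv_mul_cancel₀ hPc, one_mul]
      rw [h1]
      exact Submodule.smul_mem _ _ hPB
    | succ dd ih =>
      intro rr hrr P hPdeg hPc hPB h hh
      have hP'B : (fun n : ℤ => (qmap rr rr P).eval (n : ℂ) * rr ^ n) ∈ B := by
        rw [← opP_step rr rr hrr P]
        exact CL rr _ hPB
      have hP'c : (qmap rr rr P).coeff dd = rr * (dd + 1) * P.coeff (dd + 1) := by
        exact qmap_coeff_top2 rr P dd (by omega)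
      have hP'c0 : (qmap rr rr P).coeff dd ≠ 0 := by
        rw [hP'c]
        refine mul_ne_zero (mul_ne_zero hrr ?_) hPc
        have h9 : ((dd : ℂ) + 1) = ((dd + 1 : ℕ) : ℂ) := by push_cast; ring
        rw [h9]
        exact Nat.cast_ne_zero.mpr (by omega)
      have hP'deg : (qmap rr rr P).natDegree = dd := by
        refine le_antisymm ?_ (le_natDegree_of_ne_zero hP'c0)
        have h2 := qmap_natDegree_lt rr P (by omega)
        omega
      have ihall : ∀ h' : ℕ, h' ≤ dd → (fun n : ℤ => (n : ℂ) ^ h' * rr ^ n) ∈ B :=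
        ih rr hrr (qmap rr rr P) hP'deg hP'c0 hP'B
      rcases Nat.lt_or_ge h (dd + 1) with hlt | hge
      · exact ihall h (by omega)
      · have hEq : h = dd + 1 := by omega
        subst hEq
        have h1 : (fun n : ℤ => (n : ℂ) ^ (dd + 1) * rr ^ n) =
            (P.coeff (dd + 1))⁻¹ • ((fun n : ℤ => P.eval (n:ℂ) * rr ^ n) -
              ∑ h' ∈ Finset.range (dd + 1), P.coeff h' • fun n : ℤ => (n : ℂ) ^ h' * rr ^ n) := by
          funext n
          simp only [Pi.smul_apply, Pi.sub_apply, Finset.sum_apply, smul_eq_mul]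
          have h2 : P.eval ((n:ℤ) : ℂ) = ∑ i ∈ Finset.range (dd + 1 + 1), P.coeff i * (n:ℂ) ^ i := by
            rw [Polynomial.eval_eq_sum_range, hPdeg]
          have hsum : ∑ h' ∈ Finset.range (dd + 1), P.coeff h' * ((n:ℂ) ^ h' * rr ^ n) =
              (∑ i ∈ Finset.range (dd + 1), P.coeff i * (n:ℂ) ^ i) * rr ^ n := by
            rw [Finset.sum_mul]
            exact Finset.sum_congr rfl (fun x _ => by ring)
          rw [h2, Finset.sum_range_succ, hsum, add_mul]
          rw [add_sub_cancel_left]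
          field_simp
        rw [h1]
        refine Submodule.smul_mem _ _ (Submodule.sub_mem _ hPB (Submodule.sum_mem _ ?_))
        intro h' hh'
        exact Submodule.smul_mem _ _ (ihall h' (by simp only [Finset.mem_range] at hh'; omega))
  -- product over erased set
  have hprodexp : ∀ m : Fin d, ∀ s : Finset (Fin d), m ∉ s → ∃ PG : Polynomial ℂ,
      opP (∏ m' ∈ s, (X - C (r m')) ^ e m') (fun n : ℤ => (pp m).eval (n : ℂ) * r m ^ n) =
        (fun n : ℤ => PG.eval (n : ℂ) * r m ^ n) ∧
      PG.natDegree ≤ (pp m).natDegree ∧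
      PG.coeff ((pp m).natDegree) = (∏ m' ∈ s, (r m - r m') ^ e m') * (pp m).coeff (pp m).natDegree := by
    intro m s
    induction s using Finset.induction_on with
    | empty => intro _; exact ⟨pp m, by rw [Finset.prod_empty, opP_one], le_rfl, by simp⟩
    | insert m' s' hm' ih =>
      intro hm
      have hmne : m ≠ m' := fun hc => hm (by rw [hc]; exact Finset.mem_insert_self _ _)
      have hms' : m ∉ s' := fun hc => hm (Finset.mem_insert_of_mem hc)
      obtain ⟨PGs , hPG1, hPG2, hPG3⟩ := ih hms'
      refine ⟨(qmap (r m) (r m'))^[e m'] PGs, ?_, ?_, ?_⟩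
      · rw [Finset.prod_insert hm', opP_mul, hPG1, opP_pow_step (r m) (r m') (hr0 m)]
      · obtain ⟨hh, -⟩ := qmap_iter_coeff (r m) (r m') (pp m).natDegree (e m') PGs hPG2
        exact hh
      · obtain ⟨-, hh⟩ := qmap_iter_coeff (r m) (r m') (pp m).natDegree (e m') PGs hPG2
        rw [hh, hPG3, Finset.prod_insert hm']
        ring
  refine ⟨A1, ?_⟩
  intro m h hh
  obtain ⟨PG, hPG1, hPG2, hPG3⟩ := hprodexp m (Finset.univ.erase m) (Finset.notMem_erase m _)
  have hGB : opP (∏ m' ∈ Finset.univ.erase m, (X - C (r m')) ^ e m') (fun n : ℤ => F n) ∈ B :=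
    CLgen _
  have hGeq : opP (∏ m' ∈ Finset.univ.erase m, (X - C (r m')) ^ e m') (fun n : ℤ => F n) =
      fun n : ℤ => PG.eval (n : ℂ) * r m ^ n := by
    rw [hFdecomp, hopsum]
    rw [Finset.sum_eq_single m]
    · exact hPG1
    · intro m' _ hne
      have hm'mem : m' ∈ Finset.univ.erase m := Finset.mem_erase.mpr ⟨hne, Finset.mem_univ _⟩
      have hsplit : (∏ m'' ∈ Finset.univ.erase m, (X - C (r m'')) ^ e m'') =
          (∏ m'' ∈ (Finset.univ.erase m).erase m', (X - C (r m'')) ^ e m'') * (X - C (r m')) ^ e m' :=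
        (Finset.prod_erase_mul _ _ hm'mem).symm
      rw [hsplit, opP_mul, hkill m', opP_zero_right]
    · intro hc; exact absurd (Finset.mem_univ m) hc
  have hPGc0 : PG.coeff ((pp m).natDegree) ≠ 0 := by
    rw [hPG3]
    apply mul_ne_zero
    · apply Finset.prod_ne_zero_iff.mpr
      intro m' hm'
      apply pow_ne_zero
      apply sub_ne_zero.mpr
      intro hc
      exact (Finset.mem_erase.mp hm').1 (hr_inj hc).symm
    · rw [hpp_ndeg m, hpp_coeff m]; exact hlam m
  have hPGdeg : PG.natDegree = (pp m).natDegree :=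
    le_antisymm hPG2 (le_natDegree_of_ne_zero hPGc0)
  have hmono := DESC ((pp m).natDegree) (r m) (hr0 m) PG hPGdeg hPGc0 (by rw [← hGeq]; exact hGB)
  exact hmono h (by rw [hpp_ndeg m]; omega)
-- WithBot helper
lemma sup_add_le_aux {ι : Type*} (sf : Finset ι) (f : ι → WithBot ℕ) (v : ℕ) (κ : WithBot ℕ)
    (h : ∀ i ∈ sf, f i + (v : WithBot ℕ) ≤ κ) : sf.sup f + (v : WithBot ℕ) ≤ κ := by
  induction sf using Finset.cons_induction with
  | empty => simp
  | cons a sf ha ih =>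
    rw [Finset.sup_cons]
    rcases le_total (f a) (sf.sup f) with hle | hle
    · rw [sup_eq_right.mpr hle]
      exact ih (fun i hi => h i (Finset.mem_cons_of_mem hi))
    · rw [sup_eq_left.mpr hle]
      exact h a (Finset.mem_cons_self _ _)

def DXd (κ : ℕ) (q : Polynomial (Polynomial ℂ)) : Prop :=
  ∀ v, (q.coeff v).degree ≤ (κ : WithBot ℕ)

def TDd (κ : ℕ) (q : Polynomial (Polynomial ℂ)) : Prop :=
  ∀ v, (q.coeff v).degree + (v : WithBot ℕ) ≤ (κ : WithBot ℕ)

lemma DXd_mul {κ₁ κ₂ : ℕ} {A B : Polynomial (Polynomial ℂ)} (hA : DXd κ₁ A) (hB : DXd κ₂ B) :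
    DXd (κ₁ + κ₂) (A * B) := by
  intro v
  rw [Polynomial.coeff_mul]
  refine le_trans (Polynomial.degree_sum_le _ _) ?_
  apply Finset.sup_le
  intro x hx
  rw [Polynomial.degree_mul]
  push_cast
  exact add_le_add (hA x.1) (hB x.2)

lemma TDd_mul {κ₁ κ₂ : ℕ} {A B : Polynomial (Polynomial ℂ)} (hA : TDd κ₁ A) (hB : TDd κ₂ B) :
    TDd (κ₁ + κ₂) (A * B) := by
  intro v
  rw [Polynomial.coeff_mul]
  refine le_trans (add_le_add_left (Polynomial.degree_sum_le _ _) _) ?_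
  apply sup_add_le_aux
  intro x hx
  rw [Finset.HasAntidiagonal.mem_antidiagonal] at hx
  rw [Polynomial.degree_mul]
  have hv : (v : WithBot ℕ) = (x.1 : WithBot ℕ) + (x.2 : WithBot ℕ) := by
    rw [← hx]; push_cast; rfl
  rw [hv, add_add_add_comm]
  push_cast
  exact add_le_add (hA x.1) (hB x.2)

lemma DXd_one : DXd 0 (1 : Polynomial (Polynomial ℂ)) := by
  intro v
  rw [Polynomial.coeff_one]
  split
  · simp [Polynomial.degree_one]
  · simp

lemma TDd_one : TDd 0 (1 : Polynomial (Polynomial ℂ)) := by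
  intro v
  rw [Polynomial.coeff_one]
  split
  · rename_i hv; subst hv; simp [Polynomial.degree_one]
  · simp [Polynomial.degree_zero, WithBot.bot_add]

lemma DXd_pow {κ : ℕ} {A : Polynomial (Polynomial ℂ)} (hA : DXd κ A) (e : ℕ) :
    DXd (e * κ) (A ^ e) := by
  induction e with
  | zero => simpa using DXd_one
  | succ e ih =>
    have h9 : (e + 1) * κ = e * κ + κ := by ring
    rw [pow_succ, h9]
    exact DXd_mul ih hA

lemma TDd_pow {κ : ℕ} {A : Polynomial (Polynomial ℂ)} (hA : TDd κ A) (e : ℕ) :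
    TDd (e * κ) (A ^ e) := by
  induction e with
  | zero => simpa using TDd_one
  | succ e ih =>
    have h9 : (e + 1) * κ = e * κ + κ := by ring
    rw [pow_succ, h9]
    exact TDd_mul ih hA

lemma DXd_prod {ι : Type*} (sf : Finset ι) (A : ι → Polynomial (Polynomial ℂ)) (κ : ι → ℕ)
    (h : ∀ i ∈ sf, DXd (κ i) (A i)) : DXd (∑ i ∈ sf, κ i) (∏ i ∈ sf, A i) := by
  induction sf using Finset.cons_induction with
  | empty => simpa using DXd_one
  | cons a sf ha ih =>
    rw [Finset.prod_cons, Finset.sum_cons]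
    exact DXd_mul (h a (Finset.mem_cons_self _ _)) (ih (fun i hi => h i (Finset.mem_cons_of_mem hi)))

lemma TDd_prod {ι : Type*} (sf : Finset ι) (A : ι → Polynomial (Polynomial ℂ)) (κ : ι → ℕ)
    (h : ∀ i ∈ sf, TDd (κ i) (A i)) : TDd (∑ i ∈ sf, κ i) (∏ i ∈ sf, A i) := by
  induction sf using Finset.cons_induction with
  | empty => simpa using TDd_one
  | cons a sf ha ih =>
    rw [Finset.prod_cons, Finset.sum_cons]
    exact TDd_mul (h a (Finset.mem_cons_self _ _)) (ih (fun i hi => h i (Finset.mem_cons_of_mem hi)))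

-- cap decomposition
lemma cap_decomp {ι : Type*} [DecidableEq ι] (cap : ι → ℕ) :
    ∀ (sf : Finset ι) (w : ℕ), w ≤ ∑ i ∈ sf, cap i →
    ∃ φ : ι → ℕ, (∀ i, φ i ≤ cap i) ∧ (∀ i, i ∉ sf → φ i = 0) ∧ ∑ i ∈ sf, φ i = w := by
  intro sf
  induction sf using Finset.induction_on with
  | empty =>
    intro w hw
    simp only [Finset.sum_empty, Nat.le_zero] at hw
    exact ⟨fun _ => 0, fun _ => Nat.zero_le _, fun _ _ => rfl, by simp [hw]⟩
  | insert a sf' ha ih =>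
    intro w hw
    rw [Finset.sum_insert ha] at hw
    obtain ⟨φ', hφ'cap, hφ'out, hφ'sum⟩ := ih (w - min w (cap a)) (by omega)
    refine ⟨fun i => if i = a then min w (cap a) else φ' i, ?_, ?_, ?_⟩
    · intro i
      by_cases hi : i = a
      · simp [hi]
      · simp only [if_neg hi]; exact hφ'cap i
    · intro i hi
      have hia : i ≠ a := fun hc => hi (by rw [hc]; exact Finset.mem_insert_self a sf')
      show (if i = a then min w (cap a) else φ' i) = 0
      rw [if_neg hia]
      exact hφ'out i (fun hc => hi (Finset.mem_insert_of_mem hc))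
    · rw [Finset.sum_insert ha, if_pos rfl]
      have : ∑ i ∈ sf', (if i = a then min w (cap a) else φ' i) = ∑ i ∈ sf', φ' i :=
        Finset.sum_congr rfl (fun i hi => by
          rw [if_neg (fun hc : i = a => ha (by rw [← hc]; exact hi))])
      rw [this, hφ'sum]
      omega

/-- the central summation lemma -/
lemma GEN {k : ℕ} (s t cc : Fin k → ℤ) (h : Fin k → ℕ) (ρ : ℂ) :
    ∃ Φ Ψ : Polynomial ℂ,
      Φ.natDegree ≤ (∑ i, h i) + 1 ∧
      Ψ.natDegree ≤ (∑ i ∈ Finset.univ.filter (fun i => s i ≠ 0), h i) ∧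
      ∀ n : ℕ, ∑ j ∈ Finset.range n,
          (∏ i, ((s i * n + t i * j + cc i : ℤ) : ℂ) ^ h i) * ρ ^ j
        = Φ.eval (n : ℂ) * ρ ^ n + Ψ.eval (n : ℂ) := by
  classical
  set base : Fin k → Polynomial (Polynomial ℂ) := fun i =>
    C (C ((s i : ℤ) : ℂ) * X + C ((cc i : ℤ) : ℂ)) + C (C ((t i : ℤ) : ℂ)) * X with hbase
  set PP : Polynomial (Polynomial ℂ) := ∏ i, (base i) ^ h i with hPP
  -- evaluation
  have heval : ∀ (n j : ℕ), ((PP.eval (C (j : ℂ))).eval ((n : ℕ) : ℂ)) =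
      ∏ i, ((s i * n + t i * j + cc i : ℤ) : ℂ) ^ h i := by
    intro n j
    rw [hPP, Polynomial.eval_prod, Polynomial.eval_prod]
    apply Finset.prod_congr rfl
    intro i _
    rw [Polynomial.eval_pow, Polynomial.eval_pow]
    congr 1
    rw [hbase]
    simp only [Polynomial.eval_add, Polynomial.eval_mul, Polynomial.eval_C, Polynomial.eval_X]
    push_cast
    ring
  -- bounds
  have hbaseTD : ∀ i, TDd 1 (base i) := by
    intro i v
    rw [hbase]
    rcases Nat.lt_or_ge v 2 with hv | hv
    · interval_cases v
      · rw [Polynomial.coeff_add, Polynomial.coeff_C, if_pos rfl]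
        rw [Polynomial.coeff_C_mul, Polynomial.coeff_X_zero, mul_zero, add_zero]
        rw [Nat.cast_zero, add_zero]
        refine le_trans (Polynomial.degree_add_le _ _) (max_le ?_ ?_)
        · refine le_trans (Polynomial.degree_mul_le _ _) ?_
          refine le_trans (add_le_add Polynomial.degree_C_le Polynomial.degree_X_le) ?_
          simp
        · exact le_trans Polynomial.degree_C_le (by simp)
      · rw [Polynomial.coeff_add, Polynomial.coeff_C, if_neg (by omega)]
        rw [Polynomial.coeff_C_mul, Polynomial.coeff_X_one, mul_one, zero_add]
        refine le_trans (add_le_add_left Polynomial.degree_C_le _) ?_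
        simp
    · rw [Polynomial.coeff_add, Polynomial.coeff_C, if_neg (by omega)]
      rw [Polynomial.coeff_C_mul, Polynomial.coeff_X, if_neg (by omega), mul_zero, add_zero]
      simp [WithBot.bot_add]
  have hbaseDX : ∀ i, DXd (if (s i : ℤ) = 0 then 0 else 1) (base i) := by
    intro i v
    rw [hbase]
    rcases Nat.lt_or_ge v 2 with hv | hv
    · interval_cases v
      · rw [Polynomial.coeff_add, Polynomial.coeff_C, if_pos rfl]
        rw [Polynomial.coeff_C_mul, Polynomial.coeff_X_zero, mul_zero, add_zero]
        by_cases hs : (s i : ℤ) = 0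
        · rw [if_pos hs, hs]
          simp only [Int.cast_zero, Polynomial.C_0, zero_mul, zero_add]
          exact le_trans Polynomial.degree_C_le (by simp)
        · rw [if_neg hs]
          refine le_trans (Polynomial.degree_add_le _ _) (max_le ?_ ?_)
          · refine le_trans (Polynomial.degree_mul_le _ _) ?_
            refine le_trans (add_le_add Polynomial.degree_C_le Polynomial.degree_X_le) ?_
            simp
          · exact le_trans Polynomial.degree_C_le (by simp)
      · rw [Polynomial.coeff_add, Polynomial.coeff_C, if_neg (by omega)]
        rw [Polynomial.coeff_C_mul, Polynomial.coeff_X_one, mul_one, zero_add]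
        exact le_trans Polynomial.degree_C_le (by split <;> simp)
    · rw [Polynomial.coeff_add, Polynomial.coeff_C, if_neg (by omega)]
      rw [Polynomial.coeff_C_mul, Polynomial.coeff_X, if_neg (by omega), mul_zero, add_zero]
      split <;> simp
  have hTD : TDd (∑ i, h i) PP := by
    rw [hPP]
    have := TDd_prod Finset.univ (fun i => (base i) ^ h i) (fun i => h i * 1)
      (fun i _ => TDd_pow (hbaseTD i) (h i))
    simpa using this
  have hDX : DXd (∑ i ∈ Finset.univ.filter (fun i => s i ≠ 0), h i) PP := by
    rw [hPP]
    have h2 := DXd_prod Finset.univ (fun i => (base i) ^ h i)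
      (fun i => h i * (if (s i : ℤ) = 0 then 0 else 1))
      (fun i _ => DXd_pow (hbaseDX i) (h i))
    have h3 : ∑ i, h i * (if (s i : ℤ) = 0 then 0 else 1) =
        ∑ i ∈ Finset.univ.filter (fun i => s i ≠ 0), h i := by
      rw [Finset.sum_filter]
      apply Finset.sum_congr rfl
      intro i _
      by_cases hs : s i = 0 <;> simp [hs]
    rwa [h3] at h2
  -- choose Q polynomials
  set N := PP.natDegree with hN
  have hQex : ∀ v : ℕ, ∃ Q : Polynomial ℂ, Q.natDegree ≤ v + 1 ∧
      ∀ n : ℕ, ∑ j ∈ Finset.range n, (j : ℂ) ^ v * ρ ^ j = Q.eval (n : ℂ) * ρ ^ n - Q.eval 0 :=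
    fun v => geom_poly_sum ρ v
  choose Q hQdeg hQsum using hQex
  refine ⟨∑ v ∈ Finset.range (N + 1), (PP.coeff v) * Q v,
    ∑ v ∈ Finset.range (N + 1), (-(Q v).eval 0) • (PP.coeff v), ?_, ?_, ?_⟩
  · rw [Polynomial.natDegree_le_iff_degree_le]
    refine le_trans (Polynomial.degree_sum_le _ _) ?_
    apply Finset.sup_le
    intro v _
    rw [Polynomial.degree_mul]
    have h1 : (Q v).degree ≤ ((v : WithBot ℕ) + 1) := by
      refine le_trans (Polynomial.degree_le_natDegree) ?_
      have := hQdeg v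
      exact_mod_cast Nat.cast_le.mpr this
    refine le_trans (add_le_add_right h1 _) ?_
    have h2 := hTD v
    calc (PP.coeff v).degree + ((v : WithBot ℕ) + 1)
        = ((PP.coeff v).degree + (v : WithBot ℕ)) + 1 := by rw [add_assoc]
      _ ≤ ((∑ i, h i : ℕ) : WithBot ℕ) + 1 := add_le_add_left h2 _
      _ = (((∑ i, h i) + 1 : ℕ) : WithBot ℕ) := by push_cast; rfl
  · apply Polynomial.natDegree_sum_le_of_forall_le
    intro v _
    refine le_trans (Polynomial.natDegree_smul_le _ _) ?_
    rw [Polynomial.natDegree_le_iff_degree_le]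
    exact hDX v
  · intro n
    have hstep1 : ∀ j : ℕ, (∏ i, ((s i * n + t i * j + cc i : ℤ) : ℂ) ^ h i) * ρ ^ j =
        ∑ v ∈ Finset.range (N + 1), ((PP.coeff v).eval (n : ℂ) * ((j : ℂ) ^ v * ρ ^ j)) := by
      intro j
      rw [← heval n j]
      have h4 : PP.eval (C (j : ℂ)) = ∑ v ∈ Finset.range (N + 1), PP.coeff v * (C (j : ℂ)) ^ v := by
        rw [hN, Polynomial.eval_eq_sum_range]
      rw [h4, Polynomial.eval_finset_sum, Finset.sum_mul]
      apply Finset.sum_congr rfl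
      intro v _
      rw [Polynomial.eval_mul, Polynomial.eval_pow, Polynomial.eval_C]
      ring
    rw [Finset.sum_congr rfl (fun j _ => hstep1 j), Finset.sum_comm]
    have hstep2 : ∀ v ∈ Finset.range (N + 1),
        ∑ j ∈ Finset.range n, (PP.coeff v).eval (n : ℂ) * ((j : ℂ) ^ v * ρ ^ j) =
        (PP.coeff v).eval (n : ℂ) * ((Q v).eval (n : ℂ) * ρ ^ n - (Q v).eval 0) := by
      intro v _
      rw [← Finset.mul_sum, hQsum v n]
    rw [Finset.sum_congr rfl hstep2]
    rw [Polynomial.eval_finset_sum, Polynomial.eval_finset_sum, Finset.sum_mul, ← Finset.sum_add_distrib]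
    apply Finset.sum_congr rfl
    intro v _
    rw [Polynomial.eval_mul, Polynomial.eval_smul]
    simp only [smul_eq_mul]
    ring
set_option maxHeartbeats 1000000 in
open Classical in
/-- **Theorem 7.1** (th:mpl) of Greene–Wilf, the principal result: closed form
for sums of products of possibly different C-finite sequences, with multiple
roots allowed. -/
theorem closed_form_general_thmmpl
    (k : ℕ) (hk : 1 ≤ k)
    (d : Fin k → ℕ) (hd : ∀ i, 1 ≤ d i)
    (r : (i : Fin k) → Fin (d i) → ℂ) (e : (i : Fin k) → Fin (d i) → ℕ)
    (lam : (i : Fin k) → Fin (d i) → ℕ → ℂ)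
    (hr_inj : ∀ i, Function.Injective (r i)) (hr0 : ∀ i m, r i m ≠ 0)
    (he : ∀ i m, 1 ≤ e i m) (hlam : ∀ i m, lam i m (e i m - 1) ≠ 0)
    (F : Fin k → ℤ → ℂ)
    (hF : ∀ i, ∀ n : ℤ, F i n = ∑ m : Fin (d i), ∑ h ∈ Finset.range (e i m),
      lam i m h * (n : ℂ) ^ h * r i m ^ n)
    (D : Fin k → ℕ) (hD : ∀ i, D i = ∑ m, e i m)
    (Δ : Fin k → ℕ) (hΔ : ∀ i, Δ i = Finset.univ.sup (fun m => e i m - 1))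
    (a b c : Fin k → ℤ) (ha : ∀ i, 0 ≤ a i) (hab : ∀ i, 0 ≤ a i + b i)
    (f : ℕ → ℂ)
    (hf : ∀ n : ℕ, f n = ∑ j ∈ Finset.range n,
      ∏ i : Fin k, F i (a i * n + b i * j + c i))
    (β : ℕ)
    (hβ : β = if (∀ g : (i : Fin k) → Fin (d i), ∏ i, r i (g i) ^ (b i) ≠ 1)
      then 0
      else 1 + ∑ i ∈ Finset.univ.filter (fun i => a i = 0), Δ i) :
    ∃ (α : ((ν : Fin k) → Fin (D ν)) → ℂ)
      (ψ : ((ν : Fin k) → Fin (D ν)) → Polynomial ℂ),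
      (∀ idx, (ψ idx).natDegree ≤ β) ∧
      ∀ n : ℕ, f n =
        (∑ idx : (ν : Fin k) → Fin (D ν), α idx *
          ∏ ν : Fin k, F ν ((a ν + b ν) * n + (idx ν : ℤ)))
        + ∑ idx : (ν : Fin k) → Fin (D ν), (ψ idx).eval (n : ℂ) *
          ∏ ν : Fin k, F ν (a ν * n + (idx ν : ℤ)) := by
  have hβbig : ∀ g : (i : Fin k) → Fin (d i), (∏ i, r i (g i) ^ (b i)) = 1 →
      β = 1 + ∑ i ∈ Finset.univ.filter (fun i => a i = 0), Δ i := by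
    intro g hg
    rw [hβ, if_neg]
    push_neg
    exact ⟨g, hg⟩
  clear hβ
  -- per-coordinate box-span facts
  have hbox := fun ν => boxSpan (hd ν) (r ν) (e ν) (lam ν) (hr_inj ν) (hr0 ν) (he ν)
    (hlam ν) (F ν) (hF ν) (D ν) (hD ν)
  have hmono : ∀ ν (m : Fin (d ν)) (h : ℕ), h < e ν m →
      (fun n : ℤ => (n : ℂ) ^ h * r ν m ^ n) ∈
        Submodule.span ℂ (Set.range fun i : Fin (D ν) => fun n : ℤ => F ν (n + (i : ℤ))) :=
    fun ν => (hbox ν).2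
  -- the big span lemma
  have SPAN : ∀ (s : Fin k → ℤ) (g : (i : Fin k) → Fin (d i)) (w : ℕ),
      w ≤ ∑ i ∈ Finset.univ.filter (fun i => s i ≠ 0), (e i (g i) - 1) →
      (fun n : ℕ => (n : ℂ) ^ w * ∏ ν, r ν (g ν) ^ (s ν * (n : ℤ))) ∈
        Submodule.span ℂ (Set.range fun idx : (ν : Fin k) → Fin (D ν) =>
          fun n : ℕ => ∏ ν, F ν (s ν * (n : ℤ) + (idx ν : ℤ))) := by
    intro s g w hw
    obtain ⟨φ, hφcap, hφ0, hφsum⟩ :=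
      cap_decomp (fun i => e i (g i) - 1) (Finset.univ.filter (fun i => s i ≠ 0)) w hw
    have hφe : ∀ ν, φ ν < e ν (g ν) := by
      intro ν
      have h1 : φ ν ≤ e ν (g ν) - 1 := hφcap ν
      have h2 := he ν (g ν)
      omega
    have hcoef : ∀ ν, ∃ cf : Fin (D ν) → ℂ,
        (∑ i, cf i • fun m : ℤ => F ν (m + (i : ℤ))) =
          fun m : ℤ => (m : ℂ) ^ (φ ν) * r ν (g ν) ^ m :=
      fun ν => (Submodule.mem_span_range_iff_exists_fun ℂ).mp (hmono ν (g ν) (φ ν) (hφe ν))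
    choose cf hcf using hcoef
    have hpt : ∀ (ν) (n : ℕ), ∑ i, cf ν i * F ν (s ν * (n : ℤ) + (i : ℤ)) =
        ((s ν * (n : ℤ) : ℤ) : ℂ) ^ (φ ν) * r ν (g ν) ^ (s ν * (n : ℤ)) := by
      intro ν n
      have h1 := congrFun (hcf ν) (s ν * (n : ℤ))
      simpa using h1
    set K : ℂ := ∏ ν, ((s ν : ℤ) : ℂ) ^ (φ ν) with hK
    have hK0 : K ≠ 0 := by
      rw [hK]
      apply Finset.prod_ne_zero_iff.mpr
      intro ν _
      by_cases hs : s ν = 0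
      · have hφν : φ ν = 0 := hφ0 ν (by simp [hs])
        rw [hφν, pow_zero]
        exact one_ne_zero
      · exact pow_ne_zero _ (Int.cast_ne_zero.mpr hs)
    have hφw : ∑ ν, φ ν = w := by
      rw [← hφsum]
      exact (Finset.sum_subset (Finset.filter_subset _ _) (fun i _ hi => hφ0 i hi)).symm
    have hkey : (fun n : ℕ => (n : ℂ) ^ w * ∏ ν, r ν (g ν) ^ (s ν * (n : ℤ))) =
        K⁻¹ • ∑ idx : (ν : Fin k) → Fin (D ν), (∏ ν, cf ν (idx ν)) •
          fun n : ℕ => ∏ ν, F ν (s ν * (n : ℤ) + (idx ν : ℤ)) := by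
      funext n
      have h1 : ∏ ν, (∑ i, cf ν i * F ν (s ν * (n : ℤ) + (i : ℤ))) =
          ∑ idx : (ν : Fin k) → Fin (D ν), (∏ ν, cf ν (idx ν)) *
            ∏ ν, F ν (s ν * (n : ℤ) + (idx ν : ℤ)) := by
        rw [Finset.prod_univ_sum]
        rw [Fintype.piFinset_univ]
        apply Finset.sum_congr rfl
        intro idx _
        rw [Finset.prod_mul_distrib]
      have h2 : ∏ ν, (∑ i, cf ν i * F ν (s ν * (n : ℤ) + (i : ℤ))) =
          K * ((n : ℂ) ^ w * ∏ ν, r ν (g ν) ^ (s ν * (n : ℤ))) := by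
        rw [Finset.prod_congr rfl (fun ν _ => hpt ν n)]
        have h3 : ∀ ν : Fin k, ((s ν * (n : ℤ) : ℤ) : ℂ) ^ (φ ν) * r ν (g ν) ^ (s ν * (n : ℤ)) =
            (((s ν : ℤ) : ℂ) ^ (φ ν) * (n : ℂ) ^ (φ ν)) * r ν (g ν) ^ (s ν * (n : ℤ)) := by
          intro ν
          congr 1
          rw [← mul_pow]
          congr 1
          push_cast
          ring
        rw [Finset.prod_congr rfl (fun ν _ => h3 ν), Finset.prod_mul_distrib,
          Finset.prod_mul_distrib, hK, Finset.prod_pow_eq_pow_sum, hφw]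
        ring
      rw [Pi.smul_apply, Finset.sum_apply]
      simp only [Pi.smul_apply, smul_eq_mul]
      rw [← h1, h2]
      rw [← mul_assoc, inv_mul_cancel₀ hK0, one_mul]
    rw [hkey]
    refine Submodule.smul_mem _ _ (Submodule.sum_mem _ ?_)
    intro idx _
    exact Submodule.smul_mem _ _ (Submodule.subset_span ⟨idx, rfl⟩)
  -- the two target submodules
  set MA : Submodule ℂ (ℕ → ℂ) := Submodule.span ℂ
    (Set.range fun idx : (ν : Fin k) → Fin (D ν) =>
      fun n : ℕ => ∏ ν, F ν ((a ν + b ν) * (n : ℤ) + (idx ν : ℤ))) with hMA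
  set MB : Submodule ℂ (ℕ → ℂ) := Submodule.span ℂ
    (Set.range fun p : Fin (β + 1) × ((ν : Fin k) → Fin (D ν)) =>
      fun n : ℕ => (n : ℂ) ^ (p.1 : ℕ) * ∏ ν, F ν (a ν * (n : ℤ) + (p.2 ν : ℤ))) with hMB
  -- multiplication by n^w' sends the a-span into MB
  have MULX : ∀ (w' : ℕ), w' ≤ β → ∀ G : ℕ → ℂ,
      G ∈ Submodule.span ℂ (Set.range fun idx : (ν : Fin k) → Fin (D ν) =>
        fun n : ℕ => ∏ ν, F ν (a ν * (n : ℤ) + (idx ν : ℤ))) →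
      (fun n : ℕ => (n : ℂ) ^ w' * G n) ∈ MB := by
    intro w' hw' G hG
    induction hG using Submodule.span_induction with
    | mem g hg =>
      obtain ⟨idx, rfl⟩ := hg
      exact Submodule.subset_span ⟨(⟨w', by omega⟩, idx), rfl⟩
    | zero =>
      have : (fun n : ℕ => (n : ℂ) ^ w' * (0 : ℕ → ℂ) n) = 0 := by funext n; simp
      rw [this]; exact Submodule.zero_mem _
    | add g g' _ _ ihg ihg' =>
      have : (fun n : ℕ => (n : ℂ) ^ w' * (g + g') n) =
          (fun n : ℕ => (n : ℂ) ^ w' * g n) + fun n : ℕ => (n : ℂ) ^ w' * g' n := by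
        funext n; simp [Pi.add_apply]; ring
      rw [this]; exact Submodule.add_mem _ ihg ihg'
    | smul cc g _ ihg =>
      have : (fun n : ℕ => (n : ℂ) ^ w' * (cc • g) n) =
          cc • fun n : ℕ => (n : ℂ) ^ w' * g n := by
        funext n; simp [Pi.smul_apply, smul_eq_mul]; ring
      rw [this]; exact Submodule.smul_mem _ _ ihg
  -- polynomial-coefficient versions
  have ALPHA : ∀ (g : (i : Fin k) → Fin (d i)) (Θ : Polynomial ℂ),
      Θ.natDegree ≤ ∑ i ∈ Finset.univ.filter (fun i => a i + b i ≠ 0), (e i (g i) - 1) →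
      (fun n : ℕ => Θ.eval (n : ℂ) * ∏ ν, r ν (g ν) ^ ((a ν + b ν) * (n : ℤ))) ∈ MA := by
    intro g Θ hΘ
    have hdecomp : (fun n : ℕ => Θ.eval (n : ℂ) * ∏ ν, r ν (g ν) ^ ((a ν + b ν) * (n : ℤ))) =
        ∑ w ∈ Finset.range (Θ.natDegree + 1), Θ.coeff w •
          fun n : ℕ => (n : ℂ) ^ w * ∏ ν, r ν (g ν) ^ ((a ν + b ν) * (n : ℤ)) := by
      funext n
      rw [Finset.sum_apply]
      simp only [Pi.smul_apply, smul_eq_mul]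
      rw [Polynomial.eval_eq_sum_range, Finset.sum_mul]
      apply Finset.sum_congr rfl
      intro w _
      ring
    rw [hdecomp]
    apply Submodule.sum_mem
    intro w hwmem
    apply Submodule.smul_mem
    have hwle : w ≤ ∑ i ∈ Finset.univ.filter (fun i => a i + b i ≠ 0), (e i (g i) - 1) := by
      simp only [Finset.mem_range] at hwmem
      omega
    exact SPAN (fun i => a i + b i) g w hwle
  have PSI : ∀ (g : (i : Fin k) → Fin (d i)) (Θ : Polynomial ℂ),
      Θ.natDegree ≤ β + ∑ i ∈ Finset.univ.filter (fun i => a i ≠ 0), (e i (g i) - 1) →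
      (fun n : ℕ => Θ.eval (n : ℂ) * ∏ ν, r ν (g ν) ^ (a ν * (n : ℤ))) ∈ MB := by
    intro g Θ hΘ
    have hdecomp : (fun n : ℕ => Θ.eval (n : ℂ) * ∏ ν, r ν (g ν) ^ (a ν * (n : ℤ))) =
        ∑ w ∈ Finset.range (Θ.natDegree + 1), Θ.coeff w •
          fun n : ℕ => (n : ℂ) ^ w * ∏ ν, r ν (g ν) ^ (a ν * (n : ℤ)) := by
      funext n
      rw [Finset.sum_apply]
      simp only [Pi.smul_apply, smul_eq_mul]
      rw [Polynomial.eval_eq_sum_range, Finset.sum_mul]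
      apply Finset.sum_congr rfl
      intro w _
      ring
    rw [hdecomp]
    apply Submodule.sum_mem
    intro w hwmem
    apply Submodule.smul_mem
    simp only [Finset.mem_range] at hwmem
    set capS := ∑ i ∈ Finset.univ.filter (fun i => a i ≠ 0), (e i (g i) - 1) with hcapS
    have hwle : w ≤ β + capS := by omega
    have hsplitw : (fun n : ℕ => (n : ℂ) ^ w * ∏ ν, r ν (g ν) ^ (a ν * (n : ℤ))) =
        fun n : ℕ => (n : ℂ) ^ (w - min w capS) *
          ((n : ℂ) ^ (min w capS) * ∏ ν, r ν (g ν) ^ (a ν * (n : ℤ))) := by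
      funext n
      rw [← mul_assoc, ← pow_add]
      congr 2
      omega
    rw [hsplitw]
    exact MULX (w - min w capS) (by omega) _ (SPAN a g (min w capS) (min_le_right _ _))
  -- filters with ¬ vs ≠ coincide
  have hfilter_a : (Finset.univ.filter (fun i : Fin k => ¬ a i = 0)) =
      (Finset.univ.filter (fun i : Fin k => a i ≠ 0)) := by
    apply Finset.filter_congr
    intro i _
    simp [ne_eq]
  -- the per-term membership
  have TERM : ∀ (g : (i : Fin k) → Fin (d i)) (hh : Fin k → ℕ), (∀ i, hh i < e i (g i)) →
      (fun n : ℕ => ∑ j ∈ Finset.range n, ∏ i,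
        (lam i (g i) (hh i) * ((a i * (n : ℤ) + b i * (j : ℤ) + c i : ℤ) : ℂ) ^ (hh i) *
          r i (g i) ^ (a i * (n : ℤ) + b i * (j : ℤ) + c i))) ∈ MA ⊔ MB := by
    intro g hh hhe
    set lamP : ℂ := ∏ i, lam i (g i) (hh i) with hlamP
    set ρg : ℂ := ∏ i, r i (g i) ^ (b i) with hρg
    set yv : ℂ := ∏ i, r i (g i) ^ (a i) with hyv
    set xv : ℂ := ∏ i, r i (g i) ^ (a i + b i) with hxv
    set μv : ℂ := ∏ i, r i (g i) ^ (c i) with hμv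
    set μv' : ℂ := ∏ i, r i (g i) ^ (c i - b i) with hμv'
    have hρg0 : ρg ≠ 0 :=
      Finset.prod_ne_zero_iff.mpr (fun i _ => zpow_ne_zero _ (hr0 i (g i)))
    have hyv0 : yv ≠ 0 :=
      Finset.prod_ne_zero_iff.mpr (fun i _ => zpow_ne_zero _ (hr0 i (g i)))
    have hxv0 : xv ≠ 0 :=
      Finset.prod_ne_zero_iff.mpr (fun i _ => zpow_ne_zero _ (hr0 i (g i)))
    have hxyρ : xv = yv * ρg := by
      rw [hxv, hyv, hρg, ← Finset.prod_mul_distrib]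
      exact Finset.prod_congr rfl (fun i _ => zpow_add₀ (hr0 i (g i)) _ _)
    have hxn : ∀ n : ℕ, xv ^ n = yv ^ n * ρg ^ n := fun n => by rw [hxyρ, mul_pow]
    have hpow : ∀ (u : Fin k → ℤ) (n : ℕ),
        ∏ i, r i (g i) ^ (u i * (n : ℤ)) = (∏ i, r i (g i) ^ (u i)) ^ n := by
      intro u n
      rw [← Finset.prod_pow]
      refine Finset.prod_congr rfl (fun i _ => ?_)
      rw [← zpow_natCast (r i (g i) ^ (u i)) n, ← zpow_mul]
    have hexpand_term : ∀ (aa bb cc : Fin k → ℤ) (n j : ℕ),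
        ∏ i, (lam i (g i) (hh i) * ((aa i * (n : ℤ) + bb i * (j : ℤ) + cc i : ℤ) : ℂ) ^ hh i *
          r i (g i) ^ (aa i * (n : ℤ) + bb i * (j : ℤ) + cc i)) =
        lamP * ((∏ i, ((aa i * (n : ℤ) + bb i * (j : ℤ) + cc i : ℤ) : ℂ) ^ hh i) *
          (∏ i, r i (g i) ^ (bb i)) ^ j) *
          ((∏ i, r i (g i) ^ (cc i)) * (∏ i, r i (g i) ^ (aa i)) ^ n) := by
      intro aa bb cc n j
      rw [Finset.prod_mul_distrib, Finset.prod_mul_distrib]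
      have hsplit : ∏ i, r i (g i) ^ (aa i * (n : ℤ) + bb i * (j : ℤ) + cc i) =
          ((∏ i, r i (g i) ^ (aa i)) ^ n) * ((∏ i, r i (g i) ^ (bb i)) ^ j) *
            (∏ i, r i (g i) ^ (cc i)) := by
        have h1 : ∀ i : Fin k, r i (g i) ^ (aa i * (n : ℤ) + bb i * (j : ℤ) + cc i) =
            r i (g i) ^ (aa i * (n : ℤ)) * r i (g i) ^ (bb i * (j : ℤ)) *
              r i (g i) ^ (cc i) := by
          intro i
          rw [← zpow_add₀ (hr0 i (g i)), ← zpow_add₀ (hr0 i (g i))]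
        rw [Finset.prod_congr rfl (fun i _ => h1 i), Finset.prod_mul_distrib,
          Finset.prod_mul_distrib, hpow aa n, hpow bb j]
      rw [hsplit, hlamP]
      ring
    obtain ⟨Φ₁, Ψ₁, hΦ₁d, hΨ₁d, hG1⟩ := GEN a b c hh ρg
    have hform1 : ∀ n : ℕ,
        (∑ j ∈ Finset.range n, ∏ i,
          (lam i (g i) (hh i) * ((a i * (n : ℤ) + b i * (j : ℤ) + c i : ℤ) : ℂ) ^ (hh i) *
            r i (g i) ^ (a i * (n : ℤ) + b i * (j : ℤ) + c i))) =
        (lamP * μv) * (Φ₁.eval (n : ℂ) * xv ^ n) + (lamP * μv) * (Ψ₁.eval (n : ℂ) * yv ^ n) := by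
      intro n
      rw [Finset.sum_congr rfl (fun j _ => hexpand_term a b c n j)]
      rw [← Finset.sum_mul, ← Finset.mul_sum, ← hρg, ← hyv, ← hμv, hG1 n, hxn n]
      ring
    rcases eq_or_ne ρg 1 with hρ1 | hρ1
    · -- merged case
      have hβval : β = 1 + ∑ i ∈ Finset.univ.filter (fun i => a i = 0), Δ i :=
        hβbig g (by rw [← hρg]; exact hρ1)
      set Θ : Polynomial ℂ := (lamP * μv) • (Φ₁ + Ψ₁) with hΘ
      have hΘd : Θ.natDegree ≤ β + ∑ i ∈ Finset.univ.filter (fun i => a i ≠ 0), (e i (g i) - 1) := by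
        refine le_trans (Polynomial.natDegree_smul_le _ _)
          (le_trans (Polynomial.natDegree_add_le _ _) ?_)
        have harith : (∑ i, hh i) + 1 ≤ β + ∑ i ∈ Finset.univ.filter (fun i => a i ≠ 0), (e i (g i) - 1) := by
          rw [hβval]
          have hsplit := Finset.sum_filter_add_sum_filter_not Finset.univ (fun i => a i = 0) hh
          have h1 : ∑ i ∈ Finset.univ.filter (fun i => a i = 0), hh i ≤
              ∑ i ∈ Finset.univ.filter (fun i => a i = 0), Δ i := by
            apply Finset.sum_le_sum
            intro i _
            rw [hΔ i]
            have h3 : hh i ≤ e i (g i) - 1 := by have := hhe i; omega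
            exact le_trans h3 (Finset.le_sup (f := fun m => e i m - 1) (Finset.mem_univ (g i)))
          have h2 : ∑ i ∈ Finset.univ.filter (fun i => ¬ a i = 0), hh i ≤
              ∑ i ∈ Finset.univ.filter (fun i => a i ≠ 0), (e i (g i) - 1) := by
            rw [hfilter_a]
            apply Finset.sum_le_sum
            intro i _
            have := hhe i
            omega
          omega
        have hb2 : Ψ₁.natDegree ≤ β + ∑ i ∈ Finset.univ.filter (fun i => a i ≠ 0), (e i (g i) - 1) := by
          refine le_trans hΨ₁d ?_
          refine le_trans ?_ (Nat.le_add_left _ β)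
          apply Finset.sum_le_sum
          intro i _
          have := hhe i
          omega
        exact max_le (le_trans hΦ₁d harith) hb2
      have hfun : (fun n : ℕ => ∑ j ∈ Finset.range n, ∏ i,
          (lam i (g i) (hh i) * ((a i * (n : ℤ) + b i * (j : ℤ) + c i : ℤ) : ℂ) ^ (hh i) *
            r i (g i) ^ (a i * (n : ℤ) + b i * (j : ℤ) + c i))) =
          fun n : ℕ => Θ.eval (n : ℂ) * ∏ ν, r ν (g ν) ^ (a ν * (n : ℤ)) := by
        funext n
        rw [hform1 n, hpow a n, ← hyv]
        have hxy1 : xv = yv := by rw [hxyρ, hρ1, mul_one]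
        rw [hxy1, hΘ]
        simp only [Polynomial.eval_smul, Polynomial.eval_add, smul_eq_mul]
        ring
      rw [hfun]
      exact Submodule.mem_sup_right (PSI g Θ hΘd)
    · -- two-exponential case
      obtain ⟨Φ₂, Ψ₂, hΦ₂d, hΨ₂d, hG2⟩ :=
        GEN (fun i => a i + b i) (fun i => -b i) (fun i => c i - b i) hh ρg⁻¹
      have hρinv : ∏ i, r i (g i) ^ (-b i) = ρg⁻¹ := by
        rw [hρg, ← Finset.prod_inv_distrib]
        exact Finset.prod_congr rfl (fun i _ => zpow_neg _ _)
      have hform2 : ∀ n : ℕ,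
          (∑ j ∈ Finset.range n, ∏ i,
            (lam i (g i) (hh i) * ((a i * (n : ℤ) + b i * (j : ℤ) + c i : ℤ) : ℂ) ^ (hh i) *
              r i (g i) ^ (a i * (n : ℤ) + b i * (j : ℤ) + c i))) =
          (lamP * μv') * (Φ₂.eval (n : ℂ) * yv ^ n) + (lamP * μv') * (Ψ₂.eval (n : ℂ) * xv ^ n) := by
        intro n
        rw [← Finset.sum_range_reflect]
        have hre : ∀ j ∈ Finset.range n,
            (∏ i, (lam i (g i) (hh i) *
              ((a i * (n : ℤ) + b i * ((n - 1 - j : ℕ) : ℤ) + c i : ℤ) : ℂ) ^ (hh i) *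
              r i (g i) ^ (a i * (n : ℤ) + b i * ((n - 1 - j : ℕ) : ℤ) + c i))) =
            lamP * ((∏ i, (((a i + b i) * (n : ℤ) + (-b i) * (j : ℤ) + (c i - b i) : ℤ) : ℂ) ^ hh i) *
              (ρg⁻¹) ^ j) * (μv' * xv ^ n) := by
          intro j hj
          have hj' : j < n := Finset.mem_range.mp hj
          have hcast : ((n - 1 - j : ℕ) : ℤ) = (n : ℤ) - 1 - j := by omega
          have hidx : ∀ i : Fin k, a i * (n : ℤ) + b i * ((n - 1 - j : ℕ) : ℤ) + c i =
              (a i + b i) * (n : ℤ) + (-b i) * (j : ℤ) + (c i - b i) := by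
            intro i; rw [hcast]; ring
          have hbody : (∏ i, (lam i (g i) (hh i) *
              ((a i * (n : ℤ) + b i * ((n - 1 - j : ℕ) : ℤ) + c i : ℤ) : ℂ) ^ (hh i) *
              r i (g i) ^ (a i * (n : ℤ) + b i * ((n - 1 - j : ℕ) : ℤ) + c i))) =
              ∏ i, (lam i (g i) (hh i) *
              (((a i + b i) * (n : ℤ) + (-b i) * (j : ℤ) + (c i - b i) : ℤ) : ℂ) ^ (hh i) *
              r i (g i) ^ ((a i + b i) * (n : ℤ) + (-b i) * (j : ℤ) + (c i - b i))) := by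
            apply Finset.prod_congr rfl
            intro i _
            rw [hidx i]
          rw [hbody, hexpand_term (fun i => a i + b i) (fun i => -b i) (fun i => c i - b i) n j]
          rw [hρinv, ← hμv', ← hxv]
        rw [Finset.sum_congr rfl hre]
        rw [← Finset.sum_mul, ← Finset.mul_sum, hG2 n]
        have hxρn : xv ^ n * (ρg⁻¹) ^ n = yv ^ n := by
          rw [← mul_pow, hxyρ, mul_assoc, mul_inv_cancel₀ hρg0, mul_one]
        have hexpand : lamP * (Φ₂.eval (n : ℂ) * (ρg⁻¹) ^ n + Ψ₂.eval (n : ℂ)) * (μv' * xv ^ n) =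
            (lamP * μv') * (Φ₂.eval (n : ℂ) * (xv ^ n * (ρg⁻¹) ^ n)) +
              (lamP * μv') * (Ψ₂.eval (n : ℂ) * xv ^ n) := by ring
        rw [hexpand, hxρn]
      have hxney : xv ≠ yv := by
        intro hc
        apply hρ1
        have h9 : yv * ρg = yv * 1 := by rw [mul_one, ← hxyρ]; exact hc
        exact mul_left_cancel₀ hyv0 h9
      have hPQ : ∀ n : ℕ, ((lamP * μv) • Φ₁ - (lamP * μv') • Ψ₂).eval (n : ℂ) * xv ^ n +
          ((lamP * μv) • Ψ₁ - (lamP * μv') • Φ₂).eval (n : ℂ) * yv ^ n = 0 := by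
        intro n
        have h1 := hform1 n
        have h2 := hform2 n
        simp only [Polynomial.eval_sub, Polynomial.eval_smul, smul_eq_mul]
        linear_combination h2 - h1
      obtain ⟨hP0, hQ0⟩ := indep2 xv yv hxv0 hyv0 hxney _ _ hPQ
      have hPeq : (lamP * μv) • Φ₁ = (lamP * μv') • Ψ₂ := by rwa [sub_eq_zero] at hP0
      have hsplitfun : (fun n : ℕ => ∑ j ∈ Finset.range n, ∏ i,
          (lam i (g i) (hh i) * ((a i * (n : ℤ) + b i * (j : ℤ) + c i : ℤ) : ℂ) ^ (hh i) *
            r i (g i) ^ (a i * (n : ℤ) + b i * (j : ℤ) + c i))) =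
          (fun n : ℕ => ((lamP * μv') • Ψ₂).eval (n : ℂ) *
            ∏ ν, r ν (g ν) ^ ((a ν + b ν) * (n : ℤ))) +
          fun n : ℕ => ((lamP * μv) • Ψ₁).eval (n : ℂ) *
            ∏ ν, r ν (g ν) ^ (a ν * (n : ℤ)) := by
        funext n
        rw [Pi.add_apply, hform1 n, hpow a n, hpow (fun i => a i + b i) n, ← hyv, ← hxv]
        have hPeval := congrArg (Polynomial.eval ((n : ℕ) : ℂ)) hPeq
        simp only [Polynomial.eval_smul, smul_eq_mul] at hPeval ⊢
        linear_combination hPeval * xv ^ n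
      rw [hsplitfun]
      refine Submodule.add_mem _ (Submodule.mem_sup_left (ALPHA g _ ?_))
        (Submodule.mem_sup_right (PSI g _ ?_))
      · refine le_trans (Polynomial.natDegree_smul_le _ _) (le_trans hΨ₂d ?_)
        apply Finset.sum_le_sum
        intro i _
        have := hhe i
        omega
      · refine le_trans (Polynomial.natDegree_smul_le _ _) (le_trans hΨ₁d ?_)
        refine le_trans ?_ (Nat.le_add_left _ β)
        apply Finset.sum_le_sum
        intro i _
        have := hhe i
        omega
  -- expansion of f as a sum of TERM functions
  have hfmem : (fun n : ℕ => f n) ∈ MA ⊔ MB := by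
    have hfeq : (fun n : ℕ => f n) =
        ∑ g ∈ Fintype.piFinset (fun i : Fin k => (Finset.univ : Finset (Fin (d i)))),
          ∑ hh ∈ Fintype.piFinset (fun i : Fin k => Finset.range (e i (g i))),
            fun n : ℕ => ∑ j ∈ Finset.range n, ∏ i,
              (lam i (g i) (hh i) * ((a i * (n : ℤ) + b i * (j : ℤ) + c i : ℤ) : ℂ) ^ (hh i) *
                r i (g i) ^ (a i * (n : ℤ) + b i * (j : ℤ) + c i)) := by
      funext n
      rw [hf n]
      rw [Finset.sum_apply]
      have hinner : ∀ g : (i : Fin k) → Fin (d i), (∑ hh ∈ Fintype.piFinset (fun i : Fin k => Finset.range (e i (g i))),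
          fun n : ℕ => ∑ j ∈ Finset.range n, ∏ i,
            (lam i (g i) (hh i) * ((a i * (n : ℤ) + b i * (j : ℤ) + c i : ℤ) : ℂ) ^ (hh i) *
              r i (g i) ^ (a i * (n : ℤ) + b i * (j : ℤ) + c i))) n =
          ∑ hh ∈ Fintype.piFinset (fun i : Fin k => Finset.range (e i (g i))),
            ∑ j ∈ Finset.range n, ∏ i,
              (lam i (g i) (hh i) * ((a i * (n : ℤ) + b i * (j : ℤ) + c i : ℤ) : ℂ) ^ (hh i) *
                r i (g i) ^ (a i * (n : ℤ) + b i * (j : ℤ) + c i)) := by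
        intro g
        rw [Finset.sum_apply]
      rw [Finset.sum_congr rfl (fun g _ => hinner g)]
      have hswap : ∀ j ∈ Finset.range n,
          ∏ i, F i (a i * (n : ℤ) + b i * (j : ℤ) + c i) =
          ∑ g ∈ Fintype.piFinset (fun i : Fin k => (Finset.univ : Finset (Fin (d i)))),
            ∑ hh ∈ Fintype.piFinset (fun i : Fin k => Finset.range (e i (g i))),
              ∏ i, (lam i (g i) (hh i) *
                ((a i * (n : ℤ) + b i * (j : ℤ) + c i : ℤ) : ℂ) ^ (hh i) *
                r i (g i) ^ (a i * (n : ℤ) + b i * (j : ℤ) + c i)) := by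
        intro j _
        rw [Finset.prod_congr rfl (fun i _ => hF i (a i * (n : ℤ) + b i * (j : ℤ) + c i))]
        rw [Finset.prod_univ_sum]
        apply Finset.sum_congr rfl
        intro g _
        rw [Finset.prod_univ_sum]
      rw [Finset.sum_congr rfl hswap]
      rw [Finset.sum_comm]
      apply Finset.sum_congr rfl
      intro g _
      rw [Finset.sum_comm]
    rw [hfeq]
    refine Submodule.sum_mem _ ?_
    intro g _
    refine Submodule.sum_mem _ ?_
    intro hh hhmem
    refine TERM g hh ?_
    intro i
    have h1 := (Fintype.mem_piFinset.mp hhmem) i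
    simpa using h1
  -- extraction
  obtain ⟨gA, hgA, gB, hgB, hgAB⟩ := Submodule.mem_sup.mp hfmem
  obtain ⟨αc, hαc⟩ := (Submodule.mem_span_range_iff_exists_fun ℂ).mp hgA
  obtain ⟨βc, hβc⟩ := (Submodule.mem_span_range_iff_exists_fun ℂ).mp hgB
  refine ⟨αc, fun idx => ∑ w : Fin (β + 1), Polynomial.C (βc (w, idx)) * Polynomial.X ^ (w : ℕ),
    ?_, ?_⟩
  · intro idx
    apply Polynomial.natDegree_sum_le_of_forall_le
    intro w _
    refine le_trans (Polynomial.natDegree_mul_le) ?_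
    have hw := w.isLt
    simp only [Polynomial.natDegree_C, Polynomial.natDegree_X_pow, zero_add]
    omega
  · intro n
    have h0 : f n = gA n + gB n := by
      have := congrFun hgAB n
      simpa using this.symm
    have hA : gA n = ∑ idx : (ν : Fin k) → Fin (D ν), αc idx *
        ∏ ν : Fin k, F ν ((a ν + b ν) * (n : ℤ) + (idx ν : ℤ)) := by
      have h1 := congrFun hαc n
      rw [Finset.sum_apply] at h1
      simp only [Pi.smul_apply, smul_eq_mul] at h1
      exact h1.symm
    have hB : gB n = ∑ idx : (ν : Fin k) → Fin (D ν),
        (∑ w : Fin (β + 1), Polynomial.C (βc (w, idx)) * Polynomial.X ^ (w : ℕ)).eval (n : ℂ) *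
          ∏ ν : Fin k, F ν (a ν * (n : ℤ) + (idx ν : ℤ)) := by
      have h1 := congrFun hβc n
      rw [Finset.sum_apply] at h1
      simp only [Pi.smul_apply, smul_eq_mul] at h1
      rw [← h1]
      rw [Fintype.sum_prod_type]
      rw [Finset.sum_comm]
      apply Finset.sum_congr rfl
      intro idx _
      rw [Polynomial.eval_finset_sum, Finset.sum_mul]
      apply Finset.sum_congr rfl
      intro w _
      simp only [Polynomial.eval_mul, Polynomial.eval_C, Polynomial.eval_pow, Polynomial.eval_X]
      ring
    rw [h0, hA, hB]
end

section
/- Let x be a complex number and a, b nonnegative integers (with the convention 0^0 = 1). If x ≠ 1, there exist polynomials P, Q ∈ ℂ[X] with deg P ≤ a and deg Q ≤ b such that for all n ≥ 0: Σ_{j=0}^{n−1} j^a (n−j)^b x^j = P(n)·x^n + Q(n). If x = 1, there exists a polynomial R ∈ ℂ[X] with deg R ≤ a+b+1 such that Σ_{j=0}^{n−1} j^a (n−j)^b = R(n) for all n ≥ 0. -/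
open Polynomial Finset

lemma solveA (x : ℂ) (hx : x ≠ 1) : ∀ d : ℕ, ∀ p : Polynomial ℂ, p.natDegree ≤ d →
    ∃ P : Polynomial ℂ, P.natDegree ≤ d ∧ C x * P.comp (X + 1) - P = p := by
  have hx1 : x - 1 ≠ 0 := sub_ne_zero.mpr hx
  intro d
  induction d with
  | zero =>
    intro p hp
    refine ⟨C (p.coeff 0 / (x - 1)), by simp, ?_⟩
    conv_rhs => rw [Polynomial.eq_C_of_natDegree_le_zero hp]
    rw [Polynomial.C_comp, ← C_mul, ← C_sub]
    congr 1
    field_simp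
  | succ d ih =>
    intro p hp
    set c := p.coeff (d+1) with hc
    set P₀ : Polynomial ℂ := C (c / (x - 1)) * X ^ (d+1) with hP0
    set E : Polynomial ℂ := C x * P₀.comp (X + 1) - P₀ with hE
    have hEcoeff : ∀ m : ℕ, E.coeff m
        = c / (x-1) * (x * ((d+1).choose m : ℂ) - (X ^ (d+1) : Polynomial ℂ).coeff m) := by
      intro m
      rw [hE, hP0]
      simp [mul_comp, coeff_X_add_one_pow, coeff_C_mul, mul_sub]
      ring
    have hr : (p - E).natDegree ≤ d := by
      rw [natDegree_le_iff_coeff_eq_zero]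
      intro N hN
      rw [coeff_sub, hEcoeff]
      rcases eq_or_lt_of_le (Nat.succ_le_of_lt hN) with h | h
      · rw [← h]
        simp only [coeff_X_pow, if_pos rfl, Nat.choose_self, Nat.cast_one, mul_one]
        rw [← hc]
        field_simp
        simp
      · rw [coeff_eq_zero_of_natDegree_lt (lt_of_le_of_lt hp h),
          Nat.choose_eq_zero_of_lt h, coeff_X_pow, if_neg (by omega)]
        simp
    obtain ⟨P₁, h1, h2⟩ := ih (p - E) hr
    refine ⟨P₀ + P₁, ?_, ?_⟩
    · apply le_trans (natDegree_add_le _ _)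
      apply max_le
      · apply le_trans (natDegree_C_mul_le _ _)
        simp
      · omega
    · rw [add_comp, mul_add]
      rw [show C x * (P₀.comp (X+1)) + C x * (P₁.comp (X+1)) - (P₀ + P₁)
          = (C x * P₀.comp (X+1) - P₀) + (C x * P₁.comp (X+1) - P₁) by ring, h2, ← hE]
      ring

lemma solveB : ∀ d : ℕ, ∀ p : Polynomial ℂ, p.natDegree ≤ d →
    ∃ q : Polynomial ℂ, q.natDegree ≤ d + 1 ∧ q.comp (X + 1) - q = p := by
  intro d
  induction d with
  | zero =>
    intro p hp
    refine ⟨C (p.coeff 0) * X, ?_, ?_⟩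
    · apply le_trans (natDegree_C_mul_le _ _); simp
    · conv_rhs => rw [Polynomial.eq_C_of_natDegree_le_zero hp]
      rw [mul_comp, C_comp, X_comp]
      ring
  | succ d ih =>
    intro p hp
    set c := p.coeff (d+1) with hc
    have hd2 : ((d:ℂ) + 2) ≠ 0 := by
      have : ((d+2 : ℕ) : ℂ) ≠ 0 := Nat.cast_ne_zero.mpr (by omega)
      push_cast at this; exact this
    set q₀ : Polynomial ℂ := C (c / ((d:ℂ)+2)) * X ^ (d+2) with hq0
    set E : Polynomial ℂ := q₀.comp (X + 1) - q₀ with hE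
    have hEcoeff : ∀ m : ℕ, E.coeff m
        = c / ((d:ℂ)+2) * (((d+2).choose m : ℂ) - (X ^ (d+2) : Polynomial ℂ).coeff m) := by
      intro m
      rw [hE, hq0]
      simp [mul_comp, coeff_X_add_one_pow, coeff_C_mul, mul_sub]
    have hr : (p - E).natDegree ≤ d := by
      rw [natDegree_le_iff_coeff_eq_zero]
      intro N hN
      rw [coeff_sub, hEcoeff]
      rcases eq_or_lt_of_le (Nat.succ_le_of_lt hN) with h | h
      · rw [← h]
        have hch : ((d+2).choose (d+1) : ℂ) = (d:ℂ) + 2 := by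
          rw [show d + 2 = (d+1) + 1 from rfl, Nat.choose_succ_self_right]
          push_cast; ring
        rw [hch, coeff_X_pow, if_neg (by omega), ← hc]
        field_simp
        simp
      · have hpN : p.coeff N = 0 := coeff_eq_zero_of_natDegree_lt (lt_of_le_of_lt hp h)
        rcases eq_or_lt_of_le (Nat.succ_le_of_lt h) with h2 | h2
        · rw [hpN, ← h2]
          simp [Nat.choose_self]
        · rw [hpN, Nat.choose_eq_zero_of_lt h2, coeff_X_pow, if_neg (by omega)]
          simp
    obtain ⟨q₁, h1, h2⟩ := ih (p - E) hr
    refine ⟨q₀ + q₁, ?_, ?_⟩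
    · apply le_trans (natDegree_add_le _ _)
      apply max_le
      · apply le_trans (natDegree_C_mul_le _ _)
        simp
      · omega
    · rw [add_comp]
      rw [show q₀.comp (X+1) + q₁.comp (X+1) - (q₀ + q₁)
          = (q₀.comp (X+1) - q₀) + (q₁.comp (X+1) - q₁) by ring, h2, ← hE]
      ring


lemma sumA (x : ℂ) (hx : x ≠ 1) (p : Polynomial ℂ) :
    ∃ P : Polynomial ℂ, P.natDegree ≤ p.natDegree ∧ ∀ n : ℕ,
      ∑ j ∈ range n, p.eval (j:ℂ) * x ^ j = P.eval (n:ℂ) * x ^ n - P.eval 0 := by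
  obtain ⟨P, hd, hP⟩ := solveA x hx p.natDegree p le_rfl
  refine ⟨P, hd, fun n => ?_⟩
  have key : ∀ j : ℕ, p.eval (j:ℂ) * x ^ j
      = P.eval ((j+1 : ℕ):ℂ) * x ^ (j+1) - P.eval (j:ℂ) * x ^ j := by
    intro j
    have h := congrArg (Polynomial.eval ((j:ℕ):ℂ)) hP
    simp only [eval_sub, eval_mul, eval_C, eval_comp, eval_add, eval_X, eval_one] at h
    rw [← h]
    push_cast
    ring
  calc ∑ j ∈ range n, p.eval (j:ℂ) * x ^ j
      = ∑ j ∈ range n, (P.eval ((j+1 : ℕ):ℂ) * x ^ (j+1) - P.eval (j:ℂ) * x ^ j) :=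
        Finset.sum_congr rfl (fun j _ => key j)
    _ = P.eval (n:ℂ) * x ^ n - P.eval ((0:ℕ):ℂ) * x ^ 0 :=
        Finset.sum_range_sub (fun j => P.eval ((j:ℕ):ℂ) * x ^ j) n
    _ = P.eval (n:ℂ) * x ^ n - P.eval 0 := by simp

lemma sumB (p : Polynomial ℂ) :
    ∃ q : Polynomial ℂ, q.natDegree ≤ p.natDegree + 1 ∧ ∀ n : ℕ,
      ∑ j ∈ range n, p.eval (j:ℂ) = q.eval (n:ℂ) := by
  obtain ⟨q, hd, hq⟩ := solveB p.natDegree p le_rfl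
  refine ⟨q - C (q.eval 0), ?_, fun n => ?_⟩
  · apply le_trans (natDegree_sub_le _ _)
    simp [hd]
  · have key : ∀ j : ℕ, p.eval (j:ℂ) = q.eval ((j+1 : ℕ):ℂ) - q.eval (j:ℂ) := by
      intro j
      have h := congrArg (Polynomial.eval ((j:ℕ):ℂ)) hq
      simp only [eval_sub, eval_comp, eval_add, eval_X, eval_one] at h
      rw [← h]
      push_cast
      ring_nf
    calc ∑ j ∈ range n, p.eval (j:ℂ)
        = ∑ j ∈ range n, (q.eval ((j+1 : ℕ):ℂ) - q.eval (j:ℂ)) :=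
          Finset.sum_congr rfl (fun j _ => key j)
      _ = q.eval (n:ℂ) - q.eval ((0:ℕ):ℂ) := Finset.sum_range_sub (fun j => q.eval ((j:ℕ):ℂ)) n
      _ = (q - C (q.eval 0)).eval (n:ℂ) := by simp

lemma delta_sum (a B : ℕ) (x : ℂ) (n : ℕ) :
    (∑ j ∈ range (n+1), (j:ℂ)^a * (((n+1:ℕ):ℂ) - (j:ℂ))^B * x^j)
      = (∑ j ∈ range n, (j:ℂ)^a * ((n:ℂ) - (j:ℂ))^B * x^j)
        + (n:ℂ)^a * x^n
        + ∑ k ∈ range B, (B.choose k : ℂ) * ∑ j ∈ range n, (j:ℂ)^a * ((n:ℂ) - (j:ℂ))^k * x^j := by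
  rw [Finset.sum_range_succ]
  have hlast : (n:ℂ)^a * (((n+1:ℕ):ℂ) - (n:ℂ))^B * x^n = (n:ℂ)^a * x^n := by
    push_cast; simp
  rw [hlast]
  have hmain : (∑ j ∈ range n, (j:ℂ)^a * (((n+1:ℕ):ℂ) - (j:ℂ))^B * x^j)
      = (∑ j ∈ range n, (j:ℂ)^a * ((n:ℂ) - (j:ℂ))^B * x^j)
        + ∑ j ∈ range n, ∑ k ∈ range B, (B.choose k : ℂ) * ((j:ℂ)^a * ((n:ℂ) - (j:ℂ))^k * x^j) := by
    rw [← Finset.sum_add_distrib]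
    apply Finset.sum_congr rfl
    intro j _
    have hb : (((n+1:ℕ):ℂ) - (j:ℂ))^B = (((n:ℂ) - (j:ℂ)) + 1)^B := by push_cast; ring_nf
    rw [hb, add_pow]
    rw [Finset.sum_range_succ]
    simp only [one_pow, Nat.choose_self, Nat.cast_one, mul_one, Nat.sub_self, pow_zero]
    rw [mul_add, add_mul, add_comm]
    congr 1
    rw [Finset.mul_sum, Finset.sum_mul]
    exact Finset.sum_congr rfl fun k _ => by ring
  rw [hmain, Finset.sum_comm]
  have : ∀ k, ∑ j ∈ range n, (B.choose k : ℂ) * ((j:ℂ)^a * ((n:ℂ) - (j:ℂ))^k * x^j)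
      = (B.choose k : ℂ) * ∑ j ∈ range n, (j:ℂ)^a * ((n:ℂ) - (j:ℂ))^k * x^j := by
    intro k; rw [Finset.mul_sum]
  simp_rw [this]
  ring


lemma claimA (x : ℂ) (hx : x ≠ 1) (a : ℕ) : ∀ b : ℕ,
    ∃ P Q : Polynomial ℂ, P.natDegree ≤ a ∧ Q.natDegree ≤ b ∧
      ∀ n : ℕ, ∑ j ∈ Finset.range n, (j : ℂ) ^ a * ((n : ℂ) - (j : ℂ)) ^ b * x ^ j
        = P.eval (n : ℂ) * x ^ n + Q.eval (n : ℂ) := by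
  intro b
  induction b using Nat.strong_induction_on with
  | _ b ih =>
    match b, ih with
    | 0, _ =>
      obtain ⟨P, hdP, hP⟩ := sumA x hx (X ^ a : Polynomial ℂ)
      refine ⟨P, C (-P.eval 0), le_trans hdP (by simp), by simp, fun n => ?_⟩
      have h := hP n
      simp only [eval_pow, eval_X] at h
      simp only [pow_zero, mul_one, h, eval_C]
      ring
    | B' + 1, ih =>
      have H : ∀ k : ℕ, ∃ P Q : Polynomial ℂ, P.natDegree ≤ a ∧ Q.natDegree ≤ B' ∧
          (k ≤ B' → ∀ n : ℕ, ∑ j ∈ Finset.range n, (j : ℂ) ^ a * ((n : ℂ) - (j : ℂ)) ^ k * x ^ j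
            = P.eval (n : ℂ) * x ^ n + Q.eval (n : ℂ)) := by
        intro k
        by_cases hk : k ≤ B'
        · obtain ⟨P, Q, h1, h2, h3⟩ := ih k (by omega)
          exact ⟨P, Q, h1, le_trans h2 hk, fun _ => h3⟩
        · exact ⟨0, 0, by simp, by simp, fun h => absurd h hk⟩
      choose P Q h1 h2 h3 using H
      set G : Polynomial ℂ := X ^ a + ∑ k ∈ range (B'+1), C (((B'+1).choose k : ℕ) : ℂ) * P k
        with hGdef
      set Hp : Polynomial ℂ := ∑ k ∈ range (B'+1), C (((B'+1).choose k : ℕ) : ℂ) * Q k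
        with hHdef
      have hG : G.natDegree ≤ a := by
        apply le_trans (natDegree_add_le _ _)
        apply max_le (by simp)
        apply natDegree_sum_le_of_forall_le
        intro k _
        exact le_trans (natDegree_C_mul_le _ _) (h1 k)
      have hH : Hp.natDegree ≤ B' := by
        apply natDegree_sum_le_of_forall_le
        intro k _
        exact le_trans (natDegree_C_mul_le _ _) (h2 k)
      set T : ℕ → ℂ := fun n => ∑ j ∈ Finset.range n, (j : ℂ) ^ a * ((n : ℂ) - (j : ℂ)) ^ (B'+1) * x ^ j
        with hTdef
      have hdelta : ∀ m : ℕ, T (m+1) = T m + (G.eval (m:ℂ) * x^m + Hp.eval (m:ℂ)) := by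
        intro m
        rw [hTdef]
        simp only
        rw [delta_sum a (B'+1) x m]
        have hS : ∀ k ∈ range (B'+1),
            (((B'+1).choose k : ℕ) : ℂ) * (∑ j ∈ range m, (j:ℂ)^a * ((m:ℂ)-(j:ℂ))^k * x^j)
            = (((B'+1).choose k : ℕ) : ℂ) * ((P k).eval (m:ℂ) * x^m + (Q k).eval (m:ℂ)) := by
          intro k hk
          rw [h3 k (by simpa using Nat.lt_succ_iff.mp (mem_range.mp hk)) m]
        rw [Finset.sum_congr rfl hS]
        have hsplit : ∑ k ∈ range (B'+1),
            (((B'+1).choose k : ℕ) : ℂ) * ((P k).eval (m:ℂ) * x^m + (Q k).eval (m:ℂ))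
            = (∑ k ∈ range (B'+1), (((B'+1).choose k : ℕ) : ℂ) * (P k).eval (m:ℂ)) * x^m
              + ∑ k ∈ range (B'+1), (((B'+1).choose k : ℕ) : ℂ) * (Q k).eval (m:ℂ) := by
          rw [Finset.sum_mul, ← Finset.sum_add_distrib]
          exact Finset.sum_congr rfl fun k _ => by ring
        rw [hsplit, hGdef, hHdef]
        simp only [eval_add, eval_pow, eval_X, eval_finset_sum, eval_mul, eval_C]
        ring
      obtain ⟨PG, hPGd, hPG⟩ := sumA x hx G
      obtain ⟨QH, hQHd, hQH⟩ := sumB Hp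
      refine ⟨PG, QH + C (-(PG.eval 0)), le_trans hPGd hG, ?_, fun n => ?_⟩
      · apply le_trans (natDegree_add_le _ _)
        apply max_le (le_trans hQHd (by omega))
        simp
      · have hT0 : T 0 = 0 := by simp [hTdef]
        have htel : T n = T n - T 0 := by rw [hT0, sub_zero]
        have := Finset.sum_range_sub T n
        have hTn : T n = ∑ i ∈ range n, (G.eval (i:ℂ) * x^i + Hp.eval (i:ℂ)) := by
          rw [htel, ← this]
          exact (Finset.sum_congr rfl fun i _ => by rw [hdelta i]; ring).symm
        show T n = _
        rw [hTn, Finset.sum_add_distrib, hPG n, hQH n]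
        simp only [eval_add, eval_C]
        ring

lemma claimB (a : ℕ) : ∀ b : ℕ,
    ∃ R : Polynomial ℂ, R.natDegree ≤ a + b + 1 ∧
      ∀ n : ℕ, ∑ j ∈ Finset.range n, (j : ℂ) ^ a * ((n : ℂ) - (j : ℂ)) ^ b
        = R.eval (n : ℂ) := by
  intro b
  induction b using Nat.strong_induction_on with
  | _ b ih =>
    match b, ih with
    | 0, _ =>
      obtain ⟨q, hdq, hq⟩ := sumB (X ^ a : Polynomial ℂ)
      refine ⟨q, le_trans hdq (by simp), fun n => ?_⟩
      have h := hq n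
      simp only [eval_pow, eval_X] at h
      simp only [pow_zero, mul_one, h]
    | B' + 1, ih =>
      have H : ∀ k : ℕ, ∃ R : Polynomial ℂ, R.natDegree ≤ a + B' + 1 ∧
          (k ≤ B' → ∀ n : ℕ, ∑ j ∈ Finset.range n, (j : ℂ) ^ a * ((n : ℂ) - (j : ℂ)) ^ k
            = R.eval (n : ℂ)) := by
        intro k
        by_cases hk : k ≤ B'
        · obtain ⟨R, h1, h2⟩ := ih k (by omega)
          exact ⟨R, le_trans h1 (by omega), fun _ => h2⟩
        · exact ⟨0, by simp, fun h => absurd h hk⟩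
      choose R h1 h2 using H
      set G : Polynomial ℂ := X ^ a + ∑ k ∈ range (B'+1), C (((B'+1).choose k : ℕ) : ℂ) * R k
        with hGdef
      have hG : G.natDegree ≤ a + B' + 1 := by
        apply le_trans (natDegree_add_le _ _)
        apply max_le (by simp; omega)
        apply natDegree_sum_le_of_forall_le
        intro k _
        exact le_trans (natDegree_C_mul_le _ _) (h1 k)
      set T : ℕ → ℂ := fun n => ∑ j ∈ Finset.range n, (j : ℂ) ^ a * ((n : ℂ) - (j : ℂ)) ^ (B'+1)
        with hTdef
      have hdelta : ∀ m : ℕ, T (m+1) = T m + G.eval (m:ℂ) := by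
        intro m
        rw [hTdef]
        simp only
        have hd := delta_sum a (B'+1) 1 m
        simp only [one_pow, mul_one] at hd
        rw [hd]
        have hS : ∀ k ∈ range (B'+1),
            (((B'+1).choose k : ℕ) : ℂ) * (∑ j ∈ range m, (j:ℂ)^a * ((m:ℂ)-(j:ℂ))^k)
            = (((B'+1).choose k : ℕ) : ℂ) * (R k).eval (m:ℂ) := by
          intro k hk
          rw [h2 k (by simpa using Nat.lt_succ_iff.mp (mem_range.mp hk)) m]
        rw [Finset.sum_congr rfl hS, hGdef]
        simp only [eval_add, eval_pow, eval_X, eval_finset_sum, eval_mul, eval_C]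
        ring
      obtain ⟨q, hqd, hq⟩ := sumB G
      refine ⟨q, le_trans hqd (by omega), fun n => ?_⟩
      have hT0 : T 0 = 0 := by simp [hTdef]
      have htel := Finset.sum_range_sub T n
      have hTn : T n = ∑ i ∈ range n, G.eval (i:ℂ) := by
        rw [show T n = T n - T 0 by rw [hT0, sub_zero], ← htel]
        exact (Finset.sum_congr rfl fun i _ => by rw [hdelta i]; ring).symm
      show T n = _
      rw [hTn, hq n]

/-- The Lemma of Section 7 of Greene–Wilf: closed form for
`∑_{j<n} j^a (n-j)^b x^j`. -/
theorem sum_ja_njb_xj_closed_form (x : ℂ) (a b : ℕ) :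
    (x ≠ 1 → ∃ P Q : Polynomial ℂ, P.natDegree ≤ a ∧ Q.natDegree ≤ b ∧
      ∀ n : ℕ, ∑ j ∈ Finset.range n, (j : ℂ) ^ a * ((n : ℂ) - (j : ℂ)) ^ b * x ^ j
        = P.eval (n : ℂ) * x ^ n + Q.eval (n : ℂ)) ∧
    (x = 1 → ∃ R : Polynomial ℂ, R.natDegree ≤ a + b + 1 ∧
      ∀ n : ℕ, ∑ j ∈ Finset.range n, (j : ℂ) ^ a * ((n : ℂ) - (j : ℂ)) ^ b
        = R.eval (n : ℂ)) :=
  ⟨fun hx => claimA x hx a b, fun _ => claimB a b⟩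
end

section
/- For each i = 1,…,k let F_i : ℤ → ℂ be given by F_i(n) = Σ_{m=1}^{d(i)} Σ_{h=0}^{e^{(i)}_m−1} λ^{(i)}_{m,h} n^h (r^{(i)}_m)^n, where the roots r^{(i)}_m are pairwise distinct nonzero complex numbers and λ^{(i)}_{m,e^{(i)}_m−1} ≠ 0 for all m; set D(i) = Σ_m e^{(i)}_m. Let a_i, b_i, c_i be integers with a_i ≥ 0 and a_i + b_i ≥ 0 for every i, and let f(n) = Σ_{j=0}^{n−1} Π_{i=1}^{k} F_i(a_i n + b_i j + c_i). Let Q = {ℓ : a_ℓ + b_ℓ ≠ 0}, R = {ℓ : a_ℓ ≠ 0}, and L = Π_{ℓ∈Q} D(ℓ) + Π_{ℓ∈R} D(ℓ), where an empty product equals 1. Then f satisfies a homogeneous linear recurrence with constant complex coefficients of order L: there exist c_0, …, c_{L−1} ∈ ℂ such that f(n+L) = Σ_{t=0}^{L−1} c_t f(n+t) for all n ≥ 0. -/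
open Polynomial

set_option linter.unusedVariables false


noncomputable def Sop : Module.End ℂ (ℕ → ℂ) where
  toFun f := fun n => f (n + 1)
  map_add' f g := rfl
  map_smul' c f := rfl

lemma Sop_pow_apply (i : ℕ) (f : ℕ → ℂ) (n : ℕ) : (Sop ^ i) f n = f (n + i) := by
  induction i generalizing f n with
  | zero => rfl
  | succ i ih =>
      rw [pow_succ, Module.End.mul_apply, ih]
      rfl

lemma aeval_Sop_apply (p : ℂ[X]) (f : ℕ → ℂ) (n : ℕ) :
    (Polynomial.aeval Sop p) f n
      = ∑ i ∈ Finset.range (p.natDegree + 1), p.coeff i * f (n + i) := by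
  rw [Polynomial.aeval_eq_sum_range]
  rw [LinearMap.coe_sum, Finset.sum_apply, Finset.sum_apply]
  refine Finset.sum_congr rfl fun i _ => ?_
  rw [LinearMap.smul_apply, Pi.smul_apply, Sop_pow_apply, smul_eq_mul]

lemma aeval_Sop_mul (p q : ℂ[X]) (f : ℕ → ℂ) :
    (Polynomial.aeval Sop (p * q)) f = (Polynomial.aeval Sop p) ((Polynomial.aeval Sop q) f) := by
  rw [map_mul, Module.End.mul_apply]


lemma diff_natDegree_lt (P : ℂ[X]) :
    P.comp (X + C 1) - P = 0 ∨ (P.comp (X + C 1) - P).natDegree < P.natDegree := by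
  by_cases h0 : P.comp (X + C 1) - P = 0
  · exact Or.inl h0
  right
  have hP : P ≠ 0 := by
    intro h; apply h0; simp [h]
  have hq : (X + C 1 : ℂ[X]).natDegree = 1 := by
    simpa using Polynomial.natDegree_X_add_C (1 : ℂ)
  have hdeg : (P.comp (X + C 1)).natDegree = P.natDegree := by
    rw [Polynomial.natDegree_comp, hq, mul_one]
  have hlc : (P.comp (X + C 1)).leadingCoeff = P.leadingCoeff := by
    rw [Polynomial.leadingCoeff_comp (by rw [hq]; norm_num)]
    have : (X + C 1 : ℂ[X]).leadingCoeff = 1 := Polynomial.leadingCoeff_X_add_C 1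
    rw [this, one_pow, mul_one]
  have hcomp0 : P.comp (X + C 1) ≠ 0 := by
    intro h
    apply hP
    rw [← Polynomial.leadingCoeff_eq_zero] at h ⊢
    rw [← hlc, h]
  have hdd : (P.comp (X + C 1)).degree = P.degree := by
    rw [Polynomial.degree_eq_natDegree hcomp0, Polynomial.degree_eq_natDegree hP, hdeg]
  have := Polynomial.degree_sub_lt hdd hcomp0 hlc
  have := Polynomial.natDegree_lt_natDegree h0 (by rwa [hdd] at this)
  exact this

lemma ann_single (ρ : ℂ) : ∀ (t : ℕ) (P : ℂ[X]), P.natDegree < t →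
    (Polynomial.aeval Sop ((X - C ρ) ^ t)) (fun n : ℕ => P.eval (n : ℂ) * ρ ^ n) = 0 := by
  intro t
  induction t with
  | zero => exact fun P hP => absurd hP (Nat.not_lt_zero _)
  | succ t ih =>
      intro P hP
      have step : (Polynomial.aeval Sop (X - C ρ)) (fun n : ℕ => P.eval (n : ℂ) * ρ ^ n)
          = fun n : ℕ => (C ρ * (P.comp (X + C 1) - P)).eval (n : ℂ) * ρ ^ n := by
        funext n
        have h1 : ((X - C ρ : ℂ[X])).natDegree = 1 := Polynomial.natDegree_X_sub_C ρ
        rw [aeval_Sop_apply, h1]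
        simp [Finset.sum_range_succ, Polynomial.eval_comp, pow_succ]
        ring
      rcases Nat.eq_zero_or_pos t with ht | ht
      · subst ht
        have hP0 : P.natDegree = 0 := Nat.lt_one_iff.mp hP
        have : P.comp (X + C 1) - P = 0 := by
          obtain ⟨cst, rfl⟩ := Polynomial.natDegree_eq_zero.mp hP0
          simp
        rw [pow_one, step, this]
        funext n; simp
      · rw [pow_succ, aeval_Sop_mul, step]
        rcases diff_natDegree_lt P with h0 | hlt
        · rw [h0]
          have : (fun n : ℕ => (C ρ * (0 : ℂ[X])).eval (n : ℂ) * ρ ^ n) = (0 : ℕ → ℂ) := by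
            funext n; simp
          rw [this, map_zero]
        · exact ih _ (lt_of_le_of_lt (Polynomial.natDegree_mul_le.trans
            (by simp)) (lt_of_lt_of_le hlt (Nat.lt_succ_iff.mp hP)))

lemma ann_dvd (ρ : ℂ) (t : ℕ) (p : ℂ[X]) (hdvd : (X - C ρ) ^ t ∣ p)
    (P : ℂ[X]) (hP : P.natDegree < t) :
    (Polynomial.aeval Sop p) (fun n : ℕ => P.eval (n : ℂ) * ρ ^ n) = 0 := by
  obtain ⟨cf, rfl⟩ := hdvd
  rw [mul_comm, aeval_Sop_mul, ann_single ρ t P hP, map_zero]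


lemma one_add_sum_le_prod {ι : Type*} (s : Finset ι) (g : ι → ℕ)
    (hg : ∀ i ∈ s, 1 ≤ g i) : 1 + ∑ i ∈ s, (g i - 1) ≤ ∏ i ∈ s, g i := by
  induction s using Finset.cons_induction with
  | empty => simp
  | cons a s ha ih =>
      rw [Finset.sum_cons, Finset.prod_cons]
      have h1 := hg a (Finset.mem_cons_self a s)
      have h2 := ih (fun i hi => hg i (Finset.mem_cons_of_mem hi))
      have h3 : 1 ≤ ∏ i ∈ s, g i := Finset.one_le_prod' (fun i hi => hg i (Finset.mem_cons_of_mem hi))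
      obtain ⟨x, hx⟩ : ∃ x, g a = x + 1 := ⟨g a - 1, by omega⟩
      rw [hx]
      have : x + 1 - 1 = x := by omega
      rw [this]
      nlinarith [h2, h3]

lemma fubini_filter (k : ℕ) (d : Fin k → ℕ) (z : ∀ ℓ, Fin (d ℓ))
    (e : (ℓ : Fin k) → Fin (d ℓ) → ℕ) (α : Fin k → ℤ)
    [DecidablePred fun m : ∀ ℓ, Fin (d ℓ) => ∀ ℓ, α ℓ = 0 → m ℓ = z ℓ] :
    ∑ m ∈ Finset.univ.filter (fun m : ∀ ℓ, Fin (d ℓ) => ∀ ℓ, α ℓ = 0 → m ℓ = z ℓ),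
        ∏ ℓ ∈ Finset.univ.filter (fun ℓ => α ℓ ≠ 0), e ℓ (m ℓ)
      = ∏ ℓ ∈ Finset.univ.filter (fun ℓ => α ℓ ≠ 0), ∑ j, e ℓ j := by
  classical
  set e' : (ℓ : Fin k) → Fin (d ℓ) → ℕ :=
    fun ℓ j => if α ℓ = 0 then (if j = z ℓ then 1 else 0) else e ℓ j with he'
  have h1 : ∀ m ∈ Finset.univ.filter (fun m : ∀ ℓ, Fin (d ℓ) => ∀ ℓ, α ℓ = 0 → m ℓ = z ℓ),
      ∏ ℓ ∈ Finset.univ.filter (fun ℓ => α ℓ ≠ 0), e ℓ (m ℓ) = ∏ ℓ, e' ℓ (m ℓ) := by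
    intro m hm
    rw [Finset.mem_filter] at hm
    rw [← Finset.prod_filter_mul_prod_filter_not Finset.univ (fun ℓ => α ℓ ≠ 0) (fun ℓ => e' ℓ (m ℓ))]
    have hA : ∏ ℓ ∈ Finset.univ.filter (fun ℓ => α ℓ ≠ 0), e' ℓ (m ℓ)
        = ∏ ℓ ∈ Finset.univ.filter (fun ℓ => α ℓ ≠ 0), e ℓ (m ℓ) := by
      refine Finset.prod_congr rfl fun ℓ hℓ => ?_
      rw [Finset.mem_filter] at hℓ
      simp [he', hℓ.2]
    have hB : ∏ ℓ ∈ Finset.univ.filter (fun ℓ => ¬ α ℓ ≠ 0), e' ℓ (m ℓ) = 1 := by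
      refine Finset.prod_eq_one fun ℓ hℓ => ?_
      rw [Finset.mem_filter] at hℓ
      have hα : α ℓ = 0 := not_not.mp hℓ.2
      simp [he', hα, hm.2 ℓ hα]
    rw [hA, hB, mul_one]
  rw [Finset.sum_congr rfl h1]
  have h2 : ∑ m ∈ Finset.univ.filter (fun m : ∀ ℓ, Fin (d ℓ) => ∀ ℓ, α ℓ = 0 → m ℓ = z ℓ),
      ∏ ℓ, e' ℓ (m ℓ) = ∑ m : ∀ ℓ, Fin (d ℓ), ∏ ℓ, e' ℓ (m ℓ) := by
    refine Finset.sum_subset (Finset.filter_subset _ _) (fun m _ hm => ?_)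
    rw [Finset.mem_filter, not_and] at hm
    have : ¬ ∀ ℓ, α ℓ = 0 → m ℓ = z ℓ := hm (Finset.mem_univ m)
    push_neg at this
    obtain ⟨ℓ, hα, hne⟩ := this
    refine Finset.prod_eq_zero (Finset.mem_univ ℓ) ?_
    simp [he', hα, hne]
  rw [h2]
  have h3 : ∑ m : ∀ ℓ, Fin (d ℓ), ∏ ℓ, e' ℓ (m ℓ) = ∏ ℓ, ∑ j, e' ℓ j := by
    rw [Finset.prod_univ_sum (fun _ => Finset.univ) e']
    rw [Fintype.piFinset_univ]
  rw [h3]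
  rw [Finset.prod_filter]
  refine Finset.prod_congr rfl fun ℓ _ => ?_
  by_cases hα : α ℓ = 0
  · simp [he', hα]
  · simp [he', hα]


lemma key_ann (k : ℕ) (d : Fin k → ℕ) (hd : ∀ i, 1 ≤ d i)
    (r : (i : Fin k) → Fin (d i) → ℂ) (e : (i : Fin k) → Fin (d i) → ℕ)
    (lam : (i : Fin k) → Fin (d i) → ℕ → ℂ)
    (hr0 : ∀ i m, r i m ≠ 0) (he : ∀ i m, 1 ≤ e i m)
    (F : Fin k → ℤ → ℂ)
    (hF : ∀ i, ∀ n : ℤ, F i n = ∑ m : Fin (d i), ∑ h ∈ Finset.range (e i m),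
      lam i m h * (n : ℂ) ^ h * r i m ^ n)
    (α : Fin k → ℤ) :
    ∃ P : ℂ[X], P.Monic ∧
      P.natDegree ≤ ∏ ℓ ∈ Finset.univ.filter (fun ℓ => α ℓ ≠ 0), (∑ m, e ℓ m) ∧
      ∀ β : Fin k → ℤ,
        (Polynomial.aeval Sop P) (fun n : ℕ => ∏ ℓ, F ℓ (α ℓ * n + β ℓ)) = 0 := by
  classical
  set z : ∀ ℓ, Fin (d ℓ) := fun ℓ => ⟨0, hd ℓ⟩ with hz
  set MQ : Finset (∀ ℓ, Fin (d ℓ)) :=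
    Finset.univ.filter (fun m => ∀ ℓ, α ℓ = 0 → m ℓ = z ℓ) with hMQ
  set ρ : (∀ ℓ, Fin (d ℓ)) → ℂ := fun m => ∏ ℓ, r ℓ (m ℓ) ^ (α ℓ) with hρdef
  set tq : (∀ ℓ, Fin (d ℓ)) → ℕ :=
    fun m => 1 + ∑ ℓ ∈ Finset.univ.filter (fun ℓ => α ℓ ≠ 0), (e ℓ (m ℓ) - 1) with htq
  refine ⟨∏ m ∈ MQ, (X - C (ρ m)) ^ tq m,
    Polynomial.monic_prod_of_monic _ _ (fun m _ => (Polynomial.monic_X_sub_C _).pow _), ?_, ?_⟩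
  · -- degree bound
    rw [Polynomial.natDegree_prod_of_monic _ _
      (fun m _ => (Polynomial.monic_X_sub_C _).pow _)]
    have h1 : ∀ m ∈ MQ, ((X - C (ρ m)) ^ tq m).natDegree = tq m := fun m _ => by
      rw [Polynomial.natDegree_pow, Polynomial.natDegree_X_sub_C, mul_one]
    rw [Finset.sum_congr rfl h1]
    calc ∑ m ∈ MQ, tq m
        ≤ ∑ m ∈ MQ, ∏ ℓ ∈ Finset.univ.filter (fun ℓ => α ℓ ≠ 0), e ℓ (m ℓ) := by
          refine Finset.sum_le_sum fun m _ => ?_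
          exact one_add_sum_le_prod _ _ (fun ℓ _ => he ℓ (m ℓ))
      _ = ∏ ℓ ∈ Finset.univ.filter (fun ℓ => α ℓ ≠ 0), ∑ j, e ℓ j :=
          fubini_filter k d z e α
  · -- annihilation
    intro β
    set G : (∀ ℓ, (_ : Fin (d ℓ)) × ℕ) → ℕ → ℂ := fun x n =>
      ∏ ℓ, (lam ℓ (x ℓ).1 (x ℓ).2 * ((α ℓ : ℂ) * n + (β ℓ : ℂ)) ^ (x ℓ).2 *
            ((r ℓ (x ℓ).1 ^ (α ℓ)) ^ n * r ℓ (x ℓ).1 ^ (β ℓ))) with hG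
    set XF : Finset (∀ ℓ, (_ : Fin (d ℓ)) × ℕ) :=
      Fintype.piFinset (fun ℓ => Finset.univ.sigma (fun m => Finset.range (e ℓ m))) with hXF
    have hfun : (fun n : ℕ => ∏ ℓ, F ℓ (α ℓ * n + β ℓ)) = ∑ x ∈ XF, G x := by
      funext n
      rw [Finset.sum_apply]
      calc ∏ ℓ, F ℓ (α ℓ * n + β ℓ)
          = ∏ ℓ, ∑ y ∈ (Finset.univ.sigma fun m => Finset.range (e ℓ m)),
              (lam ℓ y.1 y.2 * ((α ℓ : ℂ) * n + (β ℓ : ℂ)) ^ y.2 *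
                ((r ℓ y.1 ^ (α ℓ)) ^ n * r ℓ y.1 ^ (β ℓ))) := by
            refine Finset.prod_congr rfl fun ℓ _ => ?_
            rw [hF ℓ, Finset.sum_sigma]
            refine Finset.sum_congr rfl fun m _ => Finset.sum_congr rfl fun h _ => ?_
            have harg : (r ℓ m : ℂ) ^ (α ℓ * (n : ℤ) + β ℓ)
                = (r ℓ m ^ (α ℓ)) ^ (n : ℕ) * r ℓ m ^ (β ℓ) := by
              rw [zpow_add₀ (hr0 ℓ m), zpow_mul, zpow_natCast]
            rw [harg]
            push_cast
            ring
        _ = ∑ x ∈ XF, G x n := Finset.prod_univ_sum _ _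
    rw [hfun, map_sum]
    refine Finset.sum_eq_zero fun x hx => ?_
    have hxm : ∀ ℓ, (x ℓ).2 < e ℓ (x ℓ).1 := fun ℓ => by
      have := (Fintype.mem_piFinset.mp hx) ℓ
      exact Finset.mem_range.mp (Finset.mem_sigma.mp this).2
    set mc : ∀ ℓ, Fin (d ℓ) := fun ℓ => if α ℓ = 0 then z ℓ else (x ℓ).1 with hmcdef
    have hmc : mc ∈ MQ := by
      rw [hMQ, Finset.mem_filter]
      exact ⟨Finset.mem_univ _, fun ℓ hα => by simp [hmcdef, hα]⟩
    set Pol : ℂ[X] := ∏ ℓ, (C (α ℓ : ℂ) * X + C (β ℓ : ℂ)) ^ (x ℓ).2 with hPol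
    set Cst : ℂ := ∏ ℓ, (lam ℓ (x ℓ).1 (x ℓ).2 * r ℓ (x ℓ).1 ^ (β ℓ)) with hCst
    have hρeq : ρ mc = ∏ ℓ, r ℓ ((x ℓ).1) ^ (α ℓ) := by
      refine Finset.prod_congr rfl fun ℓ _ => ?_
      by_cases hα : α ℓ = 0
      · simp [hmcdef, hα]
      · simp [hmcdef, hα]
    have hGx : G x = Cst • (fun n : ℕ => Pol.eval (n : ℂ) * (ρ mc) ^ n) := by
      funext n
      rw [Pi.smul_apply, smul_eq_mul, hρeq, hG, hPol, hCst]
      rw [Polynomial.eval_prod, ← Finset.prod_pow, ← Finset.prod_mul_distrib,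
        ← Finset.prod_mul_distrib]
      refine Finset.prod_congr rfl fun ℓ _ => ?_
      rw [Polynomial.eval_pow]
      simp only [Polynomial.eval_add, Polynomial.eval_mul, Polynomial.eval_C, Polynomial.eval_X]
      ring
    have hdeg : Pol.natDegree < tq mc := by
      have h1 : Pol.natDegree ≤ ∑ ℓ, ((C (α ℓ : ℂ) * X + C (β ℓ : ℂ)) ^ (x ℓ).2).natDegree :=
        Polynomial.natDegree_prod_le _ _
      have h2 : ∑ ℓ, ((C (α ℓ : ℂ) * X + C (β ℓ : ℂ)) ^ (x ℓ).2).natDegree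
          ≤ ∑ ℓ, (if α ℓ ≠ 0 then e ℓ (mc ℓ) - 1 else 0) := by
        refine Finset.sum_le_sum fun ℓ _ => ?_
        by_cases hα : α ℓ = 0
        · have : ((α ℓ : ℂ)) = 0 := by rw [hα]; norm_num
          simp [this, hα, Polynomial.natDegree_pow]
        · have hmcℓ : mc ℓ = (x ℓ).1 := by simp [hmcdef, hα]
          rw [if_pos hα, hmcℓ]
          refine (Polynomial.natDegree_pow_le).trans ?_
          have := Polynomial.natDegree_linear_le (a := (α ℓ : ℂ)) (b := (β ℓ : ℂ))
          have h3 : (x ℓ).2 * (C (α ℓ : ℂ) * X + C (β ℓ : ℂ)).natDegree ≤ (x ℓ).2 * 1 :=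
            Nat.mul_le_mul_left _ this
          have h4 := hxm ℓ
          omega
      have h5 : ∑ ℓ, (if α ℓ ≠ 0 then e ℓ (mc ℓ) - 1 else 0)
          = ∑ ℓ ∈ Finset.univ.filter (fun ℓ => α ℓ ≠ 0), (e ℓ (mc ℓ) - 1) :=
        (Finset.sum_filter _ _).symm
      calc Pol.natDegree ≤ _ := h1
        _ ≤ _ := h2
        _ = ∑ ℓ ∈ Finset.univ.filter (fun ℓ => α ℓ ≠ 0), (e ℓ (mc ℓ) - 1) := h5
        _ < tq mc := by simp only [htq]; omega
    rw [hGx, map_smul]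
    have hz0 := ann_dvd (ρ mc) (tq mc) (∏ m ∈ MQ, (X - C (ρ m)) ^ tq m)
      (Finset.dvd_prod_of_mem (fun m => (X - C (ρ m)) ^ tq m) hmc) Pol hdeg
    rw [hz0, smul_zero]


lemma recur_of_ann (P : ℂ[X]) (hmon : P.Monic) (f : ℕ → ℂ)
    (hann : (Polynomial.aeval Sop P) f = 0) (L : ℕ) (hle : P.natDegree ≤ L) :
    ∃ cc : ℕ → ℂ, ∀ n : ℕ, f (n + L) = ∑ t ∈ Finset.range L, cc t * f (n + t) := by
  set Dg := P.natDegree with hDg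
  have hrec : ∀ n, f (n + Dg) = ∑ i ∈ Finset.range Dg, (-(P.coeff i)) * f (n + i) := by
    intro n
    have h0 : ∑ i ∈ Finset.range (Dg + 1), P.coeff i * f (n + i) = 0 := by
      rw [← aeval_Sop_apply, hann]; rfl
    have hc : P.coeff Dg = 1 := hmon.coeff_natDegree
    rw [Finset.sum_range_succ, hc, one_mul] at h0
    have h2 : f (n + Dg) = -∑ i ∈ Finset.range Dg, P.coeff i * f (n + i) :=
      eq_neg_of_add_eq_zero_right h0
    rw [h2, ← Finset.sum_neg_distrib]
    exact Finset.sum_congr rfl fun i _ => (neg_mul _ _).symm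
  obtain ⟨K, rfl⟩ : ∃ K, L = K + Dg := ⟨L - Dg, by omega⟩
  refine ⟨fun t => if K ≤ t then -(P.coeff (t - K)) else 0, fun n => ?_⟩
  have e1 : f (n + (K + Dg)) = f ((n + K) + Dg) := by congr 1; omega
  rw [e1, hrec, Finset.sum_range_add]
  have e2 : ∑ t ∈ Finset.range K,
      (if K ≤ t then -(P.coeff (t - K)) else 0) * f (n + t) = 0 := by
    refine Finset.sum_eq_zero fun t ht => ?_
    rw [Finset.mem_range] at ht
    rw [if_neg (by omega), zero_mul]
  rw [e2, zero_add]
  refine Finset.sum_congr rfl fun i _ => ?_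
  simp only []
  rw [if_pos (Nat.le_add_right _ _), Nat.add_sub_cancel_left, ← Nat.add_assoc]

lemma aeval_comb (p : ℂ[X]) (G : ℕ → ℂ) (hG : (Polynomial.aeval Sop p) G = 0) (n : ℕ) :
    ∑ i ∈ Finset.range (p.natDegree + 1), p.coeff i * G (n + i) = 0 := by
  rw [← aeval_Sop_apply, hG]; rfl

/-- **Corollary 7.3** (gendegboundx, second bound) of Greene–Wilf: the sum
`f(n) = ∑_{j<n} ∏_i F_i(a_i n + b_i j + c_i)` of products of C-finite
sequences satisfies a linear recurrence with constant coefficients of order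
`L = ∏_{ℓ∈Q} D(ℓ) + ∏_{ℓ∈R} D(ℓ)`. -/
theorem cfinite_degree_bound
    (k : ℕ) (hk : 1 ≤ k)
    (d : Fin k → ℕ) (hd : ∀ i, 1 ≤ d i)
    (r : (i : Fin k) → Fin (d i) → ℂ) (e : (i : Fin k) → Fin (d i) → ℕ)
    (lam : (i : Fin k) → Fin (d i) → ℕ → ℂ)
    (hr_inj : ∀ i, Function.Injective (r i)) (hr0 : ∀ i m, r i m ≠ 0)
    (he : ∀ i m, 1 ≤ e i m) (hlam : ∀ i m, lam i m (e i m - 1) ≠ 0)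
    (F : Fin k → ℤ → ℂ)
    (hF : ∀ i, ∀ n : ℤ, F i n = ∑ m : Fin (d i), ∑ h ∈ Finset.range (e i m),
      lam i m h * (n : ℂ) ^ h * r i m ^ n)
    (D : Fin k → ℕ) (hD : ∀ i, D i = ∑ m, e i m)
    (a b c : Fin k → ℤ) (ha : ∀ i, 0 ≤ a i) (hab : ∀ i, 0 ≤ a i + b i)
    (f : ℕ → ℂ)
    (hf : ∀ n : ℕ, f n = ∑ j ∈ Finset.range n,
      ∏ i : Fin k, F i (a i * n + b i * j + c i))
    (L : ℕ)
    (hL : L = (∏ ℓ ∈ Finset.univ.filter (fun ℓ => a ℓ + b ℓ ≠ 0), D ℓ)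
            + ∏ ℓ ∈ Finset.univ.filter (fun ℓ => a ℓ ≠ 0), D ℓ) :
    ∃ cc : ℕ → ℂ, ∀ n : ℕ, f (n + L) = ∑ t ∈ Finset.range L, cc t * f (n + t) := by
  obtain ⟨p, hpm, hpd, hpa⟩ := key_ann k d hd r e lam hr0 he F hF (fun ℓ => a ℓ + b ℓ)
  obtain ⟨q, hqm, hqd, hqa⟩ := key_ann k d hd r e lam hr0 he F hF a
  set Gf : ℕ → ℕ → ℕ → ℂ := fun u s n' =>
    ∏ ℓ, F ℓ ((a ℓ + b ℓ) * (n' : ℤ) + (a ℓ * (u : ℤ) + b ℓ * (s : ℤ) + c ℓ)) with hGf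
  set Gj : ℕ → ℕ → ℂ := fun j n' =>
    ∏ ℓ, F ℓ (a ℓ * (n' : ℤ) + (b ℓ * (j : ℤ) + c ℓ)) with hGj
  have hGf0 : ∀ u s : ℕ, (Polynomial.aeval Sop p) (Gf u s) = 0 := fun u s =>
    hpa (fun ℓ => a ℓ * (u : ℤ) + b ℓ * (s : ℤ) + c ℓ)
  have hGj0 : ∀ j : ℕ, (Polynomial.aeval Sop q) (Gj j) = 0 := fun j =>
    hqa (fun ℓ => b ℓ * (j : ℤ) + c ℓ)
  have hqsum : ∀ n : ℕ, ((Polynomial.aeval Sop) q f) n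
      = ∑ u ∈ Finset.range (q.natDegree + 1), q.coeff u *
          ∑ s ∈ Finset.range u, Gf u s n := by
    intro n
    rw [aeval_Sop_apply]
    have hsplit : ∀ u ∈ Finset.range (q.natDegree + 1), q.coeff u * f (n + u)
        = q.coeff u * ∑ j ∈ Finset.range n, Gj j (n + u)
          + q.coeff u * ∑ s ∈ Finset.range u, Gf u s n := by
      intro u _
      rw [hf (n + u), Finset.sum_range_add, mul_add]
      congr 1
      · congr 1
        refine Finset.sum_congr rfl fun j _ => ?_
        simp only [hGj]
        refine Finset.prod_congr rfl fun ℓ _ => ?_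
        congr 1
        push_cast
        ring
      · congr 1
        refine Finset.sum_congr rfl fun s _ => ?_
        simp only [hGf]
        refine Finset.prod_congr rfl fun ℓ _ => ?_
        congr 1
        push_cast
        ring
    rw [Finset.sum_congr rfl hsplit, Finset.sum_add_distrib]
    have hzero : ∑ u ∈ Finset.range (q.natDegree + 1),
        q.coeff u * ∑ j ∈ Finset.range n, Gj j (n + u) = 0 := by
      have swap : ∑ u ∈ Finset.range (q.natDegree + 1),
          q.coeff u * ∑ j ∈ Finset.range n, Gj j (n + u)
          = ∑ j ∈ Finset.range n, ∑ u ∈ Finset.range (q.natDegree + 1),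
              q.coeff u * Gj j (n + u) := by
        simp_rw [Finset.mul_sum]
        exact Finset.sum_comm
      rw [swap]
      exact Finset.sum_eq_zero fun j _ => aeval_comb q (Gj j) (hGj0 j) n
    rw [hzero, zero_add]
  have hstage2 : ∀ n : ℕ, ((Polynomial.aeval Sop) p ((Polynomial.aeval Sop) q f)) n = 0 := by
    intro n
    rw [aeval_Sop_apply]
    calc ∑ t ∈ Finset.range (p.natDegree + 1),
          p.coeff t * ((Polynomial.aeval Sop) q f) (n + t)
        = ∑ t ∈ Finset.range (p.natDegree + 1), ∑ u ∈ Finset.range (q.natDegree + 1),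
            ∑ s ∈ Finset.range u, q.coeff u * (p.coeff t * Gf u s (n + t)) := by
          refine Finset.sum_congr rfl fun t _ => ?_
          rw [hqsum (n + t), Finset.mul_sum]
          refine Finset.sum_congr rfl fun u _ => ?_
          rw [Finset.mul_sum, Finset.mul_sum]
          refine Finset.sum_congr rfl fun s _ => ?_
          ring
      _ = ∑ u ∈ Finset.range (q.natDegree + 1), ∑ s ∈ Finset.range u,
            ∑ t ∈ Finset.range (p.natDegree + 1), q.coeff u * (p.coeff t * Gf u s (n + t)) := by
          rw [Finset.sum_comm]
          exact Finset.sum_congr rfl fun u _ => Finset.sum_comm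
      _ = 0 := by
          refine Finset.sum_eq_zero fun u _ => Finset.sum_eq_zero fun s _ => ?_
          rw [← Finset.mul_sum, aeval_comb p (Gf u s) (hGf0 u s) n, mul_zero]
  have hfinal : (Polynomial.aeval Sop (p * q)) f = 0 := by
    rw [aeval_Sop_mul]
    funext n
    exact hstage2 n
  have hdeg : (p * q).natDegree ≤ L := by
    rw [hpm.natDegree_mul hqm, hL]
    refine add_le_add (le_trans hpd (le_of_eq ?_)) (le_trans hqd (le_of_eq ?_))
    · exact Finset.prod_congr rfl fun ℓ _ => (hD ℓ).symm
    · exact Finset.prod_congr rfl fun ℓ _ => (hD ℓ).symm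
  exact recur_of_ann (p * q) (hpm.mul hqm) f hfinal L hdeg
end

section
/- Let r_1,…,r_d be pairwise distinct nonzero complex numbers and e_1,…,e_d positive integers with D = Σ_m e_m. Then there exist complex numbers C_{(m,h),t}, indexed by pairs (m,h) with 1 ≤ m ≤ d, 0 ≤ h ≤ e_m−1 and by t ∈ {0,…,D−1}, depending only on r_1,…,r_d and e_1,…,e_d, such that: for every family of complex numbers λ_{m,h} (1 ≤ m ≤ d, 0 ≤ h ≤ e_m−1), setting F(n) = Σ_{m=1}^{d} Σ_{h=0}^{e_m−1} λ_{m,h} n^h r_m^n and Φ_h^m(n) = Σ_{i=h}^{e_m−1} binom(i,h) λ_{m,i} n^{i−h} r_m^n, one has Φ_h^m(n) = Σ_{t=0}^{D−1} C_{(m,h),t} F(n+t) for all m, h and all n ≥ 0. -/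
open Polynomial in
lemma vand_ker {d D : ℕ} (r : Fin d → ℂ) (e : Fin d → ℕ)
    (hr_inj : Function.Injective r) (hr0 : ∀ m, r m ≠ 0)
    (he : ∀ m, 1 ≤ e m) (hD : D = ∑ m, e m)
    (v : Fin D → ℂ)
    (hv : ∀ (m : Fin d) (h : ℕ), h < e m →
      ∑ t : Fin D, v t * (t : ℂ) ^ h * r m ^ (t : ℕ) = 0) :
    v = 0 := by
  by_contra hvne
  set q : ℂ[X] := ∑ t : Fin D, C (v t) * X ^ (t : ℕ) with hq
  have hcoeff : ∀ t : Fin D, q.coeff t = v t := by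
    intro t0
    rw [hq, finset_sum_coeff]
    simp only [coeff_C_mul, coeff_X_pow]
    rw [Finset.sum_eq_single t0]
    · simp
    · intro b _ hb
      have : (b : ℕ) ≠ (t0 : ℕ) := fun h => hb (Fin.ext h)
      rw [if_neg (Ne.symm this), mul_zero]
    · simp
  have hq0 : q ≠ 0 := by
    intro h0
    apply hvne
    funext t
    have := hcoeff t
    rw [h0] at this
    simpa using this.symm
  -- all iterated derivatives vanish at each r m up to order e m - 1
  have hroot : ∀ (m : Fin d) (j : ℕ), j < e m →
      (derivative^[j] q).IsRoot (r m) := by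
    intro m j hj
    have h1 : r m ^ j * (derivative^[j] q).eval (r m)
        = ∑ t : Fin D, v t * ((t : ℕ).descFactorial j : ℂ) * r m ^ (t : ℕ) := by
      rw [hq, iterate_derivative_sum]
      simp only [iterate_derivative_C_mul, iterate_derivative_X_pow_eq_smul]
      rw [eval_finset_sum, Finset.mul_sum]
      refine Finset.sum_congr rfl fun t _ => ?_
      simp only [eval_mul, eval_C, eval_smul, eval_pow, eval_X, smul_eq_mul]
      rcases le_or_gt j (t : ℕ) with hle | hlt
      · rw [show r m ^ (t : ℕ) = r m ^ ((t : ℕ) - j) * r m ^ j by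
          rw [← pow_add]; congr 1; omega]
        ring
      · rw [Nat.descFactorial_eq_zero_iff_lt.mpr hlt]
        simp
    have h2 : ∑ t : Fin D, v t * ((t : ℕ).descFactorial j : ℂ) * r m ^ (t : ℕ) = 0 := by
      have hdp : ∀ t : ℕ, ((t.descFactorial j : ℂ))
          = (descPochhammer ℂ j).eval (t : ℂ) :=
        fun t => (descPochhammer_eval_eq_descFactorial ℂ t j).symm
      calc ∑ t : Fin D, v t * ((t : ℕ).descFactorial j : ℂ) * r m ^ (t : ℕ)
          = ∑ t : Fin D, ∑ i ∈ Finset.range (j + 1),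
              (descPochhammer ℂ j).coeff i * (v t * (t : ℂ) ^ i * r m ^ (t : ℕ)) := by
            refine Finset.sum_congr rfl fun t _ => ?_
            rw [hdp, eval_eq_sum_range]
            rw [descPochhammer_natDegree, Finset.mul_sum, Finset.sum_mul]
            exact Finset.sum_congr rfl fun i _ => by ring
        _ = ∑ i ∈ Finset.range (j + 1),
              (descPochhammer ℂ j).coeff i * ∑ t : Fin D, v t * (t : ℂ) ^ i * r m ^ (t : ℕ) := by
            rw [Finset.sum_comm]
            exact Finset.sum_congr rfl fun i _ => by rw [Finset.mul_sum]
        _ = 0 := by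
            refine Finset.sum_eq_zero fun i hi => ?_
            rw [hv m i (by simp at hi; omega), mul_zero]
    have := h1.trans h2
    rcases mul_eq_zero.mp this with h | h
    · exact absurd h (pow_ne_zero _ (hr0 m))
    · exact h
  have hmult : ∀ m, (X - C (r m)) ^ (e m) ∣ q := by
    intro m
    have hlt : e m - 1 < q.rootMultiplicity (r m) := by
      rw [lt_rootMultiplicity_iff_isRoot_iterate_derivative_of_mem_nonZeroDivisors hq0
        (mem_nonZeroDivisors_of_ne_zero (by
          exact_mod_cast (Nat.factorial_ne_zero (e m - 1))))]
      intro j hj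
      exact hroot m j (by have := he m; omega)
    have h2 : e m ≤ q.rootMultiplicity (r m) := by have := he m; omega
    exact dvd_trans (pow_dvd_pow _ h2) (q.pow_rootMultiplicity_dvd (r m))
  have hprod : (∏ m : Fin d, (X - C (r m)) ^ (e m)) ∣ q :=
    Finset.prod_dvd_of_coprime
      (fun a _ b _ hab => ((pairwise_coprime_X_sub_C hr_inj hab).pow))
      (fun m _ => hmult m)
  have hdeg1 : (∏ m : Fin d, (X - C (r m)) ^ (e m)).natDegree = D := by
    rw [natDegree_prod _ _ (fun m _ => pow_ne_zero _ (X_sub_C_ne_zero (r m)))]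
    simp [natDegree_pow, hD]
  have hDpos : 0 < D := by
    rcases Function.ne_iff.mp hvne with ⟨t, -⟩
    exact t.pos
  have hdeg2 : q.natDegree < D := by
    have : q.natDegree ≤ D - 1 := by
      rw [hq]
      refine natDegree_sum_le_of_forall_le _ _ fun t _ => ?_
      exact le_trans (natDegree_C_mul_le _ _) (by rw [natDegree_X_pow]; omega)
    omega
  have := Polynomial.natDegree_le_of_dvd hprod hq0
  omega



/-- **Lemma 8.1** (indepphi) of Greene–Wilf: the auxiliary functions
`Φ_h^m(n) = ∑_{i=h}^{e_m-1} C(i,h) λ_{m,i} n^(i-h) r_m^n` are linear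
combinations of the shifts `F(n), …, F(n+D-1)` with coefficients that do not
depend on the `λ`'s (i.e. on the initial conditions of `F`). -/
theorem phi_indep_of_initial_conditions
    (d : ℕ) (hd : 1 ≤ d)
    (r : Fin d → ℂ) (e : Fin d → ℕ)
    (hr_inj : Function.Injective r) (hr0 : ∀ m, r m ≠ 0)
    (he : ∀ m, 1 ≤ e m)
    (D : ℕ) (hD : D = ∑ m, e m) :
    ∃ C : Fin d → ℕ → ℕ → ℂ,
      ∀ lam : Fin d → ℕ → ℂ, ∀ F : ℕ → ℂ,
        (∀ n : ℕ, F n = ∑ m : Fin d, ∑ h ∈ Finset.range (e m),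
          lam m h * (n : ℂ) ^ h * r m ^ n) →
        ∀ (m : Fin d) (h : ℕ), h ≤ e m - 1 → ∀ n : ℕ,
          (∑ i ∈ Finset.Icc h (e m - 1),
            (Nat.choose i h : ℂ) * lam m i * (n : ℂ) ^ (i - h) * r m ^ n)
            = ∑ t ∈ Finset.range D, C m h t * F (n + t) := by

  classical
  have hcard : Fintype.card ((m : Fin d) × Fin (e m)) = D := by
    simp [Fintype.card_sigma, hD]
  let σ : Fin D ≃ (m : Fin d) × Fin (e m) := (Fintype.equivFinOfCardEq hcard).symm
  let N : Matrix (Fin D) (Fin D) ℂ := fun t s =>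
    ((t : ℕ) : ℂ) ^ ((σ s).2 : ℕ) * r (σ s).1 ^ (t : ℕ)
  have hdet : N.det ≠ 0 := by
    intro h0
    have h0' : N.transpose.det = 0 := by rwa [Matrix.det_transpose]
    obtain ⟨v, hvne, hmv⟩ := (Matrix.exists_mulVec_eq_zero_iff).mpr h0'
    apply hvne
    refine vand_ker r e hr_inj hr0 he hD v ?_
    intro m h hh
    have hσs : σ (σ.symm ⟨m, ⟨h, hh⟩⟩) = ⟨m, ⟨h, hh⟩⟩ := σ.apply_symm_apply _
    have := congrFun hmv (σ.symm ⟨m, ⟨h, hh⟩⟩)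
    rw [Matrix.mulVec, dotProduct] at this
    simp only [Matrix.transpose_apply, Pi.zero_apply] at this
    simp only [N] at this
    rw [hσs] at this
    rw [← this]
    exact Finset.sum_congr rfl fun t _ => by ring
  have hdetu : IsUnit N.det := isUnit_iff_ne_zero.mpr hdet
  refine ⟨fun m h t =>
    if ht : t < D then
      (if hh : h < e m then N⁻¹ (σ.symm ⟨m, ⟨h, hh⟩⟩) ⟨t, ht⟩ else 0)
    else 0, ?_⟩
  intro lam F hF m h hh n
  have hhe : h < e m := by have := he m; omega
  set Φ : Fin D → ℂ := fun s => ∑ i ∈ Finset.Icc ((σ s).2 : ℕ) (e (σ s).1 - 1),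
    ((i.choose ((σ s).2 : ℕ) : ℂ)) * lam (σ s).1 i * (n : ℂ) ^ (i - ((σ s).2 : ℕ))
      * r (σ s).1 ^ n with hΦdef
  have hFvec : (fun t : Fin D => F (n + t)) = N.mulVec Φ := by
    funext t
    rw [hF]
    rw [Matrix.mulVec, dotProduct]
    have hsum : ∑ s : Fin D, N t s * Φ s
        = ∑ p : (m : Fin d) × Fin (e m),
            ((t : ℕ) : ℂ) ^ (p.2 : ℕ) * r p.1 ^ (t : ℕ) *
              ∑ i ∈ Finset.Icc (p.2 : ℕ) (e p.1 - 1),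
                ((i.choose (p.2 : ℕ) : ℂ)) * lam p.1 i * (n : ℂ) ^ (i - (p.2 : ℕ))
                  * r p.1 ^ n := by
      rw [← Equiv.sum_comp σ]
    rw [hsum, ← Finset.univ_sigma_univ, Finset.sum_sigma]
    refine Finset.sum_congr rfl fun m' _ => ?_
    rw [Fin.sum_univ_eq_sum_range (fun h' =>
      ((t : ℕ) : ℂ) ^ h' * r m' ^ (t : ℕ) *
        ∑ i ∈ Finset.Icc h' (e m' - 1),
          ((i.choose h' : ℂ)) * lam m' i * (n : ℂ) ^ (i - h') * r m' ^ n)]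
    have hexp : ∀ i ∈ Finset.range (e m'),
        lam m' i * ((n + (t : ℕ) : ℕ) : ℂ) ^ i * r m' ^ (n + (t : ℕ))
          = ∑ k ∈ Finset.range (i + 1),
              lam m' i * (((t : ℕ) : ℂ) ^ k * (n : ℂ) ^ (i - k) * (i.choose k : ℂ))
                * (r m' ^ n * r m' ^ (t : ℕ)) := by
      intro i _
      rw [pow_add]
      push_cast
      rw [add_comm (n : ℂ) ((t : ℕ) : ℂ), add_pow]
      rw [Finset.mul_sum, Finset.sum_mul]
    rw [Finset.sum_congr rfl hexp]
    rw [Finset.sum_comm' (t' := Finset.range (e m'))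
      (s' := fun k => Finset.Icc k (e m' - 1)) (by
        intro i k
        simp only [Finset.mem_range, Finset.mem_Icc]
        have := he m'
        omega)]
    refine Finset.sum_congr rfl fun k _ => ?_
    rw [Finset.mul_sum]
    exact Finset.sum_congr rfl fun i _ => by ring
  have hΦ : Φ = N⁻¹.mulVec (fun t : Fin D => F (n + t)) := by
    rw [hFvec, Matrix.mulVec_mulVec, Matrix.nonsing_inv_mul _ hdetu, Matrix.one_mulVec]
  have hgoal := congrFun hΦ (σ.symm ⟨m, ⟨h, hhe⟩⟩)
  rw [hΦdef] at hgoal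
  have hσs : σ (σ.symm ⟨m, ⟨h, hhe⟩⟩) = ⟨m, ⟨h, hhe⟩⟩ := σ.apply_symm_apply _
  simp only at hgoal
  rw [hσs] at hgoal
  rw [hgoal, Matrix.mulVec, dotProduct, ← Fin.sum_univ_eq_sum_range]
  refine Finset.sum_congr rfl fun t _ => ?_
  beta_reduce
  rw [dif_pos t.isLt, dif_pos hhe]
end

section
/- Define functions B_k : ℂ \ {1} → ℂ recursively by B_0(x) = 1/(1−x) and B_{k+1}(x) = x · B_k′(x) (the derivative taken at x). Then for every complex x ≠ 1, every integer p ≥ 0, and every n ≥ 0 (with the convention 0^0 = 1): Σ_{j=0}^{n−1} j^p x^j = B_p(x) − x^n · Σ_{k=0}^{p} binom(p,k) n^k B_{p−k}(x). -/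
open Filter Topology

lemma analyticAt_deriv' {f : ℂ → ℂ} {x : ℂ} (h : AnalyticAt ℂ f x) :
    AnalyticAt ℂ (deriv f) x := by
  have h1 : AnalyticAt ℂ ((ContinuousLinearMap.apply ℂ ℂ (1 : ℂ)) ∘ (fderiv ℂ f)) x :=
    ((ContinuousLinearMap.apply ℂ ℂ (1 : ℂ)).analyticAt _).comp h.fderiv
  exact h1.congr (Eventually.of_forall fun y => fderiv_apply_one_eq_deriv)

lemma binom_step' (b : ℕ → ℂ) (c : ℂ) (p : ℕ) :
    ∑ k ∈ Finset.range (p + 2), (Nat.choose (p + 1) k : ℂ) * c ^ k * b (p + 1 - k)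
      = c * ∑ k ∈ Finset.range (p + 1), (Nat.choose p k : ℂ) * c ^ k * b (p - k)
        + ∑ k ∈ Finset.range (p + 1), (Nat.choose p k : ℂ) * c ^ k * b (p + 1 - k) := by
  have e1 : ∑ k ∈ Finset.range (p + 1), (Nat.choose p k : ℂ) * c ^ k * b (p + 1 - k)
      = (∑ k ∈ Finset.range (p + 1), (Nat.choose p (k + 1) : ℂ) * c ^ (k + 1) * b (p - k))
        + b (p + 1) := by
    have h := Finset.sum_range_succ' (fun k => (Nat.choose p k : ℂ) * c ^ k * b (p + 1 - k)) (p + 1)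
    have e2 : ∑ k ∈ Finset.range (p + 2), (Nat.choose p k : ℂ) * c ^ k * b (p + 1 - k)
        = ∑ k ∈ Finset.range (p + 1), (Nat.choose p k : ℂ) * c ^ k * b (p + 1 - k) := by
      rw [Finset.sum_range_succ]
      simp [Nat.choose_eq_zero_of_lt (Nat.lt_succ_self p)]
    rw [e2] at h
    rw [h]
    simp [Nat.succ_sub_succ]
  rw [Finset.sum_range_succ' _ (p + 1)]
  simp only [Nat.choose_succ_succ, Nat.cast_add, Nat.succ_sub_succ, Nat.choose_zero_right,
    Nat.cast_one, pow_zero, one_mul, Nat.sub_zero, add_mul]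
  rw [Finset.sum_add_distrib, e1, Finset.mul_sum]
  have e3 : ∀ k, c * ((Nat.choose p k : ℂ) * c ^ k * b (p - k))
      = (Nat.choose p k : ℂ) * c ^ (k + 1) * b (p - k) := by intro k; rw [pow_succ]; ring
  simp only [e3]
  ring

/-- **Lemma 8.2** (sumformula) of Greene–Wilf: with `B₀(x) = 1/(1-x)` and
`B_{k+1}(x) = x·B_k′(x)` on `ℂ \ {1}`, one has
`∑_{j<n} j^p x^j = B_p(x) - x^n ∑_{k≤p} C(p,k) n^k B_{p-k}(x)` for `x ≠ 1`. -/
theorem partial_power_sum_formula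
    (B : ℕ → ℂ → ℂ)
    (hB0 : ∀ x : ℂ, x ≠ 1 → B 0 x = 1 / (1 - x))
    (hBrec : ∀ k : ℕ, ∀ x : ℂ, x ≠ 1 → B (k + 1) x = x * deriv (B k) x) :
    ∀ x : ℂ, x ≠ 1 → ∀ p n : ℕ,
      ∑ j ∈ Finset.range n, (j : ℂ) ^ p * x ^ j
        = B p x - x ^ n * ∑ k ∈ Finset.range (p + 1),
            (Nat.choose p k : ℂ) * (n : ℂ) ^ k * B (p - k) x := by
  have hne : ∀ x : ℂ, x ≠ 1 → {y : ℂ | y ≠ 1} ∈ 𝓝 x := fun x hx => isOpen_ne.mem_nhds hx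
  have hA : ∀ p : ℕ, ∀ x : ℂ, x ≠ 1 → AnalyticAt ℂ (B p) x := by
    intro p
    induction p with
    | zero =>
      intro x hx
      have h1 : AnalyticAt ℂ (fun y : ℂ => (1 - y)⁻¹) x :=
        (analyticAt_const.sub analyticAt_id).inv (sub_ne_zero.2 (Ne.symm hx))
      exact h1.congr (eventually_of_mem (hne x hx) fun y hy => by
        simp [hB0 y hy, one_div])
    | succ p ih =>
      intro x hx
      have h1 : AnalyticAt ℂ (fun y : ℂ => y * deriv (B p) y) x :=
        analyticAt_id.mul (analyticAt_deriv' (ih x hx))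
      exact h1.congr (eventually_of_mem (hne x hx) fun y hy => (hBrec p y hy).symm)
  suffices key : ∀ p : ℕ, ∀ x : ℂ, x ≠ 1 → ∀ n : ℕ,
      ∑ j ∈ Finset.range n, (j : ℂ) ^ p * x ^ j
        = B p x - x ^ n * ∑ k ∈ Finset.range (p + 1),
            (Nat.choose p k : ℂ) * (n : ℂ) ^ k * B (p - k) x by
    intro x hx p n; exact key p x hx n
  intro p
  induction p with
  | zero =>
    intro x hx n
    have h1 : (1 : ℂ) - x ≠ 0 := sub_ne_zero.2 (Ne.symm hx)
    simp only [pow_zero, one_mul, Finset.sum_range_one, Nat.choose_self, Nat.cast_one,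
      Nat.zero_sub]
    have h2 : x - (1 : ℂ) ≠ 0 := sub_ne_zero.2 hx
    rw [geom_sum_eq hx]
    rw [hB0 x hx]
    rw [zero_add, Finset.sum_range_one, Nat.choose_self, Nat.cast_one, pow_zero, one_mul, one_mul]
    field_simp
    ring
  | succ p ih =>
    intro x hx n
    have hBp : HasDerivAt (B p) (deriv (B p) x) x := (hA p x hx).differentiableAt.hasDerivAt
    have hH : HasDerivAt
        (fun y => ∑ k ∈ Finset.range (p + 1), (Nat.choose p k : ℂ) * (n : ℂ) ^ k * B (p - k) y)
        (∑ k ∈ Finset.range (p + 1), (Nat.choose p k : ℂ) * (n : ℂ) ^ k * deriv (B (p - k)) x)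
        x := by
      apply HasDerivAt.fun_sum
      intro k _
      exact ((hA (p - k) x hx).differentiableAt.hasDerivAt).const_mul _
    have hxn : HasDerivAt (fun y : ℂ => y ^ n) ((n : ℂ) * x ^ (n - 1)) x := hasDerivAt_pow n x
    have hG : HasDerivAt
        (fun y => B p y - y ^ n * ∑ k ∈ Finset.range (p + 1),
            (Nat.choose p k : ℂ) * (n : ℂ) ^ k * B (p - k) y)
        (deriv (B p) x -
          (((n : ℂ) * x ^ (n - 1)) *
              (∑ k ∈ Finset.range (p + 1), (Nat.choose p k : ℂ) * (n : ℂ) ^ k * B (p - k) x)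
            + x ^ n *
              (∑ k ∈ Finset.range (p + 1),
                (Nat.choose p k : ℂ) * (n : ℂ) ^ k * deriv (B (p - k)) x))) x :=
      hBp.sub (hxn.mul hH)
    have hF : HasDerivAt (fun y => ∑ j ∈ Finset.range n, (j : ℂ) ^ p * y ^ j)
        (∑ j ∈ Finset.range n, (j : ℂ) ^ p * ((j : ℂ) * x ^ (j - 1))) x := by
      apply HasDerivAt.fun_sum
      intro j _
      exact (hasDerivAt_pow j x).const_mul _
    have heq : (fun y => ∑ j ∈ Finset.range n, (j : ℂ) ^ p * y ^ j)
        =ᶠ[𝓝 x] (fun y => B p y - y ^ n * ∑ k ∈ Finset.range (p + 1),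
            (Nat.choose p k : ℂ) * (n : ℂ) ^ k * B (p - k) y) :=
      eventually_of_mem (hne x hx) fun y hy => ih y hy n
    have main : (∑ j ∈ Finset.range n, (j : ℂ) ^ p * ((j : ℂ) * x ^ (j - 1)))
        = deriv (B p) x -
          (((n : ℂ) * x ^ (n - 1)) *
              (∑ k ∈ Finset.range (p + 1), (Nat.choose p k : ℂ) * (n : ℂ) ^ k * B (p - k) x)
            + x ^ n *
              (∑ k ∈ Finset.range (p + 1),
                (Nat.choose p k : ℂ) * (n : ℂ) ^ k * deriv (B (p - k)) x)) := by
      rw [← hF.deriv, heq.deriv_eq, hG.deriv]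
    have hL : ∑ j ∈ Finset.range n, (j : ℂ) ^ (p + 1) * x ^ j
        = x * ∑ j ∈ Finset.range n, (j : ℂ) ^ p * ((j : ℂ) * x ^ (j - 1)) := by
      rw [Finset.mul_sum]
      apply Finset.sum_congr rfl
      intro j _
      rcases Nat.eq_zero_or_pos j with h0 | h0
      · subst h0; simp
      · have hxj : x * x ^ (j - 1) = x ^ j := by
          conv_rhs => rw [← Nat.sub_add_cancel h0]
          rw [pow_succ]; ring
        calc (j : ℂ) ^ (p + 1) * x ^ j = (j : ℂ) ^ p * (j : ℂ) * (x * x ^ (j - 1)) := by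
              rw [hxj, pow_succ]
          _ = x * ((j : ℂ) ^ p * ((j : ℂ) * x ^ (j - 1))) := by ring
    have hxn' : x * ((n : ℂ) * x ^ (n - 1)) = (n : ℂ) * x ^ n := by
      rcases Nat.eq_zero_or_pos n with h0 | h0
      · subst h0; simp
      · have hn1 : n - 1 + 1 = n := Nat.succ_pred_eq_of_pos h0
        calc x * ((n : ℂ) * x ^ (n - 1)) = (n : ℂ) * (x ^ (n - 1) * x) := by ring
          _ = (n : ℂ) * x ^ (n - 1 + 1) := by rw [pow_succ]
          _ = (n : ℂ) * x ^ n := by rw [hn1]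
    have hterm : ∀ k ∈ Finset.range (p + 1), x * deriv (B (p - k)) x = B (p + 1 - k) x := by
      intro k hk
      have hkp : k ≤ p := Nat.lt_succ_iff.mp (Finset.mem_range.mp hk)
      rw [← hBrec (p - k) x hx, Nat.sub_add_comm hkp]
    have hxT : x * (∑ k ∈ Finset.range (p + 1),
          (Nat.choose p k : ℂ) * (n : ℂ) ^ k * deriv (B (p - k)) x)
        = ∑ k ∈ Finset.range (p + 1), (Nat.choose p k : ℂ) * (n : ℂ) ^ k * B (p + 1 - k) x := by
      rw [Finset.mul_sum]
      exact Finset.sum_congr rfl fun k hk => by rw [← hterm k hk]; ring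
    have expand : ∀ A C S D T : ℂ, x * (A - (C * S + D * T)) =
        x * A - ((x * C) * S + D * (x * T)) := by intro A C S D T; ring
    rw [hL, main, expand, ← hBrec p x hx, hxn', hxT, binom_step' (fun k => B k x) (n : ℂ) p]
    ring
end

section
/- For each i = 1,…,k let F_i : ℤ → ℂ be given by F_i(n) = Σ_{m=1}^{d(i)} Σ_{h=0}^{e^{(i)}_m−1} λ^{(i)}_{m,h} n^h (r^{(i)}_m)^n with pairwise distinct nonzero roots r^{(i)}_m and λ^{(i)}_{m,e^{(i)}_m−1} ≠ 0 for all m; set D(i) = Σ_m e^{(i)}_m and Δ(i) = max_m (e^{(i)}_m − 1). Fix integers b_1,…,b_k and c_1,…,c_k. Then there exist complex numbers Λ_{i_1,…,i_k}, indexed by tuples with 0 ≤ i_ν ≤ D(ν)−1, depending only on the roots r^{(i)}_m, the multiplicities e^{(i)}_m, and the integers b_i, c_i (and not on the coefficients λ^{(i)}_{m,h}), such that for every admissible choice of the λ's there exists a polynomial Ψ ∈ ℂ[X] of degree at most 1 + Σ_{i=1}^{k} Δ(i) with Σ_{j=0}^{n−1} Π_{i=1}^{k} F_i(b_i j + c_i)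 = Ψ(n) − Σ_{i_1,…,i_k} Λ_{i_1,…,i_k} Π_{ν=1}^{k} F_ν(b_ν n + i_ν) for all n ≥ 0. Moreover, if no product (r^{(1)}_{m_1})^{b_1} ⋯ (r^{(k)}_{m_k})^{b_k} (over choices 1 ≤ m_i ≤ d(i)) equals 1, then Ψ can be taken to be a constant. -/
open Polynomial Finset

noncomputable section GWaux

/-- The shift operator on two-sided sequences. -/
def Nop : Module.End ℂ (ℤ → ℂ) where
  toFun f := fun n => f (n + 1)
  map_add' _ _ := rfl
  map_smul' _ _ := rfl

/-- The linear recurrence operator associated to a polynomial. -/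
def apOp (q : Polynomial ℂ) : Module.End ℂ (ℤ → ℂ) := aeval Nop q

lemma Nop_pow (j : ℕ) (f : ℤ → ℂ) (n : ℤ) : (Nop ^ j) f n = f (n + j) := by
  induction j generalizing n with
  | zero => simp
  | succ j ih =>
    rw [pow_succ', Module.End.mul_apply]
    show ((Nop ^ j) f) (n + 1) = _
    rw [ih]
    push_cast; ring_nf

lemma apOp_mul (q q' : Polynomial ℂ) (f : ℤ → ℂ) :
    apOp (q * q') f = apOp q (apOp q' f) := by
  unfold apOp; rw [map_mul, Module.End.mul_apply]

lemma apOp_add (q q' : Polynomial ℂ) (f : ℤ → ℂ) :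
    apOp (q + q') f = apOp q f + apOp q' f := by
  unfold apOp; rw [map_add, LinearMap.add_apply]

lemma apOp_C (a : ℂ) (f : ℤ → ℂ) : apOp (C a) f = a • f := by
  unfold apOp; rw [aeval_C]; rfl

lemma apOp_apply (q : Polynomial ℂ) (f : ℤ → ℂ) (n : ℤ) :
    apOp q f n = ∑ j ∈ range (q.natDegree + 1), q.coeff j * f (n + j) := by
  unfold apOp
  rw [aeval_eq_sum_range]
  rw [LinearMap.coe_sum, Finset.sum_apply, Finset.sum_apply]
  exact Finset.sum_congr rfl fun j _ => by
    rw [LinearMap.smul_apply]; simp [Nop_pow, smul_eq_mul]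

lemma apOp_apply_of_lt (q : Polynomial ℂ) (f : ℤ → ℂ) (n : ℤ) {M : ℕ}
    (hM : q.natDegree < M) :
    apOp q f n = ∑ j ∈ range M, q.coeff j * f (n + j) := by
  rw [apOp_apply]
  refine Finset.sum_subset (Finset.range_subset_range.2 hM) fun j _ hj => ?_
  rw [coeff_eq_zero_of_natDegree_lt, zero_mul]
  simpa using Nat.lt_of_succ_le (le_of_not_gt fun h => hj (Finset.mem_range.2 h))

lemma apOp_X_sub_C (ρ : ℂ) (f : ℤ → ℂ) (n : ℤ) :
    apOp (X - C ρ) f n = f (n + 1) - ρ * f n := by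
  unfold apOp
  rw [map_sub, LinearMap.sub_apply]
  simp only [Pi.sub_apply]
  rw [aeval_X, aeval_C]
  rfl

lemma apOp_X_pow (t : ℕ) (f : ℤ → ℂ) : apOp (X ^ t) f = fun x => f (x + t) := by
  funext x
  unfold apOp
  rw [map_pow, aeval_X]
  exact Nop_pow t f x

lemma taylor_diff_natDegree_lt (w : Polynomial ℂ) (hw : taylor 1 w - w ≠ 0) :
    (taylor 1 w - w).natDegree < w.natDegree := by
  have htay : (taylor 1 w).coeff w.natDegree = w.leadingCoeff := by
    have h2 : (w.comp (X + C 1)).leadingCoeff = w.leadingCoeff := by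
      rw [leadingCoeff_comp (by rw [natDegree_X_add_C]; norm_num),
        (monic_X_add_C (1:ℂ)).leadingCoeff, one_pow, mul_one]
    calc (taylor 1 w).coeff w.natDegree
        = (taylor 1 w).coeff (taylor 1 w).natDegree := by rw [natDegree_taylor]
      _ = (taylor 1 w).leadingCoeff := rfl
      _ = w.leadingCoeff := by rw [taylor_apply]; exact h2
  have hc : (taylor 1 w - w).coeff w.natDegree = 0 := by
    rw [coeff_sub, htay, leadingCoeff, sub_self]
  have hle : (taylor 1 w - w).natDegree ≤ w.natDegree := by
    refine (natDegree_sub_le _ _).trans ?_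
    simp [natDegree_taylor]
  refine lt_of_le_of_ne hle fun heq => ?_
  exact (leadingCoeff_ne_zero.2 hw) (by rw [leadingCoeff, heq, hc])

lemma ann (ρ : ℂ) (hρ : ρ ≠ 0) (e : ℕ) (w : Polynomial ℂ) (hw : w.natDegree < e) :
    apOp ((X - C ρ) ^ e) (fun n : ℤ => w.eval (n : ℂ) * ρ ^ n) = 0 := by
  induction e generalizing w with
  | zero => exact absurd hw (Nat.not_lt_zero _)
  | succ e ih =>
    have key : apOp (X - C ρ) (fun n : ℤ => w.eval (n : ℂ) * ρ ^ n)
        = fun n : ℤ => (ρ • (taylor 1 w - w)).eval (n : ℂ) * ρ ^ n := by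
      funext n
      rw [apOp_X_sub_C, zpow_add_one₀ hρ]
      have heval : (taylor 1 w).eval (n : ℂ) = w.eval (((n + 1 : ℤ)) : ℂ) := by
        rw [taylor_eval]; push_cast; ring_nf
      simp only [eval_smul, eval_sub, smul_eq_mul, heval]
      push_cast
      ring
    rw [pow_succ, apOp_mul, key]
    by_cases hz : taylor 1 w - w = 0
    · rw [hz]
      have : (fun n : ℤ => (ρ • (0 : Polynomial ℂ)).eval (n : ℂ) * ρ ^ n) = (0 : ℤ → ℂ) := by
        funext n; simp
      rw [this, map_zero]
    · refine ih _ ?_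
      calc (ρ • (taylor 1 w - w)).natDegree ≤ (taylor 1 w - w).natDegree :=
            natDegree_smul_le _ _
        _ < w.natDegree := taylor_diff_natDegree_lt w hz
        _ ≤ e := Nat.lt_succ_iff.mp hw

lemma ann_dvd_s17 (q : Polynomial ℂ) (ρ : ℂ) (hρ : ρ ≠ 0) (e : ℕ) (w : Polynomial ℂ)
    (hw : w.natDegree < e) (hdvd : (X - C ρ) ^ e ∣ q) :
    apOp q (fun n : ℤ => w.eval (n : ℂ) * ρ ^ n) = 0 := by
  obtain ⟨s, rfl⟩ := hdvd
  rw [mul_comm, apOp_mul, ann ρ hρ e w hw, map_zero]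

lemma apOp_mod (p : Polynomial ℂ) (hp : p.Monic) (F : ℤ → ℂ) (hF : apOp p F = 0)
    (w : Polynomial ℂ) : apOp (w %ₘ p) F = apOp w F := by
  conv_rhs => rw [← modByMonic_add_div w p]
  show _ = apOp (w %ₘ p + p * (w /ₘ p)) F
  unfold apOp
  rw [map_add, LinearMap.add_apply]
  have : (aeval Nop) (p * (w /ₘ p)) F = 0 := by
    rw [mul_comm]
    show apOp ((w /ₘ p) * p) F = 0
    rw [apOp_mul, hF, map_zero]
  rw [this, add_zero]

lemma apOp_Y (p : Polynomial ℂ) (h0 : p.coeff 0 ≠ 0) (hdeg : 1 ≤ p.natDegree)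
    (F : ℤ → ℂ) (hF : apOp p F = 0) :
    apOp ((-(p.coeff 0)⁻¹) • p.divX) F = fun x => F (x - 1) := by
  funext x
  have hdlt : p.divX.natDegree < p.natDegree := by
    rw [natDegree_divX_eq_natDegree_tsub_one]; omega
  have hrec : (0:ℂ) = ∑ j ∈ range (p.natDegree + 1), p.coeff j * F (x - 1 + j) := by
    have h := congrFun hF (x - 1)
    rw [apOp_apply] at h
    simpa using h.symm
  rw [Finset.sum_range_succ'] at hrec
  have happ : apOp ((-(p.coeff 0)⁻¹) • p.divX) F x
      = -(p.coeff 0)⁻¹ * ∑ i ∈ range p.natDegree, p.divX.coeff i * F (x + i) := by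
    unfold apOp
    rw [map_smul, LinearMap.smul_apply]
    show (-(p.coeff 0)⁻¹) • (apOp p.divX F x) = _
    rw [apOp_apply_of_lt _ _ _ hdlt, smul_eq_mul]
  rw [happ]
  have hsum : ∑ i ∈ range p.natDegree, p.divX.coeff i * F (x + i)
      = - (p.coeff 0 * F (x - 1)) := by
    have hterm : ∀ i : ℕ, p.divX.coeff i * F (x + i)
        = p.coeff (i + 1) * F (x - 1 + (↑(i + 1) : ℤ)) := by
      intro i
      rw [coeff_divX]
      congr 2
      push_cast; ring
    rw [Finset.sum_congr rfl fun i _ => hterm i]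
    have h0' : p.coeff 0 * F (x - 1 + (↑(0:ℕ) : ℤ)) = p.coeff 0 * F (x - 1) := by
      norm_num
    rw [h0'] at hrec
    linear_combination -hrec
  rw [hsum]
  field_simp

lemma apOp_Y_pow (p : Polynomial ℂ) (h0 : p.coeff 0 ≠ 0) (hdeg : 1 ≤ p.natDegree)
    (t : ℕ) :
    ∀ F : ℤ → ℂ, apOp p F = 0 →
      apOp (((-(p.coeff 0)⁻¹) • p.divX) ^ t) F = fun x => F (x - t) := by
  induction t with
  | zero => intro F _; funext x; simp [apOp]
  | succ t ih =>
    intro F hF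
    set Y := (-(p.coeff 0)⁻¹) • p.divX with hY
    have hG : apOp Y F = fun x => F (x - 1) := apOp_Y p h0 hdeg F hF
    have hpG : apOp p (apOp Y F) = 0 := by
      rw [← apOp_mul, mul_comm, apOp_mul, hF, map_zero]
    rw [pow_succ, apOp_mul, ih _ hpG]
    funext x
    rw [hG]
    congr 1
    push_cast; ring

lemma shift_exists (p : Polynomial ℂ) (hm : p.Monic) (h0 : p.coeff 0 ≠ 0)
    (hdeg : 1 ≤ p.natDegree) (s : ℤ) :
    ∃ w : Polynomial ℂ, w.natDegree < p.natDegree ∧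
      ∀ F : ℤ → ℂ, apOp p F = 0 → ∀ x : ℤ,
        F (x + s) = ∑ i ∈ range p.natDegree, w.coeff i * F (x + i) := by
  set Y := (-(p.coeff 0)⁻¹) • p.divX with hY
  set wpre := if 0 ≤ s then X ^ s.toNat else Y ^ (-s).toNat with hwpre
  have hdlt : (wpre %ₘ p).natDegree < p.natDegree := by
    by_cases hz : wpre %ₘ p = 0
    · rw [hz, natDegree_zero]; omega
    · exact natDegree_lt_natDegree hz (degree_modByMonic_lt wpre hm)
  refine ⟨wpre %ₘ p, hdlt, fun F hF x => ?_⟩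
  have hmain : apOp wpre F x = F (x + s) := by
    by_cases hs : 0 ≤ s
    · rw [hwpre, if_pos hs, apOp_X_pow]
      show F (x + (s.toNat : ℤ)) = F (x + s)
      congr 1
      omega
    · rw [hwpre, if_neg hs, apOp_Y_pow p h0 hdeg _ F hF]
      show F (x - ((-s).toNat : ℤ)) = F (x + s)
      congr 1
      omega
  rw [← hmain, ← apOp_mod p hm F hF wpre, apOp_apply_of_lt _ _ _ hdlt]

lemma diff_surj (ψ : Polynomial ℂ) :
    ∃ Φ : Polynomial ℂ, Φ.comp (X + 1) - Φ = ψ ∧ (ψ = 0 → Φ = 0) ∧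
      Φ.natDegree ≤ ψ.natDegree + 1 := by
  by_cases h0 : ψ = 0
  · exact ⟨0, by simp [h0], fun _ => rfl, by simp⟩
  obtain ⟨n, hn⟩ : ∃ n, ψ.natDegree ≤ n := ⟨ψ.natDegree, le_rfl⟩
  induction n generalizing ψ with
  | zero =>
    have hc : ψ = C (ψ.coeff 0) := eq_C_of_natDegree_le_zero hn
    refine ⟨C (ψ.coeff 0) * X, ?_, fun h => absurd h h0, ?_⟩
    · rw [mul_comp, C_comp, X_comp]
      ring_nf
      exact hc.symm
    · calc (C (ψ.coeff 0) * X).natDegree ≤ 1 := natDegree_C_mul_le _ _ |>.trans (by simp)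
        _ ≤ ψ.natDegree + 1 := by omega
  | succ n ih =>
    by_cases hd : ψ.natDegree ≤ n
    · exact ih ψ h0 hd
    · have hd' : ψ.natDegree = n + 1 := le_antisymm hn (not_le.1 hd)
      set d := n + 1 with hdd
      set a := ψ.leadingCoeff with ha
      have hdne : ((d : ℂ) + 1) ≠ 0 := Nat.cast_add_one_ne_zero d
      set B : Polynomial ℂ := (X + 1) ^ (d + 1) - X ^ (d + 1) with hB
      set Φ₀ : Polynomial ℂ := C (a / (d + 1)) * X ^ (d + 1) with hΦ₀
      have hcomp₀ : Φ₀.comp (X + 1) - Φ₀ = C (a / (d + 1)) * B := by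
        rw [hΦ₀, hB, mul_comp, C_comp, pow_comp, X_comp]
        ring
      have hBd : B.coeff d = (d : ℂ) + 1 := by
        rw [hB, coeff_sub, coeff_X_add_one_pow, coeff_X_pow]
        rw [Nat.choose_succ_self_right]
        simp
      have hBdeg : B.natDegree ≤ d := by
        rw [natDegree_le_iff_coeff_eq_zero]
        intro m hm
        rw [hB, coeff_sub, coeff_X_add_one_pow, coeff_X_pow]
        rcases eq_or_ne m (d + 1) with h | h
        · subst h; simp
        · rw [Nat.choose_eq_zero_of_lt (by omega), if_neg (show ¬ (m = d + 1) by omega)]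
          simp
      set ψ' := ψ - C (a / (d + 1)) * B with hψ'
      have hc : ψ'.coeff d = 0 := by
        rw [hψ', coeff_sub, coeff_C_mul, hBd]
        have : ψ.coeff d = a := by rw [ha, leadingCoeff, hd']
        rw [this, div_mul_cancel₀ _ hdne, sub_self]
      have hψ'deg : ψ'.natDegree ≤ d := by
        refine (natDegree_sub_le _ _).trans (max_le (by omega) ?_)
        exact (natDegree_C_mul_le _ _).trans hBdeg
      have hψ'n : ψ'.natDegree ≤ n := by
        rcases eq_or_ne ψ' 0 with h | h
        · simp [h]
        · have : ψ'.natDegree ≠ d := fun heq =>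
            (leadingCoeff_ne_zero.2 h) (by rw [leadingCoeff, heq, hc])
          omega
      rcases eq_or_ne ψ' 0 with hz | hz
      · refine ⟨Φ₀, ?_, fun h => absurd h h0, ?_⟩
        · have : ψ = C (a / (d + 1)) * B := by
            have h6 := hz
            rw [hψ', sub_eq_zero] at h6
            exact h6
          rw [hcomp₀, ← this]
        · rw [hΦ₀]
          calc (C (a / ((d:ℂ) + 1)) * X ^ (d + 1)).natDegree
              ≤ (X ^ (d+1) : Polynomial ℂ).natDegree := natDegree_C_mul_le _ _
            _ ≤ d + 1 := by simp
            _ = ψ.natDegree + 1 := by omega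
      · obtain ⟨Φ₁, hΦ₁e, _, hΦ₁d⟩ := ih ψ' hz hψ'n
        refine ⟨Φ₀ + Φ₁, ?_, fun h => absurd h h0, ?_⟩
        · rw [add_comp]
          have : ψ = C (a / (d + 1)) * B + ψ' := by rw [hψ']; ring
          rw [this, ← hcomp₀, ← hΦ₁e]
          ring
        · refine (natDegree_add_le _ _).trans (max_le ?_ ?_)
          · calc Φ₀.natDegree ≤ (X ^ (d+1) : Polynomial ℂ).natDegree := natDegree_C_mul_le _ _
              _ ≤ d + 1 := by simp
              _ = ψ.natDegree + 1 := by omega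
          · exact hΦ₁d.trans (by omega)

lemma poly_of_diff (m : ℕ) (G : ℤ → ℂ) (h : apOp ((X - C 1) ^ m) G = 0) :
    ∃ Ψ : Polynomial ℂ, (Ψ = 0 ∨ Ψ.natDegree + 1 ≤ m) ∧
      ∀ x : ℤ, G x = Ψ.eval (x : ℂ) := by
  induction m generalizing G with
  | zero =>
    refine ⟨0, Or.inl rfl, fun x => ?_⟩
    have : apOp 1 G = G := by unfold apOp; rw [map_one]; rfl
    rw [pow_zero] at h
    rw [← this, h]
    simp
  | succ m ih =>
    have hH : apOp ((X - C 1) ^ m) (apOp (X - C 1) G) = 0 := by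
      rw [← apOp_mul, ← pow_succ]
      exact h
    obtain ⟨ψ, hψb, hψ⟩ := ih _ hH
    obtain ⟨Φ, hΦe, hΦ0, hΦd⟩ := diff_surj ψ
    refine ⟨Φ + C (G 0 - Φ.eval 0), ?_, ?_⟩
    · rcases hψb with h0 | hb
      · rcases eq_or_ne (Φ + C (G 0 - Φ.eval 0)) 0 with hh | hh
        · exact Or.inl hh
        · right
          have : Φ = 0 := hΦ0 h0
          rw [this, zero_add]
          simp [natDegree_C]
      · right
        have : (Φ + C (G 0 - Φ.eval 0)).natDegree ≤ Φ.natDegree :=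
          (natDegree_add_le _ _).trans (by simp)
        omega
    · have hdiff : ∀ x : ℤ, G (x + 1) - G x = ψ.eval (x : ℂ) := by
        intro x
        have h2 := apOp_X_sub_C 1 G x
        rw [hψ x] at h2
        linear_combination -h2
      have step : ∀ x : ℤ, G (x + 1) - Φ.eval ((x : ℂ) + 1) = G x - Φ.eval (x : ℂ) := by
        intro x
        have h3 : ψ.eval (x : ℂ) = Φ.eval ((x : ℂ) + 1) - Φ.eval (x : ℂ) := by
          rw [← hΦe]
          simp [eval_comp]
        have h4 := hdiff x
        rw [h3] at h4
        linear_combination h4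
      have hE : ∀ x : ℤ, G x - Φ.eval (x : ℂ) = G 0 - Φ.eval 0 := by
        intro x
        induction x using Int.induction_on with
        | zero => norm_num
        | succ k ihc =>
          have h5 := step k
          push_cast at h5 ⊢
          linear_combination h5 + ihc
        | pred k ihc =>
          have h5 := step (-(k : ℤ) - 1)
          have harg : (-(k : ℤ) - 1 + 1) = -(k : ℤ) := by ring
          rw [harg] at h5
          push_cast at h5 ihc ⊢
          have harg2 : (-(k:ℂ) - 1 + 1) = -(k:ℂ) := by ring
          rw [harg2] at h5
          linear_combination ihc - h5
      intro x
      have h7 := hE x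
      rw [eval_add, eval_C]
      linear_combination h7

lemma ann_F (dd : ℕ) (r : Fin dd → ℂ) (e : Fin dd → ℕ) (hr0 : ∀ m, r m ≠ 0)
    (lam : Fin dd → ℕ → ℂ) (F : ℤ → ℂ)
    (hF : ∀ n : ℤ, F n = ∑ m : Fin dd, ∑ h ∈ Finset.range (e m),
      lam m h * (n : ℂ) ^ h * r m ^ n) :
    apOp (∏ m, (X - C (r m)) ^ (e m)) F = 0 := by
  have hFfun : F = ∑ m : Fin dd, ∑ h ∈ Finset.range (e m),
      (fun x : ℤ => (C (lam m h) * X ^ h).eval (x : ℂ) * (r m) ^ x) := by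
    funext x
    rw [hF x]
    rw [Finset.sum_apply]
    refine Finset.sum_congr rfl fun m _ => ?_
    rw [Finset.sum_apply]
    refine Finset.sum_congr rfl fun h _ => ?_
    rw [eval_mul, eval_C, eval_pow, eval_X]
  rw [hFfun, map_sum]
  refine Finset.sum_eq_zero fun m _ => ?_
  rw [map_sum]
  refine Finset.sum_eq_zero fun h hh => ?_
  refine ann_dvd_s17 _ (r m) (hr0 m) (e m) _ ?_ (Finset.dvd_prod_of_mem _ (mem_univ m))
  calc (C (lam m h) * X ^ h).natDegree ≤ (X ^ h : Polynomial ℂ).natDegree :=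
      natDegree_C_mul_le _ _
    _ = h := natDegree_X_pow h
    _ < e m := Finset.mem_range.mp hh

lemma F_shift_decomp (dd : ℕ) (r : Fin dd → ℂ) (e : Fin dd → ℕ) (hr0 : ∀ m, r m ≠ 0)
    (lam : Fin dd → ℕ → ℂ) (F : ℤ → ℂ)
    (hF : ∀ n : ℤ, F n = ∑ m : Fin dd, ∑ h ∈ Finset.range (e m),
      lam m h * (n : ℂ) ^ h * r m ^ n) (β γ : ℤ) :
    ∃ W : Fin dd → Polynomial ℂ, (∀ m, (W m).natDegree ≤ e m - 1) ∧
      ∀ x : ℤ, F (β * x + γ) = ∑ m, (W m).eval (x : ℂ) * ((r m) ^ β) ^ x := by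
  refine ⟨fun m => (∑ h ∈ Finset.range (e m),
      C (lam m h) * (C (β : ℂ) * X + C ((γ : ℤ) : ℂ)) ^ h) * C ((r m) ^ γ),
    fun m => ?_, fun x => ?_⟩
  · refine (natDegree_mul_le).trans ?_
    rw [natDegree_C, add_zero]
    refine natDegree_sum_le_of_forall_le _ _ fun h hh => ?_
    calc (C (lam m h) * (C (β : ℂ) * X + C ((γ : ℤ) : ℂ)) ^ h).natDegree
        ≤ ((C (β : ℂ) * X + C ((γ : ℤ) : ℂ)) ^ h).natDegree := natDegree_C_mul_le _ _
      _ ≤ h * (C (β : ℂ) * X + C ((γ : ℤ) : ℂ)).natDegree := natDegree_pow_le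
      _ ≤ h * 1 := Nat.mul_le_mul_left _ (natDegree_linear_le)
      _ ≤ e m - 1 := by
          have := Finset.mem_range.mp hh; omega
  · rw [hF]
    refine Finset.sum_congr rfl fun m _ => ?_
    have hzp : (r m) ^ (β * x + γ) = ((r m) ^ β) ^ x * (r m) ^ γ := by
      rw [zpow_add₀ (hr0 m), zpow_mul]
    rw [eval_mul, eval_C, eval_finset_sum]
    rw [Finset.sum_mul, Finset.sum_mul]
    refine Finset.sum_congr rfl fun h _ => ?_
    rw [hzp]
    simp only [eval_mul, eval_C, eval_pow, eval_add, eval_X]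
    push_cast
    ring

end GWaux

/-- **Theorem 8.4** (bigcor) of Greene–Wilf: indefinite sums of products of
C-finite sequences admit closed forms whose monomial coefficients `Λ` are
independent of the initial conditions of the `F_i`; the dependence on initial
conditions appears only in the polynomial term `Ψ(n)`, which can be taken to
be constant when no product of the roots `∏ (r_{m_i}^{(i)})^{b_i}` equals 1. -/
theorem indefinite_sum_independence
    (k : ℕ) (hk : 1 ≤ k)
    (d : Fin k → ℕ) (hd : ∀ i, 1 ≤ d i)
    (r : (i : Fin k) → Fin (d i) → ℂ) (e : (i : Fin k) → Fin (d i) → ℕ)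
    (hr_inj : ∀ i, Function.Injective (r i)) (hr0 : ∀ i m, r i m ≠ 0)
    (he : ∀ i m, 1 ≤ e i m)
    (D : Fin k → ℕ) (hD : ∀ i, D i = ∑ m, e i m)
    (Δ : Fin k → ℕ) (hΔ : ∀ i, Δ i = Finset.univ.sup (fun m => e i m - 1))
    (b c : Fin k → ℤ) :
    ∃ Λ : ((ν : Fin k) → Fin (D ν)) → ℂ,
      (∀ (lam : (i : Fin k) → Fin (d i) → ℕ → ℂ),
        (∀ i m, lam i m (e i m - 1) ≠ 0) →
        ∀ F : Fin k → ℤ → ℂ,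
        (∀ i, ∀ n : ℤ, F i n = ∑ m : Fin (d i), ∑ h ∈ Finset.range (e i m),
          lam i m h * (n : ℂ) ^ h * r i m ^ n) →
        ∃ Ψ : Polynomial ℂ, Ψ.natDegree ≤ 1 + ∑ i, Δ i ∧
          ∀ n : ℕ,
            ∑ j ∈ Finset.range n, ∏ i : Fin k, F i (b i * j + c i)
              = Ψ.eval (n : ℂ) -
                ∑ idx : (ν : Fin k) → Fin (D ν), Λ idx *
                  ∏ ν : Fin k, F ν (b ν * n + (idx ν : ℤ))) ∧
      ((∀ g : (i : Fin k) → Fin (d i), ∏ i, r i (g i) ^ (b i) ≠ 1) →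
        ∀ (lam : (i : Fin k) → Fin (d i) → ℕ → ℂ),
        (∀ i m, lam i m (e i m - 1) ≠ 0) →
        ∀ F : Fin k → ℤ → ℂ,
        (∀ i, ∀ n : ℤ, F i n = ∑ m : Fin (d i), ∑ h ∈ Finset.range (e i m),
          lam i m h * (n : ℂ) ^ h * r i m ^ n) →
        ∃ K : ℂ,
          ∀ n : ℕ,
            ∑ j ∈ Finset.range n, ∏ i : Fin k, F i (b i * j + c i)
              = K - ∑ idx : (ν : Fin k) → Fin (D ν), Λ idx *
                  ∏ ν : Fin k, F ν (b ν * n + (idx ν : ℤ))) := by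
  classical
  -- products of powered roots and their multiplicities
  set ρ : ((ν : Fin k) → Fin (d ν)) → ℂ := fun g => ∏ ν, r ν (g ν) ^ (b ν) with hρdef
  have hρ0 : ∀ g, ρ g ≠ 0 := fun g =>
    Finset.prod_ne_zero_iff.mpr fun ν _ => zpow_ne_zero _ (hr0 ν (g ν))
  set μ : ((ν : Fin k) → Fin (d ν)) → ℕ := fun g => 1 + ∑ ν, (e ν (g ν) - 1) with hμdef
  set qt : Polynomial ℂ := ∏ g : ((ν : Fin k) → Fin (d ν)),
    if ρ g = 1 then 1 else (X - C (ρ g)) ^ (μ g) with hqtdef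
  have hkk : qt.eval 1 ≠ 0 := by
    rw [hqtdef, eval_prod]
    refine Finset.prod_ne_zero_iff.mpr fun g _ => ?_
    split_ifs with h
    · simp
    · rw [eval_pow, eval_sub, eval_X, eval_C]
      exact pow_ne_zero _ (sub_ne_zero.mpr fun hh => h hh.symm)
  set kk := qt.eval 1 with hkkdef
  obtain ⟨u, hu⟩ : ∃ u, qt - C kk = (X - C 1) * u := X_sub_C_dvd_sub_C_eval
  -- the characteristic polynomials of the individual sequences
  set p : (ν : Fin k) → Polynomial ℂ := fun ν => ∏ m, (X - C (r ν m)) ^ (e ν m) with hpdef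
  have hpmon : ∀ ν, (p ν).Monic := fun ν =>
    monic_prod_of_monic _ _ fun m _ => (monic_X_sub_C _).pow _
  have hpdeg : ∀ ν, (p ν).natDegree = D ν := by
    intro ν
    rw [hpdef]
    rw [natDegree_prod _ _ (fun m _ => ((monic_X_sub_C (r ν m)).pow _).ne_zero), hD]
    exact Finset.sum_congr rfl fun m _ => by
      rw [natDegree_pow, natDegree_X_sub_C, mul_one]
  have hDpos : ∀ ν, 1 ≤ D ν := by
    intro ν; rw [hD]
    have : (0:ℕ) < ∑ m, e ν m :=
      Finset.sum_pos (fun m _ => he ν m) ⟨⟨0, hd ν⟩, Finset.mem_univ _⟩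
    omega
  have hp0 : ∀ ν, (p ν).coeff 0 ≠ 0 := by
    intro ν
    rw [coeff_zero_eq_eval_zero, hpdef, eval_prod]
    refine Finset.prod_ne_zero_iff.mpr fun m _ => ?_
    rw [eval_pow, eval_sub, eval_X, eval_C]
    exact pow_ne_zero _ (by simpa using (hr0 ν m))
  -- the shift-reduction polynomials (independent of lam)
  choose w hwdeg hwspec using fun (ν : Fin k) (s : ℤ) =>
    shift_exists (p ν) (hpmon ν) (hp0 ν) (by rw [hpdeg]; exact hDpos ν) s
  -- the common core
  have core : ∀ (lam : (i : Fin k) → Fin (d i) → ℕ → ℂ) (F : Fin k → ℤ → ℂ),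
      (∀ i, ∀ n : ℤ, F i n = ∑ m : Fin (d i), ∑ h ∈ Finset.range (e i m),
        lam i m h * (n : ℂ) ^ h * r i m ^ n) →
      ∃ S : ℤ → ℂ,
        (∀ n : ℕ, (∑ j ∈ Finset.range n, ∏ i : Fin k, F i (b i * (j:ℤ) + c i)) = S n) ∧
        (∀ x : ℤ, kk * S x = apOp qt S x -
          ∑ idx : (ν : Fin k) → Fin (D ν),
            (∑ t ∈ Finset.range (u.natDegree + 1), u.coeff t *
              ∏ ν, (w ν (b ν * t + c ν)).coeff (idx ν)) *
              ∏ ν, F ν (b ν * x + (idx ν : ℤ))) ∧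
        (apOp ((X - C 1) ^ (2 + ∑ i, Δ i)) (apOp qt S) = 0) ∧
        ((∀ g : (i : Fin k) → Fin (d i), ρ g ≠ 1) →
          ∀ x : ℤ, apOp qt S (x + 1) = apOp qt S x) := by
    intro lam F hF
    have hannF : ∀ ν, apOp (p ν) (F ν) = 0 := by
      intro ν
      rw [hpdef]
      exact ann_F (d ν) (r ν) (e ν) (hr0 ν) (lam ν) (F ν) (hF ν)
    set P : ℤ → ℂ := fun x => ∏ ν, F ν (b ν * x + c ν) with hPdef
    choose W hWdeg hWval using fun ν =>
      F_shift_decomp (d ν) (r ν) (e ν) (hr0 ν) (lam ν) (F ν) (hF ν) (b ν) (c ν)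
    have hPd : ∀ x : ℤ, P x = ∑ g : (ν : Fin k) → Fin (d ν),
        (∏ ν, W ν (g ν)).eval (x:ℂ) * ρ g ^ x := by
      intro x
      show ∏ ν, F ν (b ν * x + c ν) = _
      calc ∏ ν, F ν (b ν * x + c ν)
          = ∏ ν, ∑ m, (W ν m).eval (x:ℂ) * ((r ν m) ^ (b ν)) ^ x :=
            Finset.prod_congr rfl fun ν _ => hWval ν x
        _ = ∑ g ∈ Fintype.piFinset (fun ν => (univ : Finset (Fin (d ν)))),
              ∏ ν, ((W ν (g ν)).eval (x:ℂ) * ((r ν (g ν)) ^ (b ν)) ^ x) :=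
            Finset.prod_univ_sum _ _
        _ = ∑ g : (ν : Fin k) → Fin (d ν), (∏ ν, W ν (g ν)).eval (x:ℂ) * ρ g ^ x := by
            rw [Fintype.piFinset_univ]
            refine Finset.sum_congr rfl fun g _ => ?_
            rw [Finset.prod_mul_distrib, eval_prod, Finset.prod_zpow]
    have hWg : ∀ g : (ν : Fin k) → Fin (d ν),
        (∏ ν, W ν (g ν)).natDegree ≤ ∑ ν, (e ν (g ν) - 1) :=
      fun g => (natDegree_prod_le _ _).trans
        (Finset.sum_le_sum fun ν _ => hWdeg ν (g ν))
    have hPfun : P = ∑ g : (ν : Fin k) → Fin (d ν),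
        (fun x : ℤ => (∏ ν, W ν (g ν)).eval (x:ℂ) * ρ g ^ x) := by
      funext x
      rw [hPd x, Finset.sum_apply]
    have hannP1 : apOp ((X - C 1) ^ (1 + ∑ i, Δ i) * qt) P = 0 := by
      rw [hPfun, map_sum]
      refine Finset.sum_eq_zero fun g _ => ?_
      by_cases h1 : ρ g = 1
      · rw [h1]
        refine ann_dvd_s17 _ 1 one_ne_zero (1 + ∑ i, Δ i) _ ?_ (dvd_mul_right _ _)
        have hb : (∏ ν, W ν (g ν)).natDegree ≤ ∑ i, Δ i :=
          (hWg g).trans (Finset.sum_le_sum fun ν _ => by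
            rw [hΔ]; exact Finset.le_sup (f := fun m => e ν m - 1) (Finset.mem_univ (g ν)))
        omega
      · refine ann_dvd_s17 _ (ρ g) (hρ0 g) (μ g) _ ?_ ?_
        · have := hWg g
          show _ < 1 + ∑ ν, (e ν (g ν) - 1)
          omega
        · refine Dvd.dvd.mul_left ?_ _
          rw [hqtdef]
          have hfac : (X - C (ρ g)) ^ (μ g)
              = if ρ g = 1 then 1 else (X - C (ρ g)) ^ (μ g) := (if_neg h1).symm
          rw [hfac]
          exact Finset.dvd_prod_of_mem _ (Finset.mem_univ g)
    have hannP2 : (∀ g : (ν : Fin k) → Fin (d ν), ρ g ≠ 1) → apOp qt P = 0 := by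
      intro hno
      rw [hPfun, map_sum]
      refine Finset.sum_eq_zero fun g _ => ?_
      refine ann_dvd_s17 _ (ρ g) (hρ0 g) (μ g) _ ?_ ?_
      · have := hWg g
        show _ < 1 + ∑ ν, (e ν (g ν) - 1)
        omega
      · rw [hqtdef]
        have hfac : (X - C (ρ g)) ^ (μ g)
            = if ρ g = 1 then 1 else (X - C (ρ g)) ^ (μ g) := (if_neg (hno g)).symm
        rw [hfac]
        exact Finset.dvd_prod_of_mem _ (Finset.mem_univ g)
    -- the two-sided summation sequence
    set S : ℤ → ℂ := fun x => (∑ j ∈ Finset.range x.toNat, P j)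
        - ∑ j ∈ Finset.range (-x).toNat, P (x + j) with hSdef
    have hSrec : ∀ x : ℤ, S (x + 1) = S x + P x := by
      intro x
      rcases le_or_gt 0 x with hx | hx
      · have h1 : (x+1).toNat = x.toNat + 1 := by omega
        have h2 : (-(x+1)).toNat = 0 := by omega
        have h3 : (-x).toNat = 0 := by omega
        show (∑ j ∈ Finset.range (x+1).toNat, P j) - ∑ j ∈ Finset.range (-(x+1)).toNat, P ((x+1) + j)
          = ((∑ j ∈ Finset.range x.toNat, P j) - ∑ j ∈ Finset.range (-x).toNat, P (x + j)) + P x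
        rw [h1, h2, h3, Finset.sum_range_succ]
        rw [Int.toNat_of_nonneg hx]
        simp
      · have h1 : (x+1).toNat = 0 := by omega
        have h3 : x.toNat = 0 := by omega
        have h4 : (-x).toNat = (-(x+1)).toNat + 1 := by omega
        show (∑ j ∈ Finset.range (x+1).toNat, P j) - ∑ j ∈ Finset.range (-(x+1)).toNat, P ((x+1) + j)
          = ((∑ j ∈ Finset.range x.toNat, P j) - ∑ j ∈ Finset.range (-x).toNat, P (x + j)) + P x
        rw [h1, h3, h4, Finset.sum_range_succ']
        have h5 : ∀ j : ℕ, P (x + (↑(j+1) : ℤ)) = P ((x + 1) + j) := fun j => by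
          congr 1; push_cast; ring
        rw [Finset.sum_congr rfl fun j _ => h5 j]
        have h6 : P (x + (↑(0:ℕ) : ℤ)) = P x := by norm_num
        rw [h6]
        simp only [Finset.range_zero, Finset.sum_empty]
        ring
    have hSnat : ∀ n : ℕ, S (n : ℤ) = ∑ j ∈ Finset.range n, P (j : ℤ) := by
      intro n
      show (∑ j ∈ Finset.range ((n:ℤ)).toNat, P j) - ∑ j ∈ Finset.range (-(n:ℤ)).toNat, P ((n:ℤ) + j) = _
      have h1 : ((n:ℤ)).toNat = n := by omega
      have h2 : (-(n:ℤ)).toNat = 0 := by omega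
      rw [h1, h2]
      simp
    have hNsub : apOp (X - C 1) S = P := by
      funext x
      rw [apOp_X_sub_C, hSrec x]
      ring
    have hC3 : apOp ((X - C 1) ^ (2 + ∑ i, Δ i)) (apOp qt S) = 0 := by
      rw [← apOp_mul]
      have hfac : (X - C 1) ^ (2 + ∑ i, Δ i) * qt
          = ((X - C 1) ^ (1 + ∑ i, Δ i) * qt) * (X - C 1) := by
        rw [show 2 + ∑ i, Δ i = (1 + ∑ i, Δ i) + 1 by ring, pow_succ]
        ring
      rw [hfac, apOp_mul, hNsub, hannP1]
    have hqtS : ∀ x : ℤ, apOp qt S x = kk * S x + apOp u P x := by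
      have hqt : qt = C kk + (X - C 1) * u := by rw [← hu]; ring
      intro x
      conv_lhs => rw [hqt]
      rw [apOp_add]
      have h1 : apOp (C kk) S = kk • S := apOp_C kk S
      have h2 : apOp ((X - C 1) * u) S = apOp u P := by
        rw [mul_comm, apOp_mul, hNsub]
      rw [Pi.add_apply, h1, h2]
      rfl
    have hupP : ∀ x : ℤ, apOp u P x =
        ∑ idx : (ν : Fin k) → Fin (D ν),
          (∑ t ∈ Finset.range (u.natDegree + 1), u.coeff t *
            ∏ ν, (w ν (b ν * t + c ν)).coeff (idx ν)) *
            ∏ ν, F ν (b ν * x + (idx ν : ℤ)) := by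
      intro x
      rw [apOp_apply]
      have hPt : ∀ t : ℕ, P (x + t) = ∑ idx : (ν : Fin k) → Fin (D ν),
          (∏ ν, (w ν (b ν * t + c ν)).coeff (idx ν)) *
            ∏ ν, F ν (b ν * x + (idx ν : ℤ)) := by
        intro t
        have h1 : P (x + t) = ∏ ν, F ν (b ν * x + (b ν * t + c ν)) := by
          show ∏ ν, F ν (b ν * (x + t) + c ν) = _
          exact Finset.prod_congr rfl fun ν _ => by congr 1; ring
        rw [h1]
        have h2 : ∀ ν : Fin k, F ν (b ν * x + (b ν * t + c ν))
            = ∑ i : Fin (D ν), (w ν (b ν * t + c ν)).coeff i * F ν (b ν * x + (i:ℤ)) := by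
          intro ν
          have h3 := hwspec ν (b ν * t + c ν) (F ν) (hannF ν) (b ν * x)
          rw [h3, hpdeg ν, ← Finset.sum_range fun i =>
            (w ν (b ν * t + c ν)).coeff i * F ν (b ν * x + (i:ℤ))]
        calc ∏ ν, F ν (b ν * x + (b ν * t + c ν))
            = ∏ ν, ∑ i : Fin (D ν),
                (w ν (b ν * t + c ν)).coeff i * F ν (b ν * x + (i:ℤ)) :=
              Finset.prod_congr rfl fun ν _ => h2 ν
          _ = ∑ idx ∈ Fintype.piFinset (fun ν => (univ : Finset (Fin (D ν)))),
                ∏ ν, ((w ν (b ν * t + c ν)).coeff (idx ν) * F ν (b ν * x + ((idx ν):ℤ))) :=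
              Finset.prod_univ_sum _ _
          _ = ∑ idx : (ν : Fin k) → Fin (D ν),
                (∏ ν, (w ν (b ν * t + c ν)).coeff (idx ν)) *
                  ∏ ν, F ν (b ν * x + ((idx ν):ℤ)) := by
              rw [Fintype.piFinset_univ]
              exact Finset.sum_congr rfl fun idx _ => Finset.prod_mul_distrib
      rw [Finset.sum_congr rfl fun t _ => by rw [hPt t]]
      rw [Finset.sum_congr rfl fun t (_ : t ∈ Finset.range (u.natDegree + 1)) =>
        Finset.mul_sum _ _ (u.coeff t)]
      rw [Finset.sum_comm]
      refine Finset.sum_congr rfl fun idx _ => ?_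
      rw [Finset.sum_mul]
      exact Finset.sum_congr rfl fun t _ => by ring
    refine ⟨S, fun n => ?_, fun x => ?_, hC3, fun hno x => ?_⟩
    · rw [hSnat n]
    · rw [hqtS x, hupP x]
      ring
    · have h0 : apOp (X - C 1) (apOp qt S) = 0 := by
        rw [← apOp_mul, show (X - C 1) * qt = qt * (X - C 1) from mul_comm _ _,
          apOp_mul, hNsub, hannP2 hno]
      have h1 := congrFun h0 x
      rw [apOp_X_sub_C] at h1
      have h2 : (0 : ℤ → ℂ) x = 0 := rfl
      rw [h2] at h1
      linear_combination h1
  -- the coefficients Λ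
  refine ⟨fun idx => kk⁻¹ * ∑ t ∈ Finset.range (u.natDegree + 1), u.coeff t *
      ∏ ν, (w ν (b ν * t + c ν)).coeff (idx ν), ?_, ?_⟩
  · -- part 1
    intro lam _ F hF
    obtain ⟨S, hS1, hS2, hS3, _⟩ := core lam F hF
    obtain ⟨Ψ₀, hΨ₀b, hΨ₀⟩ := poly_of_diff (2 + ∑ i, Δ i) (apOp qt S) hS3
    refine ⟨kk⁻¹ • Ψ₀, ?_, ?_⟩
    · refine (natDegree_smul_le _ _).trans ?_
      rcases hΨ₀b with h | h
      · simp [h]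
      · omega
    · intro n
      rw [hS1 n]
      have h2 := hS2 (n : ℤ)
      rw [hΨ₀ (n : ℤ)] at h2
      have h3 : S (n : ℤ) = kk⁻¹ * Ψ₀.eval ((n:ℤ) : ℂ) - kk⁻¹ *
          ∑ idx : (ν : Fin k) → Fin (D ν),
            (∑ t ∈ Finset.range (u.natDegree + 1), u.coeff t *
              ∏ ν, (w ν (b ν * t + c ν)).coeff (idx ν)) *
              ∏ ν, F ν (b ν * (n:ℤ) + (idx ν : ℤ)) := by
        field_simp
        linear_combination h2
      rw [h3, eval_smul, smul_eq_mul, Finset.mul_sum]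
      push_cast
      refine congrArg₂ (· - ·) rfl (Finset.sum_congr rfl fun idx _ => by ring)
  · -- part 2
    intro hno lam _ F hF
    obtain ⟨S, hS1, hS2, _, hS4⟩ := core lam F hF
    have hno' : ∀ g : (ν : Fin k) → Fin (d ν), ρ g ≠ 1 := fun g => hno g
    have hGconst : ∀ n : ℕ, apOp qt S (n : ℤ) = apOp qt S 0 := by
      intro n
      induction n with
      | zero => norm_num
      | succ m ih =>
        have := hS4 hno' (m : ℤ)
        rw [← ih]
        push_cast
        rw [← this]
    refine ⟨kk⁻¹ * apOp qt S 0, fun n => ?_⟩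
    rw [hS1 n]
    have h2 := hS2 (n : ℤ)
    rw [hGconst n] at h2
    have h3 : S (n : ℤ) = kk⁻¹ * apOp qt S 0 - kk⁻¹ *
        ∑ idx : (ν : Fin k) → Fin (D ν),
          (∑ t ∈ Finset.range (u.natDegree + 1), u.coeff t *
            ∏ ν, (w ν (b ν * t + c ν)).coeff (idx ν)) *
            ∏ ν, F ν (b ν * (n:ℤ) + (idx ν : ℤ)) := by
      field_simp
      linear_combination h2
    rw [h3, Finset.mul_sum]
    refine congrArg₂ (· - ·) rfl (Finset.sum_congr rfl fun idx _ => by ring)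
end
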